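/- arXiv:1309.0435 — 4 statements merged into one kernel-verified Lean document; each statement's English description precedes it below -/
import Mathlib

section
/- Let G be a simple graph and let K be a smallest induced pyramid or prism in G (i.e., no induced pyramid or prism of G has strictly fewer vertices). Suppose K is a prism formed by chordless paths P1, P2, P3, with triangles {a1,a2,a3} and {b1,b2,b3}, where Pi joins ai to bi (i=1,2,3). If R1 is any shortest path of G from a1 to b1 whose interior vertices are not adjacent to b2 or b3, then R1, P2, P3 form an induced prism of G with exactly |V(K)| vertices, with triangles {a1,a2,a3} and {b1,b2,b3}. -/
open SimpleGraph

/-- A walk is a *chordless (induced) path*: it is a path and the only edges of `G`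
between its vertices are the edges of the walk. -/
def IsInducedPathW {V : Type*} (G : SimpleGraph V) {u v : V} (p : G.Walk u v) : Prop :=
  p.IsPath ∧ ∀ x y : V, x ∈ p.support → y ∈ p.support → G.Adj x y → p.toSubgraph.Adj x y

/-- A closed walk is a *hole*: an induced (chordless) cycle with at least 4 vertices. -/
def IsHoleW {V : Type*} (G : SimpleGraph V) {v : V} (c : G.Walk v v) : Prop :=
  c.IsCycle ∧ 4 ≤ c.length ∧
    ∀ x y : V, x ∈ c.support → y ∈ c.support → G.Adj x y → c.toSubgraph.Adj x y

/-- `G` contains an odd hole. -/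
def HasOddHole {V : Type*} (G : SimpleGraph V) : Prop :=
  ∃ (v : V) (c : G.Walk v v), IsHoleW G c ∧ Odd c.length

/-- Compatibility condition for two legs of a pyramid with apex `a`:
they meet only at `a`, and `bᵢbⱼ` is the only edge between them away from `a`. -/
def PyrPair {V : Type*} (G : SimpleGraph V) (a bi bj : V)
    (Pi : G.Walk a bi) (Pj : G.Walk a bj) : Prop :=
  (∀ x : V, x ∈ Pi.support → x ∈ Pj.support → x = a) ∧
  (∀ x ∈ Pi.support, ∀ y ∈ Pj.support, x ≠ a → y ≠ a → G.Adj x y → x = bi ∧ y = bj)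

/-- The three paths `P₁, P₂, P₃` form a *pyramid* of `G` with triangle `{b₁,b₂,b₃}`
and apex `a`. -/
def IsPyramid {V : Type*} (G : SimpleGraph V) (a b₁ b₂ b₃ : V)
    (P₁ : G.Walk a b₁) (P₂ : G.Walk a b₂) (P₃ : G.Walk a b₃) : Prop :=
  IsInducedPathW G P₁ ∧ IsInducedPathW G P₂ ∧ IsInducedPathW G P₃ ∧
  G.Adj b₁ b₂ ∧ G.Adj b₂ b₃ ∧ G.Adj b₁ b₃ ∧
  ¬(G.Adj a b₁ ∧ G.Adj a b₂) ∧ ¬(G.Adj a b₁ ∧ G.Adj a b₃) ∧ ¬(G.Adj a b₂ ∧ G.Adj a b₃) ∧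
  PyrPair G a b₁ b₂ P₁ P₂ ∧ PyrPair G a b₁ b₃ P₁ P₃ ∧ PyrPair G a b₂ b₃ P₂ P₃

/-- Compatibility condition for two paths of a prism: they are vertex-disjoint and
the only edges between them are the two triangle edges `aᵢaⱼ` and `bᵢbⱼ`. -/
def PriPair {V : Type*} (G : SimpleGraph V) (ai bi aj bj : V)
    (Pi : G.Walk ai bi) (Pj : G.Walk aj bj) : Prop :=
  (∀ x : V, x ∈ Pi.support → x ∉ Pj.support) ∧
  (∀ x ∈ Pi.support, ∀ y ∈ Pj.support, G.Adj x y → (x = ai ∧ y = aj) ∨ (x = bi ∧ y = bj))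

/-- The three paths `P₁, P₂, P₃` form a *prism* of `G` with triangles `{a₁,a₂,a₃}`
and `{b₁,b₂,b₃}`. -/
def IsPrism {V : Type*} (G : SimpleGraph V) (a₁ a₂ a₃ b₁ b₂ b₃ : V)
    (P₁ : G.Walk a₁ b₁) (P₂ : G.Walk a₂ b₂) (P₃ : G.Walk a₃ b₃) : Prop :=
  IsInducedPathW G P₁ ∧ IsInducedPathW G P₂ ∧ IsInducedPathW G P₃ ∧
  G.Adj a₁ a₂ ∧ G.Adj a₂ a₃ ∧ G.Adj a₁ a₃ ∧
  G.Adj b₁ b₂ ∧ G.Adj b₂ b₃ ∧ G.Adj b₁ b₃ ∧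
  a₁ ≠ b₁ ∧ a₂ ≠ b₂ ∧ a₃ ≠ b₃ ∧
  PriPair G a₁ b₁ a₂ b₂ P₁ P₂ ∧ PriPair G a₁ b₁ a₃ b₃ P₁ P₃ ∧ PriPair G a₂ b₂ a₃ b₃ P₂ P₃

/-- `G` contains an induced pyramid. -/
def HasPyramid {V : Type*} (G : SimpleGraph V) : Prop :=
  ∃ (a b₁ b₂ b₃ : V) (P₁ : G.Walk a b₁) (P₂ : G.Walk a b₂) (P₃ : G.Walk a b₃),
    IsPyramid G a b₁ b₂ b₃ P₁ P₂ P₃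

/-- `G` contains an induced prism. -/
def HasPrism {V : Type*} (G : SimpleGraph V) : Prop :=
  ∃ (a₁ a₂ a₃ b₁ b₂ b₃ : V) (P₁ : G.Walk a₁ b₁) (P₂ : G.Walk a₂ b₂) (P₃ : G.Walk a₃ b₃),
    IsPrism G a₁ a₂ a₃ b₁ b₂ b₃ P₁ P₂ P₃

/-- `G` has an induced pyramid whose vertex set is exactly `S`. -/
def HasPyramidOn {V : Type*} [DecidableEq V] (G : SimpleGraph V) (S : Finset V) : Prop :=
  ∃ (a b₁ b₂ b₃ : V) (P₁ : G.Walk a b₁) (P₂ : G.Walk a b₂) (P₃ : G.Walk a b₃),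
    IsPyramid G a b₁ b₂ b₃ P₁ P₂ P₃ ∧
    P₁.support.toFinset ∪ P₂.support.toFinset ∪ P₃.support.toFinset = S

/-- `G` has an induced prism whose vertex set is exactly `S`. -/
def HasPrismOn {V : Type*} [DecidableEq V] (G : SimpleGraph V) (S : Finset V) : Prop :=
  ∃ (a₁ a₂ a₃ b₁ b₂ b₃ : V) (P₁ : G.Walk a₁ b₁) (P₂ : G.Walk a₂ b₂) (P₃ : G.Walk a₃ b₃),
    IsPrism G a₁ a₂ a₃ b₁ b₂ b₃ P₁ P₂ P₃ ∧
    P₁.support.toFinset ∪ P₂.support.toFinset ∪ P₃.support.toFinset = S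

set_option linter.unusedSectionVars false

namespace Aux

variable {V : Type*} [DecidableEq V] {G : SimpleGraph V}

lemma tsub_adj {u v x y : V} (p : G.Walk u v) :
    p.toSubgraph.Adj x y ↔ s(x, y) ∈ p.edges := by
  rw [← Walk.mem_edges_toSubgraph, Subgraph.mem_edgeSet]

/-- Chordless path, edges-level formulation. -/
def IndE (G : SimpleGraph V) {u v : V} (p : G.Walk u v) : Prop :=
  p.IsPath ∧ ∀ x y : V, x ∈ p.support → y ∈ p.support → G.Adj x y → s(x, y) ∈ p.edges

@[simp] lemma takeUntil_start {v w : V} (p : G.Walk v w) (h : v ∈ p.support) :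
    p.takeUntil v h = Walk.nil := by
  cases p with
  | nil => rfl
  | cons ha q => simp [Walk.takeUntil]

@[simp] lemma dropUntil_start {v w : V} (p : G.Walk v w) (h : v ∈ p.support) :
    p.dropUntil v h = p := by
  cases p with
  | nil => rfl
  | cons ha q => simp [Walk.dropUntil]

lemma takeUntil_cons_ne {v w u x : V} (ha : G.Adj v w) (q : G.Walk w u)
    (hx : x ∈ (Walk.cons ha q).support) (hne : v ≠ x) (hx' : x ∈ q.support) :
    (Walk.cons ha q).takeUntil x hx = Walk.cons ha (q.takeUntil x hx') := by
  simp [Walk.takeUntil, hne]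

lemma dropUntil_cons_ne {v w u x : V} (ha : G.Adj v w) (q : G.Walk w u)
    (hx : x ∈ (Walk.cons ha q).support) (hne : v ≠ x) (hx' : x ∈ q.support) :
    (Walk.cons ha q).dropUntil x hx = q.dropUntil x hx' := by
  simp [Walk.dropUntil, hne]

lemma takeUntil_congr {v w : V} {p p' : G.Walk v w} (h : p = p') {u : V}
    (hu : u ∈ p.support) :
    p.takeUntil u hu = p'.takeUntil u (h ▸ hu) := by subst h; rfl

lemma dropUntil_congr {v w : V} {p p' : G.Walk v w} (h : p = p') {u : V}
    (hu : u ∈ p.support) :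
    p.dropUntil u hu = p'.dropUntil u (h ▸ hu) := by subst h; rfl

lemma support_split {u v w : V} (p : G.Walk v w) (h : u ∈ p.support) :
    p.support = (p.takeUntil u h).support ++ (p.dropUntil u h).support.tail := by
  conv_lhs => rw [← p.take_spec h]
  rw [Walk.support_append]

lemma edges_split {u v w : V} (p : G.Walk v w) (h : u ∈ p.support) :
    p.edges = (p.takeUntil u h).edges ++ (p.dropUntil u h).edges := by
  conv_lhs => rw [← p.take_spec h]
  rw [Walk.edges_append]

lemma mem_take_or_drop {u v w x : V} (p : G.Walk v w) (h : u ∈ p.support)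
    (hx : x ∈ p.support) :
    x ∈ (p.takeUntil u h).support ∨ x ∈ (p.dropUntil u h).support := by
  rw [support_split p h] at hx
  rcases List.mem_append.mp hx with h1 | h1
  · exact Or.inl h1
  · exact Or.inr (List.mem_of_mem_tail h1)

lemma eq_of_mem_take_mem_drop {u v w x : V} {p : G.Walk v w} (hp : p.IsPath)
    (h : u ∈ p.support)
    (h1 : x ∈ (p.takeUntil u h).support) (h2 : x ∈ (p.dropUntil u h).support) : x = u := by
  by_contra hne
  have hnd : p.support.Nodup := hp.support_nodup
  rw [support_split p h] at hnd
  have h2' : x ∈ (p.dropUntil u h).support.tail := by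
    rw [Walk.support_eq_cons (p.dropUntil u h)] at h2
    rcases List.mem_cons.mp h2 with h2 | h2
    · exact absurd h2 hne
    · exact h2
  exact (List.disjoint_of_nodup_append hnd) h1 h2'

/-- Splitting a path at the junction of an append recovers the two parts. -/
lemma append_split {u v w : V} (q : G.Walk u v) (r : G.Walk v w)
    (hp : (q.append r).IsPath) (h : v ∈ (q.append r).support) :
    (q.append r).takeUntil v h = q ∧ (q.append r).dropUntil v h = r := by
  induction q with
  | nil => exact ⟨takeUntil_start r h, dropUntil_start r h⟩
  | @cons c c' d ha q ih =>
    have hp2 : (Walk.cons ha (q.append r)).IsPath := hp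
    have hp' : (q.append r).IsPath := hp2.of_cons
    have hmem : d ∈ (q.append r).support :=
      (Walk.mem_support_append_iff q r).mpr (Or.inl q.end_mem_support)
    have hne : c ≠ d := by
      intro he
      exact ((Walk.cons_isPath_iff ha (q.append r)).mp hp2).2 (he ▸ hmem)
    refine ⟨(takeUntil_cons_ne ha (q.append r) h hne hmem).trans ?_,
            (dropUntil_cons_ne ha (q.append r) h hne hmem).trans ?_⟩
    · exact congrArg (Walk.cons ha) (ih r hp' hmem).1
    · exact (ih r hp' hmem).2

lemma drop_drop {u z v w : V} {p : G.Walk v w} (hp : p.IsPath) (hz : z ∈ p.support)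
    (hu : u ∈ (p.dropUntil z hz).support) (hu' : u ∈ p.support) :
    p.dropUntil u hu' = (p.dropUntil z hz).dropUntil u hu := by
  have heq : ((p.takeUntil z hz).append ((p.dropUntil z hz).takeUntil u hu)).append
      ((p.dropUntil z hz).dropUntil u hu) = p := by
    rw [← Walk.append_assoc, (p.dropUntil z hz).take_spec hu, p.take_spec hz]
  have key := append_split ((p.takeUntil z hz).append ((p.dropUntil z hz).takeUntil u hu))
      ((p.dropUntil z hz).dropUntil u hu) (by rw [heq]; exact hp) (by rw [heq]; exact hu')
  exact (dropUntil_congr heq.symm hu').trans key.2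

/-- Order antisymmetry on a path. -/
lemma mutex {u z v w : V} {p : G.Walk v w} (hp : p.IsPath) (hz : z ∈ p.support)
    (hu' : u ∈ p.support) (hne : u ≠ z) (h1 : u ∈ (p.dropUntil z hz).support) :
    z ∉ (p.dropUntil u hu').support := by
  rw [drop_drop hp hz h1 hu']
  intro hmem
  have hstart : z ∈ ((p.dropUntil z hz).takeUntil u h1).support := Walk.start_mem_support _
  exact hne.symm (eq_of_mem_take_mem_drop (hp.dropUntil hz) h1 hstart hmem)

/-- Last vertex on a path satisfying a predicate. -/
lemma exists_last {v w : V} {p : G.Walk v w} (pred : V → Prop) (hp : p.IsPath)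
    (h : ∃ x ∈ p.support, pred x) :
    ∃ (z : V) (hz : z ∈ p.support), pred z ∧
      ∀ x ∈ (p.dropUntil z hz).support, x ≠ z → ¬ pred x := by
  induction p with
  | nil =>
    obtain ⟨x, hx, hpx⟩ := h
    rw [Walk.mem_support_nil_iff] at hx
    subst hx
    refine ⟨x, by simp, hpx, ?_⟩
    intro y hy hne
    replace hy := Walk.support_dropUntil_subset _ _ hy
    rw [Walk.mem_support_nil_iff] at hy
    exact absurd hy hne
  | @cons a b u ha q ih =>
    by_cases hq : ∃ x ∈ q.support, pred x
    · obtain ⟨z, hz, hpz, hlast⟩ := ih hp.of_cons hq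
      have hzc : z ∈ (Walk.cons ha q).support := by simp [hz]
      have hne : a ≠ z := by
        intro he
        exact ((Walk.cons_isPath_iff ha q).mp hp).2 (he ▸ hz)
      refine ⟨z, hzc, hpz, ?_⟩
      rw [dropUntil_cons_ne ha q hzc hne hz]
      exact hlast
    · obtain ⟨x, hx, hpx⟩ := h
      rw [Walk.support_cons] at hx
      have hxa : x = a := by
        rcases List.mem_cons.mp hx with h' | h'
        · exact h'
        · exact absurd ⟨x, h', hpx⟩ hq
      subst hxa
      refine ⟨x, Walk.start_mem_support _, hpx, ?_⟩
      rw [dropUntil_start]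
      intro y hy hne
      rw [Walk.support_cons] at hy
      rcases List.mem_cons.mp hy with h' | h'
      · exact absurd h' hne
      · exact fun hp' => hq ⟨y, h', hp'⟩


lemma IndE.consW {u v w : V} {r : G.Walk v w} (hr : IndE G r) (ha : G.Adj u v)
    (hu : u ∉ r.support) (hnb : ∀ y ∈ r.support, G.Adj u y → y = v) :
    IndE G (Walk.cons ha r) := by
  constructor
  · rw [Walk.cons_isPath_iff]; exact ⟨hr.1, hu⟩
  · intro x y hx hy hadj
    rw [Walk.support_cons] at hx hy
    rw [Walk.edges_cons]
    rcases List.mem_cons.mp hx with rfl | hx' <;> rcases List.mem_cons.mp hy with rfl | hy'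
    · exact absurd rfl hadj.ne
    · have : y = v := hnb y hy' hadj
      subst this
      exact List.mem_cons_self
    · have : x = v := hnb x hx' hadj.symm
      subst this
      exact List.mem_cons.mpr (Or.inl Sym2.eq_swap)
    · exact List.mem_cons_of_mem _ (hr.2 x y hx' hy' hadj)

lemma IndE.takeUntilW {v w u : V} {p : G.Walk v w} (hp : IndE G p) (h : u ∈ p.support) :
    IndE G (p.takeUntil u h) := by
  refine ⟨hp.1.takeUntil h, ?_⟩
  intro x y hx hy hadj
  have he := hp.2 x y (p.support_takeUntil_subset h hx) (p.support_takeUntil_subset h hy) hadj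
  rw [edges_split p h] at he
  rcases List.mem_append.mp he with h1 | h1
  · exact h1
  · exfalso
    have hx2 := Walk.fst_mem_support_of_mem_edges _ h1
    have hy2 := Walk.snd_mem_support_of_mem_edges _ h1
    have ex := eq_of_mem_take_mem_drop hp.1 h hx hx2
    have ey := eq_of_mem_take_mem_drop hp.1 h hy hy2
    rw [← ey] at ex
    exact hadj.ne ex

lemma IndE.dropUntilW {v w u : V} {p : G.Walk v w} (hp : IndE G p) (h : u ∈ p.support) :
    IndE G (p.dropUntil u h) := by
  refine ⟨hp.1.dropUntil h, ?_⟩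
  intro x y hx hy hadj
  have he := hp.2 x y (p.support_dropUntil_subset h hx) (p.support_dropUntil_subset h hy) hadj
  rw [edges_split p h] at he
  rcases List.mem_append.mp he with h1 | h1
  · exfalso
    have hx2 := Walk.fst_mem_support_of_mem_edges _ h1
    have hy2 := Walk.snd_mem_support_of_mem_edges _ h1
    have ex := eq_of_mem_take_mem_drop hp.1 h hx2 hx
    have ey := eq_of_mem_take_mem_drop hp.1 h hy2 hy
    rw [← ey] at ex
    exact hadj.ne ex
  · exact h1

lemma IndE.reverseW {v w : V} {p : G.Walk v w} (hp : IndE G p) : IndE G p.reverse := by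
  refine ⟨hp.1.reverse, ?_⟩
  intro x y hx hy hadj
  rw [Walk.support_reverse, List.mem_reverse] at hx hy
  rw [Walk.edges_reverse, List.mem_reverse]
  exact hp.2 x y hx hy hadj

lemma IndE.appendW {u v w : V} {q : G.Walk u v} {r : G.Walk v w} (hq : IndE G q)
    (hr : IndE G r)
    (hmeet : ∀ x, x ∈ q.support → x ∈ r.support → x = v)
    (hcross : ∀ x y, x ∈ q.support → y ∈ r.support → x ≠ v → y ≠ v → ¬ G.Adj x y) :
    IndE G (q.append r) := by
  have hvtail : ¬ v ∈ r.support.tail := by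
    have h2 : (v :: r.support.tail).Nodup := Walk.support_eq_cons r ▸ hr.1.support_nodup
    exact (List.nodup_cons.mp h2).1
  have hpath : (q.append r).IsPath := by
    rw [Walk.isPath_def, Walk.support_append]
    refine List.Nodup.append hq.1.support_nodup ?_ ?_
    · have h2 : (v :: r.support.tail).Nodup := Walk.support_eq_cons r ▸ hr.1.support_nodup
      exact h2.of_cons
    · intro a ha ha'
      have : a = v := hmeet a ha (List.mem_of_mem_tail ha')
      subst this
      exact hvtail ha'
  refine ⟨hpath, ?_⟩
  intro x y hx hy hadj
  rw [Walk.mem_support_append_iff] at hx hy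
  rw [Walk.edges_append, List.mem_append]
  rcases hx with hx | hx <;> rcases hy with hy | hy
  · exact Or.inl (hq.2 x y hx hy hadj)
  · by_cases hxv : x = v
    · subst hxv
      exact Or.inr (hr.2 x y r.start_mem_support hy hadj)
    · by_cases hyv : y = v
      · subst hyv
        exact Or.inl (hq.2 x y hx q.end_mem_support hadj)
      · exact absurd hadj (hcross x y hx hy hxv hyv)
  · by_cases hxv : x = v
    · subst hxv
      exact Or.inl (hq.2 x y q.end_mem_support hy hadj)
    · by_cases hyv : y = v
      · subst hyv
        exact Or.inr (hr.2 x y hx r.start_mem_support hadj)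
      · exact absurd hadj.symm (hcross y x hy hx hyv hxv)
  · exact Or.inr (hr.2 x y hx hy hadj)

lemma decomp_of_edge_start {v w x : V} {p : G.Walk v w} (hp : p.IsPath)
    (h : s(v, x) ∈ p.edges) :
    ∃ (ha : G.Adj v x) (q : G.Walk x w), p = Walk.cons ha q := by
  cases p with
  | nil => simp at h
  | @cons _ c _ ha q =>
    rw [Walk.edges_cons] at h
    rcases List.mem_cons.mp h with h1 | h1
    · rcases Sym2.eq_iff.mp h1 with ⟨-, rfl⟩ | ⟨h2, h3⟩
      · exact ⟨ha, q, rfl⟩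
      · exfalso
        have := ((Walk.cons_isPath_iff ha q).mp hp).2
        exact this (h2 ▸ q.start_mem_support)
    · exfalso
      have := Walk.fst_mem_support_of_mem_edges _ h1
      exact ((Walk.cons_isPath_iff ha q).mp hp).2 this

/-- Choose the attachment of `x` on a chordless path `p` closest to the end,
together with the corresponding walk from `x` to the end of `p`. -/
lemma seg {s t x : V} {p : G.Walk s t} (hp : IndE G p)
    (hex : ∃ v ∈ p.support, v = x ∨ G.Adj x v) :
    ∃ (z : V) (hz : z ∈ p.support) (W : G.Walk x t),
      (z = x ∨ G.Adj x z) ∧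
      (∀ v ∈ (p.dropUntil z hz).support, v ≠ z → ¬(v = x ∨ G.Adj x v)) ∧
      IndE G W ∧
      (∀ v, v ∈ W.support ↔ v = x ∨ v ∈ (p.dropUntil z hz).support) := by
  obtain ⟨z, hz, hpz, hlast⟩ := exists_last (fun v => v = x ∨ G.Adj x v) hp.1 hex
  by_cases hzx : z = x
  · subst hzx
    refine ⟨z, hz, p.dropUntil z hz, Or.inl rfl, hlast, hp.dropUntilW hz, ?_⟩
    intro v
    constructor
    · exact fun h => Or.inr h
    · rintro (rfl | h)
      · exact (p.dropUntil v hz).start_mem_support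
      · exact h
  · have hadj : G.Adj x z := by
      rcases hpz with h | h
      · exact absurd h hzx
      · exact h
    have hxnot : x ∉ (p.dropUntil z hz).support := by
      intro hmem
      by_cases hxz : x = z
      · exact hzx hxz.symm
      · exact hlast x hmem hxz (Or.inl rfl)
    refine ⟨z, hz, Walk.cons hadj (p.dropUntil z hz), Or.inr hadj, hlast,
      (hp.dropUntilW hz).consW hadj hxnot ?_, ?_⟩
    · intro y hy hady
      by_cases hyz : y = z
      · exact hyz
      · exact absurd (Or.inr hady) (hlast y hy hyz)
    · intro v
      rw [Walk.support_cons]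
      exact List.mem_cons

lemma card_support_of_path {u v : V} {p : G.Walk u v} (hp : p.IsPath) :
    p.support.toFinset.card = p.length + 1 := by
  rw [List.toFinset_card_of_nodup hp.support_nodup, Walk.length_support]

end Aux

namespace Aux

variable {V : Type*} [DecidableEq V] {G : SimpleGraph V}

lemma edge_of_length_one {c d : V} {W : G.Walk c d} (h : W.length = 1) :
    s(c, d) ∈ W.edges := by
  cases W with
  | nil => simp at h
  | cons ha q =>
    rw [Walk.length_cons] at h
    have h0 : q.length = 0 := by omega
    have := Walk.eq_of_length_eq_zero h0
    subst this
    simp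

lemma drop_eq_cons_of_edge {s t y u : V} {p : G.Walk s t} (hp : p.IsPath)
    (hy : y ∈ p.support)
    (hedge : s(y, u) ∈ (p.dropUntil y hy).edges) :
    ∃ (hu : u ∈ p.support) (ha : G.Adj y u),
      p.dropUntil y hy = Walk.cons ha (p.dropUntil u hu) := by
  obtain ⟨ha, q, hdec⟩ := decomp_of_edge_start (hp.dropUntil hy) hedge
  have spec := p.take_spec hy
  rw [hdec] at spec
  have heq : ((p.takeUntil y hy).append (Walk.cons ha Walk.nil)).append q = p :=
    (Walk.append_assoc _ _ _).symm.trans spec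
  have hu : u ∈ p.support := by
    rw [← heq]
    rw [Walk.mem_support_append_iff]
    exact Or.inr q.start_mem_support
  refine ⟨hu, ha, ?_⟩
  have hq := (append_split _ q (by rw [heq]; exact hp) (by rw [heq]; exact hu)).2
  have hqe : p.dropUntil u hu = q := (dropUntil_congr heq.symm hu).trans hq
  rw [hdec, hqe]

lemma shortcut {a b : V} {p : G.Walk a b} (hp : p.IsPath)
    {x y : V} (hx : x ∈ p.support) (hy : y ∈ p.support) (hadj : G.Adj x y)
    (hne : s(x, y) ∉ p.edges) :
    ∃ Q : G.Walk a b, Q.IsPath ∧ Q.length < p.length ∧ ∀ v ∈ Q.support, v ∈ p.support := by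
  rcases mem_take_or_drop p hx hy with hyt | hyd
  · -- y is (weakly) before x : jump from y to x
    set t := p.takeUntil x hx with ht
    set d := p.dropUntil x hx with hd
    have hQ0 := (t.takeUntil y hyt).append (Walk.cons hadj.symm d)
    refine ⟨((t.takeUntil y hyt).append (Walk.cons hadj.symm d)).bypass,
      Walk.bypass_isPath _, ?_, ?_⟩
    · have hlb := Walk.length_bypass_le ((t.takeUntil y hyt).append (Walk.cons hadj.symm d))
      have h1 : ((t.takeUntil y hyt).append (Walk.cons hadj.symm d)).length
          = (t.takeUntil y hyt).length + (d.length + 1) := by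
        rw [Walk.length_append, Walk.length_cons]
      have h2 : p.length = t.length + d.length := by
        conv_lhs => rw [← p.take_spec hx]
        rw [Walk.length_append]
      have h3 : t.length = (t.takeUntil y hyt).length + (t.dropUntil y hyt).length := by
        conv_lhs => rw [← t.take_spec hyt]
        rw [Walk.length_append]
      have h4 : (t.dropUntil y hyt).length ≠ 0 := by
        intro h0
        exact hadj.ne' (Walk.eq_of_length_eq_zero h0)
      have h5 : (t.dropUntil y hyt).length ≠ 1 := by
        intro h1'
        apply hne
        have := edge_of_length_one h1'
        have := (t.edges_dropUntil_subset hyt) this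
        have := (p.edges_takeUntil_subset hx) this
        rwa [Sym2.eq_swap] at this
      omega
    · intro v hv
      have hv' := Walk.support_bypass_subset _ hv
      rw [Walk.mem_support_append_iff] at hv'
      rcases hv' with h' | h'
      · exact p.support_takeUntil_subset hx (t.support_takeUntil_subset hyt h')
      · rw [Walk.support_cons] at h'
        rcases List.mem_cons.mp h' with rfl | h'
        · exact hy
        · exact p.support_dropUntil_subset hx h'
  · -- y is after x : jump from x to y
    set t := p.takeUntil x hx with ht
    set d := p.dropUntil x hx with hd
    refine ⟨(t.append (Walk.cons hadj (d.dropUntil y hyd))).bypass,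
      Walk.bypass_isPath _, ?_, ?_⟩
    · have hlb := Walk.length_bypass_le (t.append (Walk.cons hadj (d.dropUntil y hyd)))
      have h1 : (t.append (Walk.cons hadj (d.dropUntil y hyd))).length
          = t.length + ((d.dropUntil y hyd).length + 1) := by
        rw [Walk.length_append, Walk.length_cons]
      have h2 : p.length = t.length + d.length := by
        conv_lhs => rw [← p.take_spec hx]
        rw [Walk.length_append]
      have h3 : d.length = (d.takeUntil y hyd).length + (d.dropUntil y hyd).length := by
        conv_lhs => rw [← d.take_spec hyd]
        rw [Walk.length_append]
      have h4 : (d.takeUntil y hyd).length ≠ 0 := by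
        intro h0
        exact hadj.ne (Walk.eq_of_length_eq_zero h0)
      have h5 : (d.takeUntil y hyd).length ≠ 1 := by
        intro h1'
        apply hne
        have := edge_of_length_one h1'
        have := (d.edges_takeUntil_subset hyd) this
        exact (p.edges_dropUntil_subset hx) this
      omega
    · intro v hv
      have hv' := Walk.support_bypass_subset _ hv
      rw [Walk.mem_support_append_iff] at hv'
      rcases hv' with h' | h'
      · exact p.support_takeUntil_subset hx h'
      · rw [Walk.support_cons] at h'
        rcases List.mem_cons.mp h' with rfl | h'
        · exact hx
        · exact p.support_dropUntil_subset hx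
            ((d.support_dropUntil_subset hyd) h')

end Aux

open Aux

lemma indE_iff {V : Type*} [DecidableEq V] {G : SimpleGraph V} {u v : V} {p : G.Walk u v} :
    IsInducedPathW G p ↔ IndE G p := by
  unfold IsInducedPathW IndE
  constructor
  · rintro ⟨h1, h2⟩
    exact ⟨h1, fun x y hx hy ha => (tsub_adj p).mp (h2 x y hx hy ha)⟩
  · rintro ⟨h1, h2⟩
    exact ⟨h1, fun x y hx hy ha => (tsub_adj p).mpr (h2 x y hx hy ha)⟩

lemma PriPair.symmP {V : Type*} {G : SimpleGraph V} {ai bi aj bj : V}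
    {Pi : G.Walk ai bi} {Pj : G.Walk aj bj} (h : PriPair G ai bi aj bj Pi Pj) :
    PriPair G aj bj ai bi Pj Pi := by
  obtain ⟨h1, h2⟩ := h
  constructor
  · intro x hx hx'
    exact h1 x hx' hx
  · intro x hx y hy hadj
    rcases h2 y hy x hx hadj.symm with ⟨r1, r2⟩ | ⟨r1, r2⟩
    · exact Or.inl ⟨r2, r1⟩
    · exact Or.inr ⟨r2, r1⟩

lemma IsPrism.swap23 {V : Type*} {G : SimpleGraph V} {a₁ a₂ a₃ b₁ b₂ b₃ : V}
    {P₁ : G.Walk a₁ b₁} {P₂ : G.Walk a₂ b₂} {P₃ : G.Walk a₃ b₃}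
    (h : IsPrism G a₁ a₂ a₃ b₁ b₂ b₃ P₁ P₂ P₃) :
    IsPrism G a₁ a₃ a₂ b₁ b₃ b₂ P₁ P₃ P₂ := by
  obtain ⟨hP1, hP2, hP3, haa12, haa23, haa13, hbb12, hbb23, hbb13, hne1, hne2, hne3, h12, h13, h23⟩ := h
  exact ⟨hP1, hP3, hP2, haa13, haa23.symm, haa12, hbb13, hbb23.symm, hbb12,
    hne1, hne3, hne2, h13, h12, h23.symmP⟩

lemma small_contra {V : Type*} [Fintype V] [DecidableEq V] {G : SimpleGraph V}
    {a₁ a₂ a₃ b₁ b₂ b₃ : V}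
    {P₁ : G.Walk a₁ b₁} {P₂ : G.Walk a₂ b₂} {P₃ : G.Walk a₃ b₃}
    (hK : IsPrism G a₁ a₂ a₃ b₁ b₂ b₃ P₁ P₂ P₃)
    (hKmin : ∀ S : Finset V, HasPyramidOn G S ∨ HasPrismOn G S →
      (P₁.support.toFinset ∪ P₂.support.toFinset ∪ P₃.support.toFinset).card ≤ S.card)
    {x : V} {T : G.Walk x b₁} (hTp : T.IsPath) (hTle : T.length + 1 ≤ P₁.length)
    (S : Finset V) (hS : HasPyramidOn G S ∨ HasPrismOn G S)
    (hsub : ∀ v ∈ S, v ∈ T.support ∨ v ∈ P₂.support ∨ v ∈ P₃.support) : False := by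
  obtain ⟨hP1, hP2, hP3, _, _, _, _, _, _, _, _, _, h12, h13, h23⟩ := hK
  have hd23 : Disjoint P₂.support.toFinset P₃.support.toFinset := by
    rw [Finset.disjoint_left]
    intro a ha hb
    exact h23.1 a (List.mem_toFinset.mp ha) (List.mem_toFinset.mp hb)
  have hd12' : Disjoint P₁.support.toFinset P₂.support.toFinset := by
    rw [Finset.disjoint_left]
    intro a ha hb
    exact h12.1 a (List.mem_toFinset.mp ha) (List.mem_toFinset.mp hb)
  have hd13' : Disjoint P₁.support.toFinset P₃.support.toFinset := by
    rw [Finset.disjoint_left]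
    intro a ha hb
    exact h13.1 a (List.mem_toFinset.mp ha) (List.mem_toFinset.mp hb)
  have hcP : (P₁.support.toFinset ∪ P₂.support.toFinset ∪ P₃.support.toFinset).card
      = P₁.length + P₂.length + P₃.length + 3 := by
    rw [Finset.card_union_of_disjoint, Finset.card_union_of_disjoint hd12']
    · rw [Aux.card_support_of_path hP1.1, Aux.card_support_of_path hP2.1,
        Aux.card_support_of_path hP3.1]
      ring
    · rw [Finset.disjoint_union_left]
      exact ⟨hd13', hd23⟩
  have hSsub : S ⊆ T.support.toFinset ∪ P₂.support.toFinset ∪ P₃.support.toFinset := by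
    intro v hv
    rcases hsub v hv with h | h | h
    · exact Finset.mem_union_left _ (Finset.mem_union_left _ (List.mem_toFinset.mpr h))
    · exact Finset.mem_union_left _ (Finset.mem_union_right _ (List.mem_toFinset.mpr h))
    · exact Finset.mem_union_right _ (List.mem_toFinset.mpr h)
  have hc1 : S.card ≤ T.support.toFinset.card + P₂.support.toFinset.card
      + P₃.support.toFinset.card := by
    calc S.card ≤ _ := Finset.card_le_card hSsub
    _ ≤ (T.support.toFinset ∪ P₂.support.toFinset).card + P₃.support.toFinset.card :=
      Finset.card_union_le _ _
    _ ≤ _ := by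
      have := Finset.card_union_le T.support.toFinset P₂.support.toFinset
      omega
  have hTc : T.support.toFinset.card = T.length + 1 := Aux.card_support_of_path hTp
  have h2c : P₂.support.toFinset.card = P₂.length + 1 := Aux.card_support_of_path hP2.1
  have h3c : P₃.support.toFinset.card = P₃.length + 1 := Aux.card_support_of_path hP3.1
  have := hKmin S hS
  omega

lemma nobad {V : Type*} [Fintype V] [DecidableEq V] {G : SimpleGraph V}
    {a₁ a₂ a₃ b₁ b₂ b₃ : V}
    {P₁ : G.Walk a₁ b₁} {P₂ : G.Walk a₂ b₂} {P₃ : G.Walk a₃ b₃}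
    (hK : IsPrism G a₁ a₂ a₃ b₁ b₂ b₃ P₁ P₂ P₃)
    (hKmin : ∀ S : Finset V, HasPyramidOn G S ∨ HasPrismOn G S →
      (P₁.support.toFinset ∪ P₂.support.toFinset ∪ P₃.support.toFinset).card ≤ S.card)
    {x : V} (T : G.Walk x b₁) (hT : IndE G T)
    (hTle : T.length + 1 ≤ P₁.length)
    (hxa1 : x ≠ a₁) (hxb2 : ¬ G.Adj x b₂) (hxb3 : ¬ G.Adj x b₃)
    (hTint : ∀ v ∈ T.support, v ≠ x → v ≠ b₁ →
      v ∉ P₂.support ∧ v ∉ P₃.support ∧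
      ∀ u, u ∈ P₂.support ∨ u ∈ P₃.support → ¬ G.Adj v u)
    (h2 : ∃ v ∈ P₂.support, v = x ∨ G.Adj x v) : False := by
  classical
  have hK' := hK
  obtain ⟨hP1, hP2, hP3, haa12, haa23, haa13, hbb12, hbb23, hbb13, hne1, hne2, hne3,
    h12, h13, h23⟩ := hK
  have hP2' : IndE G P₂ := indE_iff.mp hP2
  have hP3' : IndE G P₃ := indE_iff.mp hP3
  have hTp : T.IsPath := hT.1
  have hxb1 : x ≠ b₁ := by
    intro he
    exact hxb2 (by rw [he]; exact hbb12)
  have hxb2' : x ≠ b₂ := by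
    intro he
    exact hxb3 (by rw [he]; exact hbb23)
  have hxb3' : x ≠ b₃ := by
    intro he
    exact hxb2 (by rw [he]; exact hbb23.symm)
  have hb1P2 : b₁ ∉ P₂.support := h12.1 b₁ P₁.end_mem_support
  have hb1P3 : b₁ ∉ P₃.support := h13.1 b₁ P₁.end_mem_support
  have eb1P2 : ∀ v ∈ P₂.support, G.Adj b₁ v → v = b₂ := by
    intro v hv hadj
    rcases h12.2 b₁ P₁.end_mem_support v hv hadj with ⟨h', _⟩ | ⟨_, h'⟩
    · exact absurd h'.symm hne1
    · exact h'
  have eb1P3 : ∀ v ∈ P₃.support, G.Adj b₁ v → v = b₃ := by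
    intro v hv hadj
    rcases h13.2 b₁ P₁.end_mem_support v hv hadj with ⟨h', _⟩ | ⟨_, h'⟩
    · exact absurd h'.symm hne1
    · exact h'
  have hTP2 : ∀ v ∈ T.support, v ∈ P₂.support → v = x := by
    intro v hv hm
    by_cases hvx : v = x
    · exact hvx
    by_cases hvb : v = b₁
    · subst hvb; exact absurd hm hb1P2
    · exact absurd hm (hTint v hv hvx hvb).1
  have hTP3 : ∀ v ∈ T.support, v ∈ P₃.support → v = x := by
    intro v hv hm
    by_cases hvx : v = x
    · exact hvx
    by_cases hvb : v = b₁
    · subst hvb; exact absurd hm hb1P3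
    · exact absurd hm (hTint v hv hvx hvb).2.1
  have hd23 : ∀ u ∈ P₂.support, u ∉ P₃.support := h23.1
  obtain ⟨z2, hz2, W2, hz2p, hlast2, hW2, hW2s⟩ := Aux.seg hP2' h2
  have hz2b2 : z2 ≠ b₂ := by
    intro he
    subst he
    rcases hz2p with h' | h'
    · exact hxb2' h'.symm
    · exact hxb2 h'
  have ha2D2 : a₂ ∈ (P₂.dropUntil z2 hz2).support → z2 = a₂ := fun h =>
    (Aux.eq_of_mem_take_mem_drop hP2.1 hz2 (Walk.start_mem_support _) h).symm
  have pyrTW2 : PyrPair G x b₁ b₂ T W2 := by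
    constructor
    · intro v hv hv2
      rcases (hW2s v).mp hv2 with h' | h'
      · exact h'
      · exact hTP2 v hv (P₂.support_dropUntil_subset hz2 h')
    · intro u hu w hw hux hwx hadj
      have hwP2 : w ∈ P₂.support := by
        rcases (hW2s w).mp hw with h' | h'
        · exact absurd h' hwx
        · exact P₂.support_dropUntil_subset hz2 h'
      by_cases hub : u = b₁
      · subst hub; exact ⟨rfl, eb1P2 w hwP2 hadj⟩
      · exact absurd hadj ((hTint u hu hux hub).2.2 w (Or.inl hwP2))
  by_cases h3 : ∃ v ∈ P₃.support, v = x ∨ G.Adj x v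
  · -- CASE A : x attaches to both P₂ and P₃
    obtain ⟨z3, hz3, W3, hz3p, hlast3, hW3, hW3s⟩ := Aux.seg hP3' h3
    have hz3b3 : z3 ≠ b₃ := by
      intro he
      subst he
      rcases hz3p with h' | h'
      · exact hxb3' h'.symm
      · exact hxb3 h'
    have ha3D3 : a₃ ∈ (P₃.dropUntil z3 hz3).support → z3 = a₃ := fun h =>
      (Aux.eq_of_mem_take_mem_drop hP3.1 hz3 (Walk.start_mem_support _) h).symm
    have pyrTW3 : PyrPair G x b₁ b₃ T W3 := by
      constructor
      · intro v hv hv3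
        rcases (hW3s v).mp hv3 with h' | h'
        · exact h'
        · exact hTP3 v hv (P₃.support_dropUntil_subset hz3 h')
      · intro u hu w hw hux hwx hadj
        have hwP3 : w ∈ P₃.support := by
          rcases (hW3s w).mp hw with h' | h'
          · exact absurd h' hwx
          · exact P₃.support_dropUntil_subset hz3 h'
        by_cases hub : u = b₁
        · subst hub; exact ⟨rfl, eb1P3 w hwP3 hadj⟩
        · exact absurd hadj ((hTint u hu hux hub).2.2 w (Or.inr hwP3))
    by_cases hbad : (z2 = a₂ ∧ a₂ ≠ x) ∧ (z3 = a₃ ∧ a₃ ≠ x)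
    · -- C-II : triangle prism on {x, a₂, a₃} with paths T, P₂, P₃
      obtain ⟨⟨hz2a, ha2x⟩, hz3a, ha3x⟩ := hbad
      subst hz2a
      subst hz3a
      rw [Aux.dropUntil_start] at hlast2 hlast3
      have hadjxa2 : G.Adj x z2 := by
        rcases hz2p with h' | h'
        · exact absurd h' ha2x
        · exact h'
      have hadjxa3 : G.Adj x z3 := by
        rcases hz3p with h' | h'
        · exact absurd h' ha3x
        · exact h'
      have hxnP2 : x ∉ P₂.support := fun h =>
        hlast2 x h (fun he => ha2x he.symm) (Or.inl rfl)
      have hxnP3 : x ∉ P₃.support := fun h =>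
        hlast3 x h (fun he => ha3x he.symm) (Or.inl rfl)
      have pp2 : PriPair G x b₁ z2 b₂ T P₂ := by
        constructor
        · intro v hv hm
          exact hxnP2 ((hTP2 v hv hm) ▸ hm)
        · intro u hu w hw hadj
          by_cases hub : u = b₁
          · subst hub
            exact Or.inr ⟨rfl, eb1P2 w hw hadj⟩
          by_cases hux : u = x
          · subst hux
            left
            refine ⟨rfl, ?_⟩
            by_contra hwa
            exact hlast2 w hw hwa (Or.inr hadj)
          · exact absurd hadj ((hTint u hu hux hub).2.2 w (Or.inl hw))
      have pp3 : PriPair G x b₁ z3 b₃ T P₃ := by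
        constructor
        · intro v hv hm
          exact hxnP3 ((hTP3 v hv hm) ▸ hm)
        · intro u hu w hw hadj
          by_cases hub : u = b₁
          · subst hub
            exact Or.inr ⟨rfl, eb1P3 w hw hadj⟩
          by_cases hux : u = x
          · subst hux
            left
            refine ⟨rfl, ?_⟩
            by_contra hwa
            exact hlast3 w hw hwa (Or.inr hadj)
          · exact absurd hadj ((hTint u hu hux hub).2.2 w (Or.inr hw))
      have hprism : IsPrism G x z2 z3 b₁ b₂ b₃ T P₂ P₃ :=
        ⟨indE_iff.mpr hT, hP2, hP3, hadjxa2, haa23, hadjxa3, hbb12, hbb23, hbb13,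
          hxb1, hne2, hne3, pp2, pp3, h23⟩
      refine small_contra hK' hKmin hTp hTle _
        (Or.inr ⟨x, z2, z3, b₁, b₂, b₃, T, P₂, P₃, hprism, rfl⟩) ?_
      intro v hv
      rw [Finset.mem_union, Finset.mem_union] at hv
      rcases hv with (hv | hv) | hv
      · exact Or.inl (List.mem_toFinset.mp hv)
      · exact Or.inr (Or.inl (List.mem_toFinset.mp hv))
      · exact Or.inr (Or.inr (List.mem_toFinset.mp hv))
    · -- C-I : pyramid with apex x, paths T, W2, W3
      have pyrW2W3 : PyrPair G x b₂ b₃ W2 W3 := by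
        constructor
        · intro v hv2 hv3
          rcases (hW2s v).mp hv2 with h' | h'
          · exact h'
          rcases (hW3s v).mp hv3 with h'' | h''
          · exact h''
          · exact absurd (P₃.support_dropUntil_subset hz3 h'')
              (hd23 v (P₂.support_dropUntil_subset hz2 h'))
        · intro u hu w hw hux hwx hadj
          have huD2 : u ∈ (P₂.dropUntil z2 hz2).support := by
            rcases (hW2s u).mp hu with h' | h'
            · exact absurd h' hux
            · exact h'
          have hwD3 : w ∈ (P₃.dropUntil z3 hz3).support := by
            rcases (hW3s w).mp hw with h' | h'
            · exact absurd h' hwx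
            · exact h'
          rcases h23.2 u (P₂.support_dropUntil_subset hz2 huD2) w
            (P₃.support_dropUntil_subset hz3 hwD3) hadj with ⟨hua, hwa⟩ | h'
          · exfalso
            apply hbad
            subst hua
            subst hwa
            exact ⟨⟨ha2D2 huD2, hux⟩, ha3D3 hwD3, hwx⟩
          · exact h'
      have hpyr : IsPyramid G x b₁ b₂ b₃ T W2 W3 :=
        ⟨indE_iff.mpr hT, indE_iff.mpr hW2, indE_iff.mpr hW3, hbb12, hbb23, hbb13,
          fun h => hxb2 h.2, fun h => hxb3 h.2, fun h => hxb2 h.1,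
          pyrTW2, pyrTW3, pyrW2W3⟩
      refine small_contra hK' hKmin hTp hTle _
        (Or.inl ⟨x, b₁, b₂, b₃, T, W2, W3, hpyr, rfl⟩) ?_
      intro v hv
      rw [Finset.mem_union, Finset.mem_union] at hv
      rcases hv with (hv | hv) | hv
      · exact Or.inl (List.mem_toFinset.mp hv)
      · rcases (hW2s v).mp (List.mem_toFinset.mp hv) with h' | h'
        · exact Or.inl (by rw [h']; exact T.start_mem_support)
        · exact Or.inr (Or.inl (P₂.support_dropUntil_subset hz2 h'))
      · rcases (hW3s v).mp (List.mem_toFinset.mp hv) with h' | h'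
        · exact Or.inl (by rw [h']; exact T.start_mem_support)
        · exact Or.inr (Or.inr (P₃.support_dropUntil_subset hz3 h'))
  · -- CASE B : x attaches only to P₂
    push_neg at h3
    have hxP3 : x ∉ P₃.support := fun h => (h3 x h).1 rfl
    have hadjP3 : ∀ v ∈ P₃.support, ¬G.Adj x v := fun v hv => (h3 v hv).2
    have h2r : ∃ v ∈ P₂.reverse.support, v = x ∨ G.Adj x v := by
      obtain ⟨v, hv, h'⟩ := h2
      exact ⟨v, by rw [Walk.support_reverse]; exact List.mem_reverse.mpr hv, h'⟩
    obtain ⟨y2, hy2r, WR, hy2p, hlastR, hWR, hWRs⟩ := Aux.seg hP2'.reverseW h2r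
    have hy2 : y2 ∈ P₂.support := by
      have := hy2r
      rw [Walk.support_reverse, List.mem_reverse] at this
      exact this
    have hsplit : (P₂.dropUntil y2 hy2).reverse.append (P₂.takeUntil y2 hy2).reverse
        = P₂.reverse := by
      rw [← Walk.reverse_append, P₂.take_spec hy2]
    have hRD : P₂.reverse.dropUntil y2 hy2r = (P₂.takeUntil y2 hy2).reverse :=
      (Aux.dropUntil_congr hsplit.symm hy2r).trans
        (Aux.append_split _ _ (by rw [hsplit]; exact hP2.1.reverse)
          (by rw [hsplit]; exact hy2r)).2
    have hfirst2 : ∀ v ∈ (P₂.takeUntil y2 hy2).support, v ≠ y2 →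
        ¬(v = x ∨ G.Adj x v) := by
      intro v hv
      refine hlastR v ?_
      rw [hRD, Walk.support_reverse]
      exact List.mem_reverse.mpr hv
    have hWRs' : ∀ v, v ∈ WR.support ↔ v = x ∨ v ∈ (P₂.takeUntil y2 hy2).support := by
      intro v
      rw [hWRs v, hRD, Walk.support_reverse, List.mem_reverse]
    have hy2b2 : y2 ≠ b₂ := by
      intro he
      subst he
      rcases hy2p with h' | h'
      · exact hxb2' h'.symm
      · exact hxb2 h'
    have hb2take : b₂ ∉ (P₂.takeUntil y2 hy2).support := by
      intro h
      exact hy2b2 (Aux.eq_of_mem_take_mem_drop hP2.1 hy2 h (Walk.end_mem_support _)).symm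
    have hz2take : z2 ∈ (P₂.takeUntil y2 hy2).support → z2 = y2 := by
      intro h
      by_contra hne
      exact hfirst2 z2 h hne hz2p
    have hy2D2 : y2 ∈ (P₂.dropUntil z2 hz2).support → y2 = z2 := by
      intro h
      by_contra hne
      exact hlast2 y2 h hne hy2p
    -- the chordless-concatenation x → b₃ through a₂a₃ exists whenever needed
    have hc3 : IndE G (Walk.cons haa23 P₃) := by
      refine hP3'.consW haa23 (h23.1 a₂ P₂.start_mem_support) ?_
      intro w hw hadj
      rcases h23.2 a₂ P₂.start_mem_support w hw hadj with ⟨_, h'⟩ | ⟨h', _⟩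
      · exact h'
      · exact absurd h' hne2
    by_cases hB1 : y2 = z2 ∧ z2 ≠ x
    · -- pyramid with apex z2
      obtain ⟨hyz, hz2x⟩ := hB1
      subst hyz
      have hadjxz2 : G.Adj x y2 := by
        rcases hz2p with h' | h'
        · exact absurd h' hz2x
        · exact h'
      have hattP2 : ∀ v ∈ P₂.support, (v = x ∨ G.Adj x v) → v = y2 := by
        intro v hv hpv
        rcases Aux.mem_take_or_drop P₂ hy2 hv with h' | h'
        · by_contra hne
          exact hfirst2 v h' hne hpv
        · by_contra hne
          exact hlast2 v (by exact h') hne hpv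
      have hxnP2 : x ∉ P₂.support := fun h => hz2x (hattP2 x h (Or.inl rfl)).symm
      have hz2T : y2 ∉ T.support := fun h => hz2x (hTP2 y2 h hy2)
      have hX1 : IndE G (Walk.cons hadjxz2.symm T) := by
        refine hT.consW hadjxz2.symm hz2T ?_
        intro w hw hadj
        by_cases hwx : w = x
        · exact hwx
        exfalso
        by_cases hwb : w = b₁
        · subst hwb
          exact hz2b2 (eb1P2 y2 hy2 hadj.symm)
        · exact (hTint w hw hwx hwb).2.2 y2 (Or.inl hy2) hadj.symm
      have hX2 : IndE G (P₂.dropUntil y2 hz2) := hP2'.dropUntilW hz2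
      have hX3 : IndE G ((P₂.takeUntil y2 hy2).reverse.append (Walk.cons haa23 P₃)) := by
        refine ((hP2'.takeUntilW hy2).reverseW).appendW hc3 ?_ ?_
        · intro v hv hv'
          rw [Walk.support_reverse, List.mem_reverse] at hv
          rw [Walk.support_cons] at hv'
          rcases List.mem_cons.mp hv' with h' | h'
          · exact h'
          · exact absurd h' (hd23 v (P₂.support_takeUntil_subset hy2 hv))
        · intro u w hu hw hua hwa
          intro hadj
          rw [Walk.support_reverse, List.mem_reverse] at hu
          rw [Walk.support_cons] at hw
          rcases List.mem_cons.mp hw with h' | h'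
          · exact hwa h'
          · rcases h23.2 u (P₂.support_takeUntil_subset hy2 hu) w h' hadj with ⟨h1', _⟩ | ⟨h1', _⟩
            · exact hua h1'
            · exact hb2take (h1' ▸ hu)
      have hz2b1 : ¬G.Adj y2 b₁ := fun h => hz2b2 (eb1P2 y2 hy2 h.symm)
      have hz2b3 : ¬G.Adj y2 b₃ := by
        intro h
        rcases h23.2 y2 hy2 b₃ P₃.end_mem_support h with ⟨_, h'⟩ | ⟨h', _⟩
        · exact hne3 h'.symm
        · exact hz2b2 h'
      have pyr12 : PyrPair G y2 b₁ b₂ (Walk.cons hadjxz2.symm T) (P₂.dropUntil y2 hz2) := by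
        constructor
        · intro v hv hv2
          rw [Walk.support_cons] at hv
          rcases List.mem_cons.mp hv with h' | h'
          · exact h'
          · exfalso
            have hm := P₂.support_dropUntil_subset hz2 hv2
            have := hTP2 v h' hm
            exact hxnP2 (this ▸ hm)
        · intro u hu w hw huz hwz hadj
          rw [Walk.support_cons] at hu
          have huT : u ∈ T.support := by
            rcases List.mem_cons.mp hu with h' | h'
            · exact absurd h' huz
            · exact h'
          have hwP2 := P₂.support_dropUntil_subset hz2 hw
          by_cases hux : u = x
          · exfalso
            subst hux
            exact hwz (hattP2 w hwP2 (Or.inr hadj))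
          by_cases hub : u = b₁
          · subst hub
            exact ⟨rfl, eb1P2 w hwP2 hadj⟩
          · exact absurd hadj ((hTint u huT hux hub).2.2 w (Or.inl hwP2))
      have pyr13 : PyrPair G y2 b₁ b₃ (Walk.cons hadjxz2.symm T)
          ((P₂.takeUntil y2 hy2).reverse.append (Walk.cons haa23 P₃)) := by
        constructor
        · intro v hv hv3
          rw [Walk.support_cons] at hv
          rcases List.mem_cons.mp hv with h' | h'
          · exact h'
          exfalso
          rw [Walk.mem_support_append_iff] at hv3
          rcases hv3 with h3' | h3'
          · rw [Walk.support_reverse, List.mem_reverse] at h3'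
            have hm := P₂.support_takeUntil_subset hy2 h3'
            have := hTP2 v h' hm
            exact hxnP2 (this ▸ hm)
          · rw [Walk.support_cons] at h3'
            rcases List.mem_cons.mp h3' with h3'' | h3''
            · subst h3''
              have := hTP2 v h' P₂.start_mem_support
              exact hxnP2 (this ▸ P₂.start_mem_support)
            · have := hTP3 v h' h3''
              exact hxP3 (this ▸ h3'')
        · intro u hu w hw huz hwz hadj
          rw [Walk.support_cons] at hu
          have huT : u ∈ T.support := by
            rcases List.mem_cons.mp hu with h' | h'
            · exact absurd h' huz
            · exact h'
          rw [Walk.mem_support_append_iff] at hw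
          by_cases hux : u = x
          · exfalso
            subst hux
            rcases hw with h3' | h3'
            · rw [Walk.support_reverse, List.mem_reverse] at h3'
              exact hwz (hattP2 w (P₂.support_takeUntil_subset hy2 h3') (Or.inr hadj))
            · rw [Walk.support_cons] at h3'
              rcases List.mem_cons.mp h3' with h3'' | h3''
              · subst h3''
                exact hwz (hattP2 w P₂.start_mem_support (Or.inr hadj))
              · exact hadjP3 w h3'' hadj
          by_cases hub : u = b₁
          · subst hub
            refine ⟨rfl, ?_⟩
            rcases hw with h3' | h3'
            · exfalso
              rw [Walk.support_reverse, List.mem_reverse] at h3'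
              have := eb1P2 w (P₂.support_takeUntil_subset hy2 h3') hadj
              subst this
              exact hb2take h3'
            · rw [Walk.support_cons] at h3'
              rcases List.mem_cons.mp h3' with h3'' | h3''
              · exfalso
                subst h3''
                exact hne2 (eb1P2 w P₂.start_mem_support hadj)
              · exact eb1P3 w h3'' hadj
          · exfalso
            rcases hw with h3' | h3'
            · rw [Walk.support_reverse, List.mem_reverse] at h3'
              exact (hTint u huT hux hub).2.2 w
                (Or.inl (P₂.support_takeUntil_subset hy2 h3')) hadj
            · rw [Walk.support_cons] at h3'
              rcases List.mem_cons.mp h3' with h3'' | h3''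
              · subst h3''
                exact (hTint u huT hux hub).2.2 w (Or.inl P₂.start_mem_support) hadj
              · exact (hTint u huT hux hub).2.2 w (Or.inr h3'') hadj
      have pyr23 : PyrPair G y2 b₂ b₃ (P₂.dropUntil y2 hz2)
          ((P₂.takeUntil y2 hy2).reverse.append (Walk.cons haa23 P₃)) := by
        constructor
        · intro v hv hv3
          rw [Walk.mem_support_append_iff] at hv3
          rcases hv3 with h3' | h3'
          · rw [Walk.support_reverse, List.mem_reverse] at h3'
            exact Aux.eq_of_mem_take_mem_drop hP2.1 hy2 h3' (by exact hv)
          · rw [Walk.support_cons] at h3'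
            rcases List.mem_cons.mp h3' with h3'' | h3''
            · subst h3''
              exact (ha2D2 hv).symm
            · exact absurd h3'' (hd23 v (P₂.support_dropUntil_subset hz2 hv))
        · intro u hu w hw huz hwz hadj
          have huP2 := P₂.support_dropUntil_subset hz2 hu
          rw [Walk.mem_support_append_iff] at hw
          rcases hw with h3' | h3'
          · exfalso
            rw [Walk.support_reverse, List.mem_reverse] at h3'
            have hedge := hP2'.2 u w huP2 (P₂.support_takeUntil_subset hy2 h3') hadj
            rw [Aux.edges_split P₂ hy2] at hedge
            rcases List.mem_append.mp hedge with he | he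
            · have hu2 := Walk.fst_mem_support_of_mem_edges _ he
              exact huz (Aux.eq_of_mem_take_mem_drop hP2.1 hy2 hu2 (by exact hu))
            · have hw2 := Walk.snd_mem_support_of_mem_edges _ he
              exact hwz (Aux.eq_of_mem_take_mem_drop hP2.1 hy2 h3' (by exact hw2))
          · rw [Walk.support_cons] at h3'
            rcases List.mem_cons.mp h3' with h3'' | h3''
            · exfalso
              subst h3''
              have hedge := hP2'.2 u w huP2 P₂.start_mem_support hadj
              rw [Aux.edges_split P₂ hy2] at hedge
              rcases List.mem_append.mp hedge with he | he
              · have hu2 := Walk.fst_mem_support_of_mem_edges _ he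
                exact huz (Aux.eq_of_mem_take_mem_drop hP2.1 hy2 hu2 (by exact hu))
              · have hw2 := Walk.snd_mem_support_of_mem_edges _ he
                exact hwz (ha2D2 (by exact hw2)).symm
            · rcases h23.2 u huP2 w h3'' hadj with ⟨h1', _⟩ | h'
              · exfalso
                exact huz (h1'.trans (ha2D2 (h1' ▸ hu)).symm)
              · exact h'
      have hpyr : IsPyramid G y2 b₁ b₂ b₃ (Walk.cons hadjxz2.symm T)
          (P₂.dropUntil y2 hz2)
          ((P₂.takeUntil y2 hy2).reverse.append (Walk.cons haa23 P₃)) :=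
        ⟨indE_iff.mpr hX1, indE_iff.mpr hX2, indE_iff.mpr hX3, hbb12, hbb23, hbb13,
          fun h => hz2b1 h.1, fun h => hz2b1 h.1, fun h => hz2b3 h.2,
          pyr12, pyr13, pyr23⟩
      refine small_contra hK' hKmin hTp hTle _
        (Or.inl ⟨y2, b₁, b₂, b₃, _, _, _, hpyr, rfl⟩) ?_
      intro v hv
      rw [Finset.mem_union, Finset.mem_union] at hv
      rcases hv with (hv | hv) | hv
      · have := List.mem_toFinset.mp hv
        rw [Walk.support_cons] at this
        rcases List.mem_cons.mp this with h' | h'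
        · exact Or.inr (Or.inl (by rw [h']; exact hy2))
        · exact Or.inl h'
      · exact Or.inr (Or.inl (P₂.support_dropUntil_subset hz2 (List.mem_toFinset.mp hv)))
      · have := List.mem_toFinset.mp hv
        rw [Walk.mem_support_append_iff] at this
        rcases this with h' | h'
        · rw [Walk.support_reverse, List.mem_reverse] at h'
          exact Or.inr (Or.inl (P₂.support_takeUntil_subset hy2 h'))
        · rw [Walk.support_cons] at h'
          rcases List.mem_cons.mp h' with h'' | h''
          · exact Or.inr (Or.inl (by rw [h'']; exact P₂.start_mem_support))
          · exact Or.inr (Or.inr h'')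
    by_cases hB3 : y2 ≠ z2 ∧ y2 ≠ x ∧ z2 ≠ x ∧ G.Adj y2 z2
    · -- triangle prism on {x, z2, y2}
      obtain ⟨hyzne, hy2x, hz2x, hadjyz⟩ := hB3
      have hadjxy2 : G.Adj x y2 := by
        rcases hy2p with h' | h'
        · exact absurd h' hy2x
        · exact h'
      have hadjxz2 : G.Adj x z2 := by
        rcases hz2p with h' | h'
        · exact absurd h' hz2x
        · exact h'
      have hedgeyz : s(y2, z2) ∈ (P₂.dropUntil y2 hy2).edges := by
        have hedge := hP2'.2 y2 z2 hy2 hz2 hadjyz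
        rw [Aux.edges_split P₂ hy2] at hedge
        rcases List.mem_append.mp hedge with he | he
        · exfalso
          have := Walk.snd_mem_support_of_mem_edges _ he
          exact hyzne (hz2take this).symm
        · exact he
      obtain ⟨hz2m, hayz, hdec⟩ := Aux.drop_eq_cons_of_edge hP2.1 hy2 hedgeyz
      have hxnP2 : x ∉ P₂.support := by
        intro h
        rcases Aux.mem_take_or_drop P₂ hy2 h with h' | h'
        · exact hfirst2 x h' (fun he => hy2x he.symm) (Or.inl rfl)
        · rw [hdec, Walk.support_cons] at h'
          rcases List.mem_cons.mp h' with h'' | h''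
          · exact hy2x h''.symm
          · exact hlast2 x (by exact h'') (fun he => hz2x he.symm) (Or.inl rfl)
      have hy2b3 : y2 ≠ b₃ := fun he => (hd23 y2 hy2) (by rw [he]; exact P₃.end_mem_support)
      have hDD : ∀ v ∈ (P₂.dropUntil z2 hz2).support, v ∈ (P₂.dropUntil y2 hy2).support := by
        intro v hv
        rw [hdec, Walk.support_cons]
        exact List.mem_cons_of_mem _ (by exact hv)
      have hmeet23 : ∀ v, v ∈ (P₂.dropUntil z2 hz2).support →
          v ∈ (P₂.takeUntil y2 hy2).support → False := by
        intro v hv hv'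
        have hvy : v = y2 := Aux.eq_of_mem_take_mem_drop hP2.1 hy2 hv' (hDD v hv)
        subst hvy
        exact hyzne (hy2D2 hv)
      have hX3 : IndE G ((P₂.takeUntil y2 hy2).reverse.append (Walk.cons haa23 P₃)) := by
        refine ((hP2'.takeUntilW hy2).reverseW).appendW hc3 ?_ ?_
        · intro v hv hv'
          rw [Walk.support_reverse, List.mem_reverse] at hv
          rw [Walk.support_cons] at hv'
          rcases List.mem_cons.mp hv' with h' | h'
          · exact h'
          · exact absurd h' (hd23 v (P₂.support_takeUntil_subset hy2 hv))
        · intro u w hu hw hua hwa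
          intro hadj
          rw [Walk.support_reverse, List.mem_reverse] at hu
          rw [Walk.support_cons] at hw
          rcases List.mem_cons.mp hw with h' | h'
          · exact hwa h'
          · rcases h23.2 u (P₂.support_takeUntil_subset hy2 hu) w h' hadj with ⟨h1', _⟩ | ⟨h1', _⟩
            · exact hua h1'
            · exact hb2take (h1' ▸ hu)
      have hXw : ∀ w, w ∈ ((P₂.takeUntil y2 hy2).reverse.append (Walk.cons haa23 P₃)).support →
          w ∈ (P₂.takeUntil y2 hy2).support ∨ w ∈ P₃.support := by
        intro w hw
        rw [Walk.mem_support_append_iff] at hw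
        rcases hw with h' | h'
        · rw [Walk.support_reverse, List.mem_reverse] at h'
          exact Or.inl h'
        · rw [Walk.support_cons] at h'
          rcases List.mem_cons.mp h' with h'' | h''
          · exact Or.inl (by rw [h'']; exact Walk.start_mem_support _)
          · exact Or.inr h''
      have pp12 : PriPair G x b₁ z2 b₂ T (P₂.dropUntil z2 hz2) := by
        constructor
        · intro v hv hm
          have hmP2 := P₂.support_dropUntil_subset hz2 hm
          exact hxnP2 ((hTP2 v hv hmP2) ▸ hmP2)
        · intro u hu w hw hadj
          have hwP2 := P₂.support_dropUntil_subset hz2 hw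
          by_cases hux : u = x
          · subst hux
            left
            refine ⟨rfl, ?_⟩
            by_contra hwzne
            exact hlast2 w hw hwzne (Or.inr hadj)
          by_cases hub : u = b₁
          · subst hub
            exact Or.inr ⟨rfl, eb1P2 w hwP2 hadj⟩
          · exact absurd hadj ((hTint u hu hux hub).2.2 w (Or.inl hwP2))
      have pp13 : PriPair G x b₁ y2 b₃ T
          ((P₂.takeUntil y2 hy2).reverse.append (Walk.cons haa23 P₃)) := by
        constructor
        · intro v hv hm
          rcases hXw v hm with h' | h'
          · have hmP2 := P₂.support_takeUntil_subset hy2 h'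
            exact hxnP2 ((hTP2 v hv hmP2) ▸ hmP2)
          · exact hxP3 ((hTP3 v hv h') ▸ h')
        · intro u hu w hw hadj
          have hw' := hXw w hw
          by_cases hux : u = x
          · subst hux
            rcases hw' with h' | h'
            · left
              refine ⟨rfl, ?_⟩
              by_contra hwy
              exact hfirst2 w h' hwy (Or.inr hadj)
            · exact absurd hadj (hadjP3 w h')
          by_cases hub : u = b₁
          · subst hub
            rcases hw' with h' | h'
            · exfalso
              have := eb1P2 w (P₂.support_takeUntil_subset hy2 h') hadj
              subst this
              exact hb2take h'
            · exact Or.inr ⟨rfl, eb1P3 w h' hadj⟩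
          · exfalso
            rcases hw' with h' | h'
            · exact (hTint u hu hux hub).2.2 w
                (Or.inl (P₂.support_takeUntil_subset hy2 h')) hadj
            · exact (hTint u hu hux hub).2.2 w (Or.inr h') hadj
      have pp23 : PriPair G z2 b₂ y2 b₃ (P₂.dropUntil z2 hz2)
          ((P₂.takeUntil y2 hy2).reverse.append (Walk.cons haa23 P₃)) := by
        constructor
        · intro v hv hm
          rcases hXw v hm with h' | h'
          · exact hmeet23 v hv h'
          · exact hd23 v (P₂.support_dropUntil_subset hz2 hv) h'
        · intro u hu w hw hadj
          have huP2 := P₂.support_dropUntil_subset hz2 hu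
          rcases hXw w hw with h' | h'
          · have hedge := hP2'.2 u w huP2 (P₂.support_takeUntil_subset hy2 h') hadj
            rw [Aux.edges_split P₂ hy2] at hedge
            rcases List.mem_append.mp hedge with he | he
            · exfalso
              have hu2 := Walk.fst_mem_support_of_mem_edges _ he
              exact hmeet23 u hu hu2
            · have hw2 := Walk.snd_mem_support_of_mem_edges _ he
              have hwy : w = y2 := Aux.eq_of_mem_take_mem_drop hP2.1 hy2 h' hw2
              left
              refine ⟨?_, hwy⟩
              have heu : s(y2, u) ∈ (P₂.dropUntil y2 hy2).edges := by
                have h5 : s(u, y2) ∈ (P₂.dropUntil y2 hy2).edges := hwy ▸ he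
                rwa [Sym2.eq_swap] at h5
              rw [hdec, Walk.edges_cons] at heu
              rcases List.mem_cons.mp heu with h'' | h''
              · rcases Sym2.eq_iff.mp h'' with ⟨_, hz⟩ | ⟨hy, _⟩
                · exact hz
                · exact absurd hy hyzne
              · exfalso
                have := Walk.fst_mem_support_of_mem_edges _ h''
                exact hyzne (hy2D2 (by exact this))
          · rcases h23.2 u huP2 w h' hadj with ⟨h1', _⟩ | h''
            · exfalso
              have hza : z2 = a₂ := ha2D2 (h1' ▸ hu)
              subst hza
              rcases Aux.mem_take_or_drop P₂ hz2 hy2 with h'' | h''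
              · rw [Aux.takeUntil_start] at h''
                rw [Walk.mem_support_nil_iff] at h''
                exact hyzne h''
              · exact hyzne (hy2D2 (by exact h''))
            · exact Or.inr h''
      have hprism : IsPrism G x z2 y2 b₁ b₂ b₃ T (P₂.dropUntil z2 hz2)
          ((P₂.takeUntil y2 hy2).reverse.append (Walk.cons haa23 P₃)) :=
        ⟨indE_iff.mpr hT, indE_iff.mpr (hP2'.dropUntilW hz2), indE_iff.mpr hX3,
          hadjxz2, hadjyz.symm, hadjxy2, hbb12, hbb23, hbb13,
          hxb1, hz2b2, hy2b3, pp12, pp13, pp23⟩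
      refine small_contra hK' hKmin hTp hTle _
        (Or.inr ⟨x, z2, y2, b₁, b₂, b₃, _, _, _, hprism, rfl⟩) ?_
      intro v hv
      rw [Finset.mem_union, Finset.mem_union] at hv
      rcases hv with (hv | hv) | hv
      · exact Or.inl (List.mem_toFinset.mp hv)
      · exact Or.inr (Or.inl (P₂.support_dropUntil_subset hz2 (List.mem_toFinset.mp hv)))
      · rcases hXw v (List.mem_toFinset.mp hv) with h' | h'
        · exact Or.inr (Or.inl (P₂.support_takeUntil_subset hy2 h'))
        · exact Or.inr (Or.inr h')
    · -- pyramid with apex x, paths T, W2, WR ++ (a₂a₃ ++ P₃)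
      have hK1 : ∀ v ∈ (P₂.takeUntil y2 hy2).support,
          v ∈ (P₂.dropUntil z2 hz2).support → v = x := by
        by_cases hyz : y2 = z2
        · have hz2x : z2 = x := by
            by_contra h'
            exact hB1 ⟨hyz, h'⟩
          subst hyz
          intro v hv hd
          exact (Aux.eq_of_mem_take_mem_drop hP2.1 hz2 (by exact hv) hd).trans hz2x
        · intro v hv hd
          have hz2dropy : z2 ∈ (P₂.dropUntil y2 hy2).support := by
            rcases Aux.mem_take_or_drop P₂ hy2 hz2 with h' | h'
            · exact absurd (hz2take h').symm hyz
            · exact h'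
          have hdd := Aux.drop_drop hP2.1 hy2 hz2dropy hz2
          have hv2 : v ∈ (P₂.dropUntil y2 hy2).support := by
            rw [hdd] at hd
            exact (P₂.dropUntil y2 hy2).support_dropUntil_subset hz2dropy hd
          have hvy : v = y2 := Aux.eq_of_mem_take_mem_drop hP2.1 hy2 hv hv2
          subst hvy
          exact absurd (hy2D2 hd) hyz
      have hEC : ∀ u ∈ (P₂.dropUntil z2 hz2).support, u ≠ x →
          ∀ w ∈ (P₂.takeUntil y2 hy2).support, w ≠ x → ¬G.Adj u w := by
        intro u hu hux w hw hwx hadj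
        have hedge := hP2'.2 u w (P₂.support_dropUntil_subset hz2 hu)
          (P₂.support_takeUntil_subset hy2 hw) hadj
        rw [Aux.edges_split P₂ hy2] at hedge
        rcases List.mem_append.mp hedge with he | he
        · have hu2 := Walk.fst_mem_support_of_mem_edges _ he
          exact hux (hK1 u hu2 hu)
        · have hw2 := Walk.snd_mem_support_of_mem_edges _ he
          have hwy : w = y2 := Aux.eq_of_mem_take_mem_drop hP2.1 hy2 hw hw2
          have hy2x : y2 ≠ x := hwy ▸ hwx
          have hyz : y2 ≠ z2 := by
            intro h'
            have : z2 = x := by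
              by_contra h''
              exact hB1 ⟨h', h''⟩
            exact hy2x (h'.trans this)
          have heu : s(y2, u) ∈ (P₂.dropUntil y2 hy2).edges := by
            have h5 : s(u, y2) ∈ (P₂.dropUntil y2 hy2).edges := hwy ▸ he
            rwa [Sym2.eq_swap] at h5
          obtain ⟨hu', hadj2, hdec2⟩ := Aux.drop_eq_cons_of_edge hP2.1 hy2 heu
          have hz2dropy : z2 ∈ (P₂.dropUntil y2 hy2).support := by
            rcases Aux.mem_take_or_drop P₂ hy2 hz2 with h' | h'
            · exact absurd (hz2take h').symm hyz
            · exact h'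
          rw [hdec2, Walk.support_cons] at hz2dropy
          rcases List.mem_cons.mp hz2dropy with h' | h'
          · exact hyz h'.symm
          · by_cases huz : u = z2
            · refine hB3 ⟨hyz, hy2x, ?_, ?_⟩
              · exact huz ▸ hux
              · exact huz ▸ hadj2
            · exact Aux.mutex hP2.1 hz2 hu' huz (by exact hu) h'
      have hX3 : IndE G (WR.append (Walk.cons haa23 P₃)) := by
        refine hWR.appendW hc3 ?_ ?_
        · intro v hv hv'
          rw [Walk.support_cons] at hv'
          rcases List.mem_cons.mp hv' with h' | h'
          · exact h'
          · exfalso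
            rcases (hWRs' v).mp hv with h'' | h''
            · exact hxP3 (h'' ▸ h')
            · exact hd23 v (P₂.support_takeUntil_subset hy2 h'') h'
        · intro u w hu hw hua hwa
          intro hadj
          rw [Walk.support_cons] at hw
          rcases List.mem_cons.mp hw with h' | h'
          · exact hwa h'
          rcases (hWRs' u).mp hu with h'' | h''
          · subst h''
            exact hadjP3 w h' hadj
          · rcases h23.2 u (P₂.support_takeUntil_subset hy2 h'') w h' hadj with
              ⟨h1', _⟩ | ⟨h1', _⟩
            · exact hua h1'
            · exact hb2take (h1' ▸ h'')
      have hXw3 : ∀ w, w ∈ (WR.append (Walk.cons haa23 P₃)).support →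
          w = x ∨ w ∈ (P₂.takeUntil y2 hy2).support ∨ w ∈ P₃.support := by
        intro w hw
        rw [Walk.mem_support_append_iff] at hw
        rcases hw with h' | h'
        · rcases (hWRs' w).mp h' with h'' | h''
          · exact Or.inl h''
          · exact Or.inr (Or.inl h'')
        · rw [Walk.support_cons] at h'
          rcases List.mem_cons.mp h' with h'' | h''
          · exact Or.inr (Or.inl (by rw [h'']; exact Walk.start_mem_support _))
          · exact Or.inr (Or.inr h'')
      have pyr13 : PyrPair G x b₁ b₃ T (WR.append (Walk.cons haa23 P₃)) := by
        constructor
        · intro v hv hv3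
          rcases hXw3 v hv3 with h' | h' | h'
          · exact h'
          · exact hTP2 v hv (P₂.support_takeUntil_subset hy2 h')
          · exact hTP3 v hv h'
        · intro u hu w hw hux hwx hadj
          rcases hXw3 w hw with h' | h' | h'
          · exact absurd h' hwx
          · exfalso
            by_cases hub : u = b₁
            · subst hub
              have := eb1P2 w (P₂.support_takeUntil_subset hy2 h') hadj
              subst this
              exact hb2take h'
            · exact (hTint u hu hux hub).2.2 w
                (Or.inl (P₂.support_takeUntil_subset hy2 h')) hadj
          · by_cases hub : u = b₁
            · subst hub
              exact ⟨rfl, eb1P3 w h' hadj⟩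
            · exact absurd hadj ((hTint u hu hux hub).2.2 w (Or.inr h'))
      have pyr23 : PyrPair G x b₂ b₃ W2 (WR.append (Walk.cons haa23 P₃)) := by
        constructor
        · intro v hv hv3
          rcases (hW2s v).mp hv with h'' | h''
          · exact h''
          rcases hXw3 v hv3 with h' | h' | h'
          · exact h'
          · exact hK1 v h' h''
          · exact absurd h' (hd23 v (P₂.support_dropUntil_subset hz2 h''))
        · intro u hu w hw hux hwx hadj
          have huD2 : u ∈ (P₂.dropUntil z2 hz2).support := by
            rcases (hW2s u).mp hu with h' | h'
            · exact absurd h' hux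
            · exact h'
          rcases hXw3 w hw with h' | h' | h'
          · exact absurd h' hwx
          · exact absurd hadj (hEC u huD2 hux w h' hwx)
          · rcases h23.2 u (P₂.support_dropUntil_subset hz2 huD2) w h' hadj with
              ⟨h1', _⟩ | h''
            · exfalso
              have hza : z2 = a₂ := ha2D2 (h1' ▸ huD2)
              have hz2x : z2 ≠ x := by
                intro h''
                exact hux (h1'.trans (hza.symm.trans h''))
              subst hza
              refine hB1 ⟨?_, hz2x⟩
              rcases Aux.mem_take_or_drop P₂ hz2 hy2 with h'' | h''
              · rw [Aux.takeUntil_start] at h''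
                rw [Walk.mem_support_nil_iff] at h''
                exact h''
              · exact hy2D2 (by exact h'')
            · exact h''
      have hpyr : IsPyramid G x b₁ b₂ b₃ T W2 (WR.append (Walk.cons haa23 P₃)) :=
        ⟨indE_iff.mpr hT, indE_iff.mpr hW2, indE_iff.mpr hX3, hbb12, hbb23, hbb13,
          fun h => hxb2 h.2, fun h => hxb3 h.2, fun h => hxb2 h.1,
          pyrTW2, pyr13, pyr23⟩
      refine small_contra hK' hKmin hTp hTle _
        (Or.inl ⟨x, b₁, b₂, b₃, _, _, _, hpyr, rfl⟩) ?_
      intro v hv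
      rw [Finset.mem_union, Finset.mem_union] at hv
      rcases hv with (hv | hv) | hv
      · exact Or.inl (List.mem_toFinset.mp hv)
      · rcases (hW2s v).mp (List.mem_toFinset.mp hv) with h' | h'
        · exact Or.inl (by rw [h']; exact T.start_mem_support)
        · exact Or.inr (Or.inl (P₂.support_dropUntil_subset hz2 h'))
      · rcases hXw3 v (List.mem_toFinset.mp hv) with h' | h' | h'
        · exact Or.inl (by rw [h']; exact T.start_mem_support)
        · exact Or.inr (Or.inl (P₂.support_takeUntil_subset hy2 h'))
        · exact Or.inr (Or.inr h')

/-- If `K` is a smallest induced pyramid or prism of `G` and `K` is a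
prism formed by `P₁, P₂, P₃` with triangles `{a₁,a₂,a₃}` and `{b₁,b₂,b₃}`, and `R₁` is
any shortest path from `a₁` to `b₁` whose interior vertices are not adjacent to `b₂` or
`b₃`, then `R₁, P₂, P₃` form an induced prism of `G` with exactly `|V(K)|` vertices,
with triangles `{a₁,a₂,a₃}` and `{b₁,b₂,b₃}`. -/
theorem smallest_prism_replace_path
    {V : Type*} [Fintype V] [DecidableEq V] (G : SimpleGraph V)
    (a₁ a₂ a₃ b₁ b₂ b₃ : V)
    (P₁ : G.Walk a₁ b₁) (P₂ : G.Walk a₂ b₂) (P₃ : G.Walk a₃ b₃)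
    (hK : IsPrism G a₁ a₂ a₃ b₁ b₂ b₃ P₁ P₂ P₃)
    (hKmin : ∀ S : Finset V, HasPyramidOn G S ∨ HasPrismOn G S →
      (P₁.support.toFinset ∪ P₂.support.toFinset ∪ P₃.support.toFinset).card ≤ S.card)
    (R₁ : G.Walk a₁ b₁) (hR₁ : R₁.IsPath)
    (hR₁int : ∀ x ∈ R₁.support, x ≠ a₁ → x ≠ b₁ → ¬ G.Adj x b₂ ∧ ¬ G.Adj x b₃)
    (hR₁short : ∀ Q : G.Walk a₁ b₁, Q.IsPath →
      (∀ x ∈ Q.support, x ≠ a₁ → x ≠ b₁ → ¬ G.Adj x b₂ ∧ ¬ G.Adj x b₃) →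
      R₁.length ≤ Q.length) :
    IsPrism G a₁ a₂ a₃ b₁ b₂ b₃ R₁ P₂ P₃ ∧
    (R₁.support.toFinset ∪ P₂.support.toFinset ∪ P₃.support.toFinset).card =
      (P₁.support.toFinset ∪ P₂.support.toFinset ∪ P₃.support.toFinset).card := by
  classical
  obtain ⟨hP1, hP2, hP3, haa12, haa23, haa13, hbb12, hbb23, hbb13, hne1, hne2, hne3, h12, h13, h23⟩ := hK
  have hK' : IsPrism G a₁ a₂ a₃ b₁ b₂ b₃ P₁ P₂ P₃ :=
    ⟨hP1, hP2, hP3, haa12, haa23, haa13, hbb12, hbb23, hbb13, hne1, hne2, hne3, h12, h13, h23⟩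
  have hP1int : ∀ v ∈ P₁.support, v ≠ a₁ → v ≠ b₁ → ¬G.Adj v b₂ ∧ ¬G.Adj v b₃ := by
    intro v hv hva hvb
    constructor
    · intro hadj
      rcases h12.2 v hv b₂ P₂.end_mem_support hadj with ⟨h, _⟩ | ⟨h, _⟩
      · exact hva h
      · exact hvb h
    · intro hadj
      rcases h13.2 v hv b₃ P₃.end_mem_support hadj with ⟨h, _⟩ | ⟨h, _⟩
      · exact hva h
      · exact hvb h
  have hlen : R₁.length ≤ P₁.length := hR₁short P₁ hP1.1 hP1int
  have hR1chl : IndE G R₁ := by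
    refine ⟨hR₁, ?_⟩
    intro x y hx hy hadj
    by_contra hne
    obtain ⟨Q, hQp, hQlt, hQsub⟩ := Aux.shortcut hR₁ hx hy hadj hne
    have := hR₁short Q hQp (fun v hv hva hvb => hR₁int v (hQsub v hv) hva hvb)
    omega
  have hmain : ∀ v ∈ R₁.support, v ≠ a₁ → v ≠ b₁ →
      v ∉ P₂.support ∧ v ∉ P₃.support ∧
      ∀ u, u ∈ P₂.support ∨ u ∈ P₃.support → ¬G.Adj v u := by
    by_contra hbad
    push_neg at hbad
    obtain ⟨v0, hv0, hv0a, hv0b, hv0bad⟩ := hbad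
    have hex : ∃ v ∈ R₁.support, v ≠ a₁ ∧ v ≠ b₁ ∧
        ((∃ u ∈ P₂.support, u = v ∨ G.Adj v u) ∨ (∃ u ∈ P₃.support, u = v ∨ G.Adj v u)) := by
      refine ⟨v0, hv0, hv0a, hv0b, ?_⟩
      by_cases hm2 : v0 ∈ P₂.support
      · exact Or.inl ⟨v0, hm2, Or.inl rfl⟩
      by_cases hm3 : v0 ∈ P₃.support
      · exact Or.inr ⟨v0, hm3, Or.inl rfl⟩
      obtain ⟨u, hu, hadj⟩ := hv0bad hm2 hm3
      rcases hu with hu | hu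
      · exact Or.inl ⟨u, hu, Or.inr hadj⟩
      · exact Or.inr ⟨u, hu, Or.inr hadj⟩
    obtain ⟨x, hx, hpredx, hlast⟩ := Aux.exists_last _ hR₁ hex
    obtain ⟨hxa1, hxb1, hxatt⟩ := hpredx
    set T := R₁.dropUntil x hx with hTdef
    have hT : IndE G T := hR1chl.dropUntilW hx
    have hTle : T.length + 1 ≤ P₁.length := by
      have h1 : (R₁.takeUntil x hx).length + T.length = R₁.length := by
        conv_rhs => rw [← R₁.take_spec hx]
        rw [Walk.length_append]
      have h2 : (R₁.takeUntil x hx).length ≠ 0 := by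
        intro h0
        exact hxa1 (Walk.eq_of_length_eq_zero h0).symm
      omega
    have hxb2 : ¬ G.Adj x b₂ := (hR₁int x hx hxa1 hxb1).1
    have hxb3 : ¬ G.Adj x b₃ := (hR₁int x hx hxa1 hxb1).2
    have hTint : ∀ v ∈ T.support, v ≠ x → v ≠ b₁ →
        v ∉ P₂.support ∧ v ∉ P₃.support ∧
        ∀ u, u ∈ P₂.support ∨ u ∈ P₃.support → ¬ G.Adj v u := by
      intro v hv hvx hvb
      have hva : v ≠ a₁ := by
        intro he
        subst he
        exact hxa1 (Aux.eq_of_mem_take_mem_drop hR₁ hx (Walk.start_mem_support _) hv).symm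
      have hnp := hlast v hv hvx
      refine ⟨?_, ?_, ?_⟩
      · intro hm
        exact hnp ⟨hva, hvb, Or.inl ⟨v, hm, Or.inl rfl⟩⟩
      · intro hm
        exact hnp ⟨hva, hvb, Or.inr ⟨v, hm, Or.inl rfl⟩⟩
      · intro u hu hadj
        rcases hu with hu | hu
        · exact hnp ⟨hva, hvb, Or.inl ⟨u, hu, Or.inr hadj⟩⟩
        · exact hnp ⟨hva, hvb, Or.inr ⟨u, hu, Or.inr hadj⟩⟩
    rcases hxatt with hatt | hatt
    · exact nobad hK' hKmin T hT hTle hxa1 hxb2 hxb3 hTint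
        (by obtain ⟨u, hu, h⟩ := hatt; exact ⟨u, hu, by rcases h with h | h; exact Or.inl h; exact Or.inr h⟩)
    · refine nobad hK'.swap23 (fun S hS => ?_) T hT hTle hxa1 hxb3 hxb2
        (fun v hv h1 h2 => ⟨(hTint v hv h1 h2).2.1, (hTint v hv h1 h2).1, fun u hu =>
          (hTint v hv h1 h2).2.2 u hu.symm⟩)
        (by obtain ⟨u, hu, h⟩ := hatt; exact ⟨u, hu, h⟩)
      have : P₁.support.toFinset ∪ P₃.support.toFinset ∪ P₂.support.toFinset
          = P₁.support.toFinset ∪ P₂.support.toFinset ∪ P₃.support.toFinset :=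
        Finset.union_right_comm _ _ _
      rw [this]
      exact hKmin S hS
  -- assemble the prism R₁, P₂, P₃
  have hpp2 : PriPair G a₁ b₁ a₂ b₂ R₁ P₂ := by
    constructor
    · intro v hv
      by_cases hva : v = a₁
      · subst hva; exact h12.1 v P₁.start_mem_support
      by_cases hvb : v = b₁
      · subst hvb; exact h12.1 v P₁.end_mem_support
      · exact (hmain v hv hva hvb).1
    · intro v hv u hu hadj
      by_cases hva : v = a₁
      · subst hva
        rcases h12.2 v P₁.start_mem_support u hu hadj with h | ⟨h1', h2'⟩
        · exact Or.inl h
        · exact absurd h1' hne1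
      by_cases hvb : v = b₁
      · subst hvb
        rcases h12.2 v P₁.end_mem_support u hu hadj with ⟨h1', h2'⟩ | h
        · exact absurd h1'.symm hne1
        · exact Or.inr h
      · exact absurd hadj ((hmain v hv hva hvb).2.2 u (Or.inl hu))
  have hpp3 : PriPair G a₁ b₁ a₃ b₃ R₁ P₃ := by
    constructor
    · intro v hv
      by_cases hva : v = a₁
      · subst hva; exact h13.1 v P₁.start_mem_support
      by_cases hvb : v = b₁
      · subst hvb; exact h13.1 v P₁.end_mem_support
      · exact (hmain v hv hva hvb).2.1
    · intro v hv u hu hadj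
      by_cases hva : v = a₁
      · subst hva
        rcases h13.2 v P₁.start_mem_support u hu hadj with h | ⟨h1', h2'⟩
        · exact Or.inl h
        · exact absurd h1' hne1
      by_cases hvb : v = b₁
      · subst hvb
        rcases h13.2 v P₁.end_mem_support u hu hadj with ⟨h1', h2'⟩ | h
        · exact absurd h1'.symm hne1
        · exact Or.inr h
      · exact absurd hadj ((hmain v hv hva hvb).2.2 u (Or.inr hu))
  have hprism : IsPrism G a₁ a₂ a₃ b₁ b₂ b₃ R₁ P₂ P₃ :=
    ⟨indE_iff.mpr hR1chl, hP2, hP3, haa12, haa23, haa13, hbb12, hbb23, hbb13,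
      hne1, hne2, hne3, hpp2, hpp3, h23⟩
  refine ⟨hprism, ?_⟩
  -- cardinality
  have hd12 : Disjoint R₁.support.toFinset P₂.support.toFinset := by
    rw [Finset.disjoint_left]
    intro a ha hb
    exact hpp2.1 a (List.mem_toFinset.mp ha) (List.mem_toFinset.mp hb)
  have hd13 : Disjoint R₁.support.toFinset P₃.support.toFinset := by
    rw [Finset.disjoint_left]
    intro a ha hb
    exact hpp3.1 a (List.mem_toFinset.mp ha) (List.mem_toFinset.mp hb)
  have hd23 : Disjoint P₂.support.toFinset P₃.support.toFinset := by
    rw [Finset.disjoint_left]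
    intro a ha hb
    exact h23.1 a (List.mem_toFinset.mp ha) (List.mem_toFinset.mp hb)
  have hd12' : Disjoint P₁.support.toFinset P₂.support.toFinset := by
    rw [Finset.disjoint_left]
    intro a ha hb
    exact h12.1 a (List.mem_toFinset.mp ha) (List.mem_toFinset.mp hb)
  have hd13' : Disjoint P₁.support.toFinset P₃.support.toFinset := by
    rw [Finset.disjoint_left]
    intro a ha hb
    exact h13.1 a (List.mem_toFinset.mp ha) (List.mem_toFinset.mp hb)
  have hcR : (R₁.support.toFinset ∪ P₂.support.toFinset ∪ P₃.support.toFinset).card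
      = R₁.length + P₂.length + P₃.length + 3 := by
    rw [Finset.card_union_of_disjoint, Finset.card_union_of_disjoint hd12]
    · rw [Aux.card_support_of_path hR₁, Aux.card_support_of_path hP2.1,
        Aux.card_support_of_path hP3.1]
      ring
    · rw [Finset.disjoint_union_left]
      exact ⟨hd13, hd23⟩
  have hcP : (P₁.support.toFinset ∪ P₂.support.toFinset ∪ P₃.support.toFinset).card
      = P₁.length + P₂.length + P₃.length + 3 := by
    rw [Finset.card_union_of_disjoint, Finset.card_union_of_disjoint hd12']
    · rw [Aux.card_support_of_path hP1.1, Aux.card_support_of_path hP2.1,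
        Aux.card_support_of_path hP3.1]
      ring
    · rw [Finset.disjoint_union_left]
      exact ⟨hd13', hd23⟩
  have hge := hKmin (R₁.support.toFinset ∪ P₂.support.toFinset ∪ P₃.support.toFinset)
    (Or.inr ⟨a₁, a₂, a₃, b₁, b₂, b₃, R₁, P₂, P₃, hprism, rfl⟩)
  omega
end

section
/- Let H be a connected simple graph and let V1, V2, V3 be non-empty subsets of V(H). Then H has an induced subgraph F such that either: (1) F is a chordless path such that, up to a permutation of V1, V2, V3, one end of F is in V1, the other end is in V3, some vertex of F is in V2 and no interior vertex of F is in V1 ∪ V3; or (2) F consists of three chordless paths F1, F2, F3 of length at least 1 such that: for i = 1,2,3, Fi joins a common vertex f to a vertex vi ∈ Vi; for 1 ≤ i < j ≤ 3, V(Fi) ∩ V(Fj) = {f} and there is no edge between Fi∖f and Fj∖f; and F∖{v1, v2, v3} contains no vertex of V1 ∪ V2 ∪ V3; or (3) F consists of three vertex-disjoint chordless paths F1, F2, F3 (possibly of length 0) such that: for i = 1,2,3, Fi joins a vertex wi to a vertex vi ∈ Vi; the vertices w1, w2, w3 are pairwise adjacent; for 1 ≤ i < j ≤ 3 there is no edge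 between Fi and Fj other than wiwj; and F∖{v1, v2, v3} contains no vertex of V1 ∪ V2 ∪ V3. -/
open SimpleGraph

namespace ThreeExits
open SimpleGraph Walk
variable {V : Type*} {G : SimpleGraph V}

lemma ind_nil (u : V) : IsInducedPathW G (Walk.nil : G.Walk u u) := by
  refine ⟨Walk.IsPath.nil, ?_⟩
  intro x y hx hy hadj
  simp only [Walk.support_nil, List.mem_singleton] at hx hy
  subst hx; subst hy
  exact absurd hadj (G.irrefl)

lemma ind_reverse {u v : V} {p : G.Walk u v} (h : IsInducedPathW G p) :
    IsInducedPathW G p.reverse := by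
  refine ⟨h.1.reverse, ?_⟩
  intro x y hx hy hadj
  rw [Walk.support_reverse, List.mem_reverse] at hx hy
  rw [Walk.toSubgraph_reverse]
  exact h.2 x y hx hy hadj

lemma path_loop_nil {u : V} {p : G.Walk u u} (hp : p.IsPath) : p = Walk.nil := by
  cases p with
  | nil => rfl
  | cons h q =>
    exfalso
    have := hp.support_nodup
    simp only [Walk.support_cons, List.nodup_cons] at this
    exact this.1 q.end_mem_support

lemma ind_cons {u v x : V} (h : G.Adj x u) {p : G.Walk u v} (hp : IsInducedPathW G p)
    (hx : x ∉ p.support) (hnb : ∀ z ∈ p.support, G.Adj x z → z = u) :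
    IsInducedPathW G (Walk.cons h p) := by
  refine ⟨hp.1.cons hx, ?_⟩
  intro a b ha hb hadj
  simp only [Walk.support_cons, List.mem_cons] at ha hb
  simp only [Walk.toSubgraph, Subgraph.sup_adj, subgraphOfAdj_adj]
  rcases ha with rfl | ha
  · rcases hb with rfl | hb
    · exact absurd hadj (G.irrefl)
    · have := hnb b hb hadj
      subst this
      exact Or.inl rfl
  · rcases hb with rfl | hb
    · have := hnb a ha hadj.symm
      subst this
      left; exact Sym2.eq_swap
    · exact Or.inr (hp.2 a b ha hb hadj)

/-- appending two induced paths meeting only at the joint, with no cross edges. -/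
lemma ind_append {u f v : V} {p : G.Walk u f} {q : G.Walk f v}
    (hp : IsInducedPathW G p) (hq : IsInducedPathW G q)
    (hmeet : ∀ z, z ∈ p.support → z ∈ q.support → z = f)
    (hcross : ∀ a ∈ p.support, ∀ b ∈ q.support, a ≠ f → b ≠ f → ¬G.Adj a b) :
    IsInducedPathW G (p.append q) := by
  have hpath : (p.append q).IsPath := by
    rw [Walk.isPath_def, Walk.support_append, List.nodup_append]
    refine ⟨hp.1.support_nodup, hq.1.support_nodup.tail, ?_⟩
    rintro a hap b haq rfl
    have haq' : a ∈ q.support := List.mem_of_mem_tail haq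
    have : a = f := hmeet a hap haq'
    subst this
    have := hq.1.support_nodup
    rw [q.support_eq_cons, List.nodup_cons] at this
    exact this.1 haq
  refine ⟨hpath, ?_⟩
  intro a b ha hb hadj
  rw [Walk.mem_support_append_iff] at ha hb
  rw [Walk.toSubgraph_append, Subgraph.sup_adj]
  rcases ha with ha | ha <;> rcases hb with hb | hb
  · exact Or.inl (hp.2 a b ha hb hadj)
  · by_cases haf : a = f
    · subst haf
      exact Or.inr (hq.2 a b q.start_mem_support hb hadj)
    · by_cases hbf : b = f
      · subst hbf
        exact Or.inl (hp.2 a b ha p.end_mem_support hadj)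
      · exact absurd hadj (hcross a ha b hb haf hbf)
  · by_cases hbf : b = f
    · subst hbf
      exact Or.inr (hq.2 a b ha q.start_mem_support hadj)
    · by_cases haf : a = f
      · subst haf
        exact Or.inl (hp.2 a b p.end_mem_support hb hadj)
      · exact absurd hadj.symm (hcross b hb a ha hbf haf)
  · exact Or.inr (hq.2 a b ha hb hadj)

/-- From a path decomposed as an append, the two supports meet only at the joint. -/
lemma meet_of_append_path {u f v : V} {p : G.Walk u f} {q : G.Walk f v}
    (h : (p.append q).IsPath) : ∀ z, z ∈ p.support → z ∈ q.support → z = f := by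
  intro z hzp hzq
  by_contra hzf
  have hnd := h.support_nodup
  rw [Walk.support_append, List.nodup_append] at hnd
  refine hnd.2.2 z hzp z ?_ rfl
  rw [q.support_eq_cons] at hzq
  rw [List.mem_cons] at hzq
  rcases hzq with rfl | hzq
  · exact absurd rfl hzf
  · exact hzq

lemma ind_of_append_left {u f v : V} {p : G.Walk u f} {q : G.Walk f v}
    (h : IsInducedPathW G (p.append q)) : IsInducedPathW G p := by
  have hmeet := meet_of_append_path h.1
  refine ⟨h.1.of_append_left, ?_⟩
  intro a b ha hb hadj
  have := h.2 a b (by rw [Walk.mem_support_append_iff]; exact Or.inl ha)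
    (by rw [Walk.mem_support_append_iff]; exact Or.inl hb) hadj
  rw [Walk.toSubgraph_append, Subgraph.sup_adj] at this
  rcases this with h' | h'
  · exact h'
  · exfalso
    have hav : a ∈ q.support := by
      have := h'.fst_mem; rwa [Walk.mem_verts_toSubgraph] at this
    have hbv : b ∈ q.support := by
      have := h'.snd_mem; rwa [Walk.mem_verts_toSubgraph] at this
    have ha' := hmeet a ha hav
    have hb' := hmeet b hb hbv
    subst ha'; subst hb'
    exact G.irrefl hadj

lemma ind_of_append_right {u f v : V} {p : G.Walk u f} {q : G.Walk f v}
    (h : IsInducedPathW G (p.append q)) : IsInducedPathW G q := by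
  have hmeet := meet_of_append_path h.1
  refine ⟨h.1.of_append_right, ?_⟩
  intro a b ha hb hadj
  have := h.2 a b (by rw [Walk.mem_support_append_iff]; exact Or.inr ha)
    (by rw [Walk.mem_support_append_iff]; exact Or.inr hb) hadj
  rw [Walk.toSubgraph_append, Subgraph.sup_adj] at this
  rcases this with h' | h'
  · exfalso
    have hav : a ∈ p.support := by
      have := h'.fst_mem; rwa [Walk.mem_verts_toSubgraph] at this
    have hbv : b ∈ p.support := by
      have := h'.snd_mem; rwa [Walk.mem_verts_toSubgraph] at this
    have ha' := hmeet a hav ha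
    have hb' := hmeet b hbv hb
    subst ha'; subst hb'
    exact G.irrefl hadj
  · exact h'

lemma cross_of_append_ind {u f v : V} {p : G.Walk u f} {q : G.Walk f v}
    (h : IsInducedPathW G (p.append q)) :
    ∀ a ∈ p.support, ∀ b ∈ q.support, a ≠ f → b ≠ f → ¬G.Adj a b := by
  have hmeet := meet_of_append_path h.1
  intro a ha b hb haf hbf hadj
  have := h.2 a b (by rw [Walk.mem_support_append_iff]; exact Or.inl ha)
    (by rw [Walk.mem_support_append_iff]; exact Or.inr hb) hadj
  rw [Walk.toSubgraph_append, Subgraph.sup_adj] at this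
  rcases this with h' | h'
  · have hbv : b ∈ p.support := by
      have := h'.snd_mem; rwa [Walk.mem_verts_toSubgraph] at this
    exact hbf (hmeet b hbv hb)
  · have hav : a ∈ q.support := by
      have := h'.fst_mem; rwa [Walk.mem_verts_toSubgraph] at this
    exact haf (hmeet a ha hav)

/-- first vertex on a walk satisfying a predicate, as a decomposition. -/
lemma exists_first {u v : V} (p : G.Walk u v) (pr : V → Prop)
    (h : ∃ z ∈ p.support, pr z) :
    ∃ (f : V) (p1 : G.Walk u f) (p2 : G.Walk f v),
      p = p1.append p2 ∧ pr f ∧ ∀ z ∈ p1.support, pr z → z = f := by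
  classical
  induction p with
  | nil =>
    obtain ⟨z, hz, hpz⟩ := h
    simp only [Walk.support_nil, List.mem_singleton] at hz
    subst hz
    exact ⟨_, Walk.nil, Walk.nil, rfl, hpz, by
      intro w hw _; simpa using hw⟩
  | cons hadj q ih =>
    rename_i a b c
    by_cases hpa : pr a
    · exact ⟨a, Walk.nil, Walk.cons hadj q, rfl, hpa, by
        intro z hz _; simpa using hz⟩
    · have h' : ∃ z ∈ q.support, pr z := by
        obtain ⟨z, hz, hpz⟩ := h
        simp only [Walk.support_cons, List.mem_cons] at hz
        rcases hz with rfl | hz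
        · exact absurd hpz hpa
        · exact ⟨z, hz, hpz⟩
      obtain ⟨f, q1, q2, heq, hpf, hfirst⟩ := ih h'
      refine ⟨f, Walk.cons hadj q1, q2, by rw [Walk.cons_append, heq], hpf, ?_⟩
      intro z hz hpz
      simp only [Walk.support_cons, List.mem_cons] at hz
      rcases hz with rfl | hz
      · exact absurd hpz hpa
      · exact hfirst z hz hpz

lemma exists_last {u v : V} (p : G.Walk u v) (pr : V → Prop)
    (h : ∃ z ∈ p.support, pr z) :
    ∃ (g : V) (p1 : G.Walk u g) (p2 : G.Walk g v),
      p = p1.append p2 ∧ pr g ∧ ∀ z ∈ p2.support, pr z → z = g := by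
  obtain ⟨g, r1, r2, heq, hpg, hfirst⟩ := exists_first p.reverse pr (by
    obtain ⟨z, hz, hpz⟩ := h
    exact ⟨z, by rwa [Walk.support_reverse, List.mem_reverse], hpz⟩)
  refine ⟨g, r2.reverse, r1.reverse, ?_, hpg, ?_⟩
  · have := congrArg Walk.reverse heq
    rwa [Walk.reverse_reverse, Walk.reverse_append] at this
  · intro z hz
    exact hfirst z (by rwa [Walk.support_reverse, List.mem_reverse] at hz)

lemma adj_toSubgraph_of_length_one {x y : V} {w : G.Walk x y} (h : w.length = 1) :
    w.toSubgraph.Adj x y := by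
  cases w with
  | nil => simp at h
  | cons hadj q =>
    simp only [Walk.length_cons, Nat.add_eq_zero, add_eq_right] at h
    have : _ = y := Walk.eq_of_length_eq_zero h
    subst this
    simp only [Walk.toSubgraph, Subgraph.sup_adj, subgraphOfAdj_adj]
    exact Or.inl trivial

/-- A walk of length zero has equal endpoints already: helper for nil detection. -/
lemma eq_of_take_len_zero [DecidableEq V] {u x v : V} {p : G.Walk u v} (hx : x ∈ p.support)
    (h : (p.takeUntil x hx).length = 0) : u = x :=
  Walk.eq_of_length_eq_zero h

lemma min_induced [DecidableEq V] {u v : V} {TS : Set V} {p : G.Walk u v}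
    (hsub : ∀ z ∈ p.support, z ∈ TS)
    (hmin : ∀ q : G.Walk u v, (∀ z ∈ q.support, z ∈ TS) → p.length ≤ q.length) :
    ∀ x y, x ∈ p.support → y ∈ p.support → G.Adj x y → p.toSubgraph.Adj x y := by
  intro x y hx hy hadj
  have hspec := p.take_spec hx
  by_cases hy2 : y ∈ (p.dropUntil x hx).support
  · have hspec2 := (p.dropUntil x hx).take_spec hy2
    set p1 := p.takeUntil x hx with hp1
    set p3 := (p.dropUntil x hx).takeUntil y hy2 with hp3
    set p4 := (p.dropUntil x hx).dropUntil y hy2 with hp4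
    have hq : ∀ z ∈ (p1.append (Walk.cons hadj p4)).support, z ∈ TS := by
      intro z hz
      rw [Walk.mem_support_append_iff] at hz
      rcases hz with hz | hz
      · exact hsub z (p.support_takeUntil_subset hx hz)
      · rw [Walk.support_cons, List.mem_cons] at hz
        rcases hz with rfl | hz
        · exact hsub z hx
        · exact hsub z ((p.support_dropUntil_subset hx)
            ((p.dropUntil x hx).support_dropUntil_subset hy2 hz))
    have hlen := hmin _ hq
    have e1 : p.length = p1.length + (p3.length + p4.length) := by
      conv_lhs => rw [← hspec]
      rw [Walk.length_append]
      congr 1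
      conv_lhs => rw [← hspec2]
      rw [Walk.length_append]
    have e2 : (p1.append (Walk.cons hadj p4)).length = p1.length + (p4.length + 1) := by
      rw [Walk.length_append, Walk.length_cons]
    have h31 : p3.length ≤ 1 := by omega
    rcases Nat.le_one_iff_eq_zero_or_eq_one.mp h31 with h30 | h30
    · exact absurd (Walk.eq_of_length_eq_zero h30) hadj.ne
    · have hAdj := adj_toSubgraph_of_length_one (w := p3) h30
      rw [← hspec, Walk.toSubgraph_append, Subgraph.sup_adj]
      refine Or.inr ?_
      rw [← hspec2, Walk.toSubgraph_append, Subgraph.sup_adj]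
      exact Or.inl hAdj
  · have hy1 : y ∈ (p.takeUntil x hx).support := by
      rw [← hspec, Walk.mem_support_append_iff] at hy
      tauto
    have hspec2 := (p.takeUntil x hx).take_spec hy1
    set p2 := p.dropUntil x hx with hp2
    set p3 := (p.takeUntil x hx).takeUntil y hy1 with hp3
    set p4 := (p.takeUntil x hx).dropUntil y hy1 with hp4
    have hq : ∀ z ∈ (p3.append (Walk.cons hadj.symm p2)).support, z ∈ TS := by
      intro z hz
      rw [Walk.mem_support_append_iff] at hz
      rcases hz with hz | hz
      · exact hsub z ((p.support_takeUntil_subset hx)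
          ((p.takeUntil x hx).support_takeUntil_subset hy1 hz))
      · rw [Walk.support_cons, List.mem_cons] at hz
        rcases hz with rfl | hz
        · exact hsub z hy
        · exact hsub z (p.support_dropUntil_subset hx hz)
    have hlen := hmin _ hq
    have e1 : p.length = (p3.length + p4.length) + p2.length := by
      conv_lhs => rw [← hspec]
      rw [Walk.length_append]
      congr 1
      conv_lhs => rw [← hspec2]
      rw [Walk.length_append]
    have e2 : (p3.append (Walk.cons hadj.symm p2)).length = p3.length + (p2.length + 1) := by
      rw [Walk.length_append, Walk.length_cons]
    have h41 : p4.length ≤ 1 := by omega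
    rcases Nat.le_one_iff_eq_zero_or_eq_one.mp h41 with h40 | h40
    · exact absurd (Walk.eq_of_length_eq_zero h40).symm hadj.ne
    · have hAdj : p4.toSubgraph.Adj x y := (adj_toSubgraph_of_length_one (w := p4) h40).symm
      rw [← hspec, Walk.toSubgraph_append, Subgraph.sup_adj]
      refine Or.inl ?_
      rw [← hspec2, Walk.toSubgraph_append, Subgraph.sup_adj]
      exact Or.inr hAdj

lemma exists_penult {u v : V} (p : G.Walk u v) (h : p.length ≠ 0) :
    ∃ (y : V) (hadj : G.Adj y v) (p' : G.Walk u y),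
      p = p'.append (Walk.cons hadj Walk.nil) := by
  induction p with
  | nil => simp at h
  | cons hadj q ih =>
    by_cases hq : q.length = 0
    · have := Walk.eq_of_length_eq_zero hq
      subst this
      have : q = Walk.nil := Walk.nil_iff_eq_nil.mp (Walk.length_eq_zero_iff.mp hq)
      subst this
      exact ⟨_, hadj, Walk.nil, rfl⟩
    · obtain ⟨y, hadj', q', heq⟩ := ih hq
      exact ⟨y, hadj', Walk.cons hadj q', by rw [Walk.cons_append, heq]⟩

/-- walk between any two support vertices of a walk, staying in its support. -/
lemma conn_of_walk [DecidableEq V] {u v : V} (w : G.Walk u v) :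
    ∀ x ∈ w.support, ∀ y ∈ w.support,
      ∃ t : G.Walk x y, ∀ z ∈ t.support, z ∈ w.support := by
  intro x hx y hy
  refine ⟨((w.takeUntil x hx).reverse).append (w.takeUntil y hy), ?_⟩
  intro z hz
  rw [Walk.mem_support_append_iff] at hz
  rcases hz with hz | hz
  · rw [Walk.support_reverse, List.mem_reverse] at hz
    exact w.support_takeUntil_subset hx hz
  · exact w.support_takeUntil_subset hy hz

/-- choose a minimum-length path between two sets, with all the properties we need. -/
lemma exists_min_walk {A B TS : Set V}
    (h : ∃ (a : V) (b : V) (w : G.Walk a b), a ∈ A ∧ b ∈ B ∧ ∀ z ∈ w.support, z ∈ TS) :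
    ∃ (a : V) (b : V) (w : G.Walk a b), a ∈ A ∧ b ∈ B ∧ (∀ z ∈ w.support, z ∈ TS) ∧
      w.IsPath ∧
      ∀ (a' b' : V) (w' : G.Walk a' b'), a' ∈ A → b' ∈ B → (∀ z ∈ w'.support, z ∈ TS) →
        w.length ≤ w'.length := by
  classical
  have hn : ∃ n : ℕ, ∃ (a : V) (b : V) (w : G.Walk a b),
      a ∈ A ∧ b ∈ B ∧ (∀ z ∈ w.support, z ∈ TS) ∧ w.length = n := by
    obtain ⟨a, b, w, ha, hb, hT⟩ := h
    exact ⟨w.length, a, b, w, ha, hb, hT, rfl⟩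
  obtain ⟨a, b, w, ha, hb, hT, hlen⟩ := Nat.find_spec hn
  refine ⟨a, b, w.bypass, ha, hb,
    fun z hz => hT z (w.support_bypass_subset hz), w.bypass_isPath, ?_⟩
  intro a' b' w' ha' hb' hT'
  have h1 : w.bypass.length ≤ Nat.find hn := hlen ▸ w.length_bypass_le
  have h2 : Nat.find hn ≤ w'.length :=
    Nat.find_le ⟨a', b', w', ha', hb', hT', rfl⟩
  omega

def fin3 {motive : Fin 3 → Sort*} (a : motive 0) (b : motive 1) (c : motive 2) :
    ∀ i : Fin 3, motive i
  | ⟨0, _⟩ => a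
  | ⟨1, _⟩ => b
  | ⟨2, _⟩ => c

@[simp] lemma fin3_zero {motive : Fin 3 → Sort*} (a : motive 0) (b : motive 1) (c : motive 2) :
    fin3 a b c 0 = a := rfl
@[simp] lemma fin3_one {motive : Fin 3 → Sort*} (a : motive 0) (b : motive 1) (c : motive 2) :
    fin3 a b c 1 = b := rfl
@[simp] lemma fin3_two {motive : Fin 3 → Sort*} (a : motive 0) (b : motive 1) (c : motive 2) :
    fin3 a b c 2 = c := rfl

def fin3W {V : Type*} {G : SimpleGraph V} {f a b c : V}
    (pa : G.Walk f a) (pb : G.Walk f b) (pc : G.Walk f c) :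
    ∀ i : Fin 3, G.Walk f (fin3 (motive := fun _ => V) a b c i)
  | ⟨0, _⟩ => pa
  | ⟨1, _⟩ => pb
  | ⟨2, _⟩ => pc

def fin3W' {V : Type*} {G : SimpleGraph V} {a1 a2 a3 b1 b2 b3 : V}
    (pa : G.Walk a1 b1) (pb : G.Walk a2 b2) (pc : G.Walk a3 b3) :
    ∀ i : Fin 3, G.Walk (fin3 (motive := fun _ => V) a1 a2 a3 i) (fin3 (motive := fun _ => V) b1 b2 b3 i)
  | ⟨0, _⟩ => pa
  | ⟨1, _⟩ => pb
  | ⟨2, _⟩ => pc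

end ThreeExits

/-- Lemma on three exits. Let `H` be a connected graph and
`V₀, V₁, V₂` non-empty vertex subsets. Then `H` has an induced subgraph `F` of one of
the three described shapes (a chordless path hitting the three sets appropriately, a
claw-shaped union of three paths, or three disjoint paths attached to a triangle). -/
theorem three_exits
    {W : Type*} [Fintype W] [DecidableEq W] (H : SimpleGraph W) (hconn : H.Connected)
    (Vs : Fin 3 → Set W) (hne : ∀ i, (Vs i).Nonempty) :
    -- Outcome 1: a chordless path, up to a permutation of the three sets.
    (∃ (σ : Equiv.Perm (Fin 3)) (u v : W) (p : H.Walk u v),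
      IsInducedPathW H p ∧ u ∈ Vs (σ 0) ∧ v ∈ Vs (σ 2) ∧
      (∃ x ∈ p.support, x ∈ Vs (σ 1)) ∧
      (∀ x ∈ p.support, x ≠ u → x ≠ v → x ∉ Vs (σ 0) ∧ x ∉ Vs (σ 2))) ∨
    -- Outcome 2: three chordless paths of length at least 1 from a common vertex `f`.
    (∃ (f : W) (vt : Fin 3 → W) (F : ∀ i : Fin 3, H.Walk f (vt i)),
      (∀ i, IsInducedPathW H (F i) ∧ 1 ≤ (F i).length ∧ vt i ∈ Vs i) ∧
      (∀ i j, i ≠ j →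
        (∀ x : W, x ∈ (F i).support → x ∈ (F j).support → x = f) ∧
        (∀ x ∈ (F i).support, ∀ y ∈ (F j).support, x ≠ f → y ≠ f → ¬ H.Adj x y)) ∧
      (∀ x : W, (x ∈ (F 0).support ∨ x ∈ (F 1).support ∨ x ∈ (F 2).support) →
        x ≠ vt 0 → x ≠ vt 1 → x ≠ vt 2 → ∀ i, x ∉ Vs i)) ∨
    -- Outcome 3: three vertex-disjoint chordless paths attached to a triangle
    -- `{w 0, w 1, w 2}`.
    (∃ (w vt : Fin 3 → W) (F : ∀ i : Fin 3, H.Walk (w i) (vt i)),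
      (∀ i, IsInducedPathW H (F i) ∧ vt i ∈ Vs i) ∧
      (∀ i j, i ≠ j → H.Adj (w i) (w j)) ∧
      (∀ i j, i ≠ j →
        (∀ x : W, x ∈ (F i).support → x ∉ (F j).support) ∧
        (∀ x ∈ (F i).support, ∀ y ∈ (F j).support, H.Adj x y → x = w i ∧ y = w j)) ∧
      (∀ x : W, (x ∈ (F 0).support ∨ x ∈ (F 1).support ∨ x ∈ (F 2).support) →
        x ≠ vt 0 → x ≠ vt 1 → x ≠ vt 2 → ∀ i, x ∉ Vs i)) := by
  classical
  by_cases htriple : ∃ v, v ∈ Vs 0 ∧ v ∈ Vs 1 ∧ v ∈ Vs 2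
  · obtain ⟨v, h0, h1, h2⟩ := htriple
    left
    refine ⟨1, v, v, Walk.nil, ThreeExits.ind_nil v, by simpa using h0, by simpa using h2,
      ⟨v, by simp, by simpa using h1⟩, ?_⟩
    intro x hx hxu _
    simp only [Walk.support_nil, List.mem_singleton] at hx
    exact absurd hx hxu
  -- candidate sets and a minimal one
  set C : Finset W → Prop := fun S =>
    (∀ x ∈ S, ∀ y ∈ S, ∃ w : H.Walk x y, ∀ z ∈ w.support, z ∈ S) ∧
    (∀ i, ∃ v ∈ S, v ∈ Vs i) with hC
  have hex : ∃ n, ∃ S, C S ∧ S.card = n := by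
    refine ⟨Finset.univ.card, Finset.univ, ⟨⟨?_, ?_⟩, rfl⟩⟩
    · intro x _ y _
      obtain ⟨w⟩ := hconn.preconnected x y
      exact ⟨w, fun z _ => Finset.mem_univ z⟩
    · intro i
      obtain ⟨v, hv⟩ := hne i
      exact ⟨v, Finset.mem_univ v, hv⟩
  obtain ⟨T, hT, hTcard⟩ := Nat.find_spec hex
  have hTmin : ∀ S, C S → T.card ≤ S.card := by
    intro S hS
    by_contra hlt
    push_neg at hlt
    rw [hTcard] at hlt
    exact Nat.find_min hex hlt ⟨S, hS, rfl⟩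
  -- minimal walk P from Vs 0 to Vs 1 inside T
  obtain ⟨v1, v2, P, hv1, hv2, hPT, hPpath, hPmin⟩ :=
    ThreeExits.exists_min_walk (G := H) (A := Vs 0) (B := Vs 1) (TS := (↑T : Set W)) (by
      obtain ⟨a, haT, haV⟩ := hT.2 0
      obtain ⟨b, hbT, hbV⟩ := hT.2 1
      obtain ⟨w, hw⟩ := hT.1 a haT b hbT
      exact ⟨a, b, w, haV, hbV, fun z hz => hw z hz⟩)
  have hPind : IsInducedPathW H P :=
    ⟨hPpath, ThreeExits.min_induced hPT (fun q hq => hPmin v1 v2 q hv1 hv2 hq)⟩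
  have hP_A : ∀ x ∈ P.support, x ∈ Vs 0 → x = v1 := by
    intro x hx hxA
    by_contra hxv
    have hspec := P.take_spec hx
    have h1 := hPmin x v2 (P.dropUntil x hx) hxA hv2
      (fun z hz => hPT z (P.support_dropUntil_subset hx hz))
    have h2 : (P.takeUntil x hx).length + (P.dropUntil x hx).length = P.length := by
      rw [← Walk.length_append, hspec]
    have h3 : (P.takeUntil x hx).length ≠ 0 := fun h =>
      hxv (Walk.eq_of_length_eq_zero h).symm
    omega
  have hP_B : ∀ x ∈ P.support, x ∈ Vs 1 → x = v2 := by
    intro x hx hxB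
    by_contra hxv
    have hspec := P.take_spec hx
    have h1 := hPmin v1 x (P.takeUntil x hx) hv1 hxB
      (fun z hz => hPT z (P.support_takeUntil_subset hx hz))
    have h2 : (P.takeUntil x hx).length + (P.dropUntil x hx).length = P.length := by
      rw [← Walk.length_append, hspec]
    have h3 : (P.dropUntil x hx).length ≠ 0 := fun h =>
      hxv (Walk.eq_of_length_eq_zero h)
    omega
  -- minimal walk Q from Vs 2 to P inside T
  obtain ⟨v3, e, Q, hv3, heB, hQT, hQpath, hQmin⟩ :=
    ThreeExits.exists_min_walk (G := H) (A := Vs 2) (B := {z | z ∈ P.support})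
      (TS := (↑T : Set W)) (by
      obtain ⟨a, haT, haV⟩ := hT.2 2
      have hv1T : v1 ∈ T := hPT v1 P.start_mem_support
      obtain ⟨w, hw⟩ := hT.1 a haT v1 hv1T
      exact ⟨a, v1, w, haV, P.start_mem_support, fun z hz => hw z hz⟩)
  have hQind : IsInducedPathW H Q :=
    ⟨hQpath, ThreeExits.min_induced hQT (fun q hq => hQmin v3 e q hv3 heB hq)⟩
  have hQ_A : ∀ x ∈ Q.support, x ∈ Vs 2 → x = v3 := by
    intro x hx hxA
    by_contra hxv
    have hspec := Q.take_spec hx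
    have h1 := hQmin x e (Q.dropUntil x hx) hxA heB
      (fun z hz => hQT z (Q.support_dropUntil_subset hx hz))
    have h2 : (Q.takeUntil x hx).length + (Q.dropUntil x hx).length = Q.length := by
      rw [← Walk.length_append, hspec]
    have h3 : (Q.takeUntil x hx).length ≠ 0 := fun h =>
      hxv (Walk.eq_of_length_eq_zero h).symm
    omega
  have hQ_B : ∀ x ∈ Q.support, x ∈ P.support → x = e := by
    intro x hx hxB
    by_contra hxv
    have hspec := Q.take_spec hx
    have h1 := hQmin v3 x (Q.takeUntil x hx) hv3 hxB
      (fun z hz => hQT z (Q.support_takeUntil_subset hx hz))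
    have h2 : (Q.takeUntil x hx).length + (Q.dropUntil x hx).length = Q.length := by
      rw [← Walk.length_append, hspec]
    have h3 : (Q.dropUntil x hx).length ≠ 0 := fun h =>
      hxv (Walk.eq_of_length_eq_zero h)
    omega
  by_cases hk : Q.length = 0
  · -- Outcome 1 directly: P hits Vs 2 at v3 = e
    have hve : v3 = e := Walk.eq_of_length_eq_zero hk
    subst hve
    left
    refine ⟨Equiv.swap 1 2, v1, v2, P, hPind, by simpa [Equiv.swap_apply_of_ne_of_ne] using hv1, by simpa using hv2,
      ⟨v3, heB, by simpa using hv3⟩, ?_⟩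
    intro x hx hxu hxv
    constructor
    · simpa [Equiv.swap_apply_of_ne_of_ne] using fun h => hxu (hP_A x hx h)
    · simpa using fun h => hxv (hP_B x hx h)
  · -- k ≥ 1
    have hPV3 : ∀ x ∈ P.support, x ∉ Vs 2 := by
      intro x hx hxV
      have := hQmin x x Walk.nil hxV hx (by
        intro z hz
        simp only [Walk.support_nil, List.mem_singleton] at hz
        subst hz
        exact hPT _ hx)
      simp only [Walk.length_nil, Nat.le_zero] at this
      exact hk this
    obtain ⟨y, hyadj, Q', hQeq⟩ := ThreeExits.exists_penult Q hk
    have hQsup : Q.support = Q'.support ++ [e] := by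
      rw [hQeq, Walk.support_append]
      simp
    have henQ' : e ∉ Q'.support := by
      have := hQpath.support_nodup
      rw [hQsup, List.nodup_append] at this
      intro h
      exact this.2.2 e h e (List.mem_singleton_self e) rfl
    have hQ'T : ∀ z ∈ Q'.support, z ∈ (↑T : Set W) := by
      intro z hz
      exact hQT z (by rw [hQsup]; exact List.mem_append_left _ hz)
    have hQ'sub : ∀ z ∈ Q'.support, z ∈ Q.support := by
      intro z hz
      rw [hQsup]
      exact List.mem_append_left _ hz
    have hQ'P : ∀ x ∈ Q'.support, x ∉ P.support := by
      intro x hx hxP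
      have := hQ_B x (hQ'sub x hx) hxP
      subst this
      exact henQ' hx
    have hynP : y ∉ P.support := hQ'P y Q'.end_mem_support
    have hv3Q' : v3 ∈ Q'.support := Q'.start_mem_support
    have hQ'nb : ∀ x ∈ Q'.support, x ≠ y → ∀ b ∈ P.support, ¬H.Adj x b := by
      intro x hx hxy b hb hadj
      have hxQ := hQ'sub x hx
      have h1 := hQmin v3 b ((Q'.takeUntil x hx).append (Walk.cons hadj Walk.nil)) hv3 hb (by
        intro z hz
        rw [Walk.mem_support_append_iff] at hz
        rcases hz with hz | hz
        · exact hQ'T z (Q'.support_takeUntil_subset hx hz)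
        · simp only [Walk.support_cons, Walk.support_nil, List.mem_cons,
            List.mem_singleton, List.not_mem_nil, or_false] at hz
          rcases hz with rfl | rfl
          · exact hQ'T z hx
          · exact hPT z hb)
      have h2 : (Q'.takeUntil x hx).length + (Q'.dropUntil x hx).length = Q'.length := by
        rw [← Walk.length_append, Q'.take_spec hx]
      have h3 : (Q'.dropUntil x hx).length ≠ 0 := fun h =>
        hxy (Walk.eq_of_length_eq_zero h)
      have h4 : Q.length = Q'.length + 1 := by
        rw [hQeq, Walk.length_append]
        simp
      rw [Walk.length_append] at h1
      simp only [Walk.length_cons, Walk.length_nil] at h1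
      omega
    have hQ'ind : IsInducedPathW H Q' := by
      rw [hQeq] at hQind
      exact ThreeExits.ind_of_append_left hQind
    have hQ'3 : ∀ x ∈ Q'.support, x ∈ Vs 2 → x = v3 := fun x hx h =>
      hQ_A x (hQ'sub x hx) h
    -- first neighbour of y along P
    obtain ⟨f, P1, P2, hPeq, hyf, hfirst⟩ :=
      ThreeExits.exists_first P (fun z => H.Adj y z) ⟨e, heB, hyadj⟩
    have hP1path : P1.IsPath := by rw [hPeq] at hPpath; exact hPpath.of_append_left
    have hP2path : P2.IsPath := by rw [hPeq] at hPpath; exact hPpath.of_append_right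
    have hP1ind : IsInducedPathW H P1 := by
      rw [hPeq] at hPind; exact ThreeExits.ind_of_append_left hPind
    have hP2ind : IsInducedPathW H P2 := by
      rw [hPeq] at hPind; exact ThreeExits.ind_of_append_right hPind
    have hmeet12 : ∀ z, z ∈ P1.support → z ∈ P2.support → z = f := by
      rw [hPeq] at hPpath; exact ThreeExits.meet_of_append_path hPpath
    have hP1sub : ∀ z ∈ P1.support, z ∈ P.support := by
      intro z hz; rw [hPeq, Walk.mem_support_append_iff]; exact Or.inl hz
    have hP2sub : ∀ z ∈ P2.support, z ∈ P.support := by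
      intro z hz; rw [hPeq, Walk.mem_support_append_iff]; exact Or.inr hz
    by_cases hfv2 : f = v2
    · subst hfv2
      -- attachment at the end v2 of P; P2 is trivial
      have hP2nil : P2 = Walk.nil := ThreeExits.path_loop_nil hP2path
      have hyP : ∀ z ∈ P.support, H.Adj y z → z = f := by
        intro z hz hadj
        rw [hPeq, Walk.mem_support_append_iff] at hz
        rcases hz with hz | hz
        · exact hfirst z hz hadj
        · rw [hP2nil] at hz
          simpa using hz
      by_cases hm : v1 = f
      · -- v1 = v2 = f : P is a single vertex
        obtain rfl : v1 = f := hm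
        have hPnil : P = Walk.nil := ThreeExits.path_loop_nil hPpath
        have he : e = v1 := by
          have : e ∈ P.support := heB
          rw [hPnil] at this
          simpa using this
        obtain rfl : v1 = e := he.symm
        have hQsup' : ∀ x ∈ Q.support, x ≠ v1 → x ∈ Q'.support := by
          intro x hx hxv
          rw [hQsup] at hx
          rcases List.mem_append.mp hx with hx | hx
          · exact hx
          · exact absurd (List.mem_singleton.mp hx) hxv
        have hv1T : v1 ∈ T := hPT v1 P.start_mem_support
        have hv1nQ' : v1 ∉ Q'.support := fun h => hQ'P v1 h P.start_mem_support
        by_cases hs1 : ∃ x ∈ Q'.support, x ∈ Vs 0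
        · by_cases hs2 : ∃ x ∈ Q'.support, x ∈ Vs 1
          · exfalso
            obtain ⟨x1, hx1, hx1V⟩ := hs1
            obtain ⟨x2, hx2, hx2V⟩ := hs2
            have hCS : C Q'.support.toFinset := by
              constructor
              · intro a ha b hb
                rw [List.mem_toFinset] at ha hb
                obtain ⟨t, ht⟩ := ThreeExits.conn_of_walk Q' a ha b hb
                exact ⟨t, fun z hz => List.mem_toFinset.mpr (ht z hz)⟩
              · intro i
                fin_cases i
                · exact ⟨x1, List.mem_toFinset.mpr hx1, hx1V⟩
                · exact ⟨x2, List.mem_toFinset.mpr hx2, hx2V⟩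
                · exact ⟨v3, List.mem_toFinset.mpr hv3Q', hv3⟩
            have hsubT : Q'.support.toFinset ⊆ T := by
              intro z hz
              exact hQ'T z (List.mem_toFinset.mp hz)
            have hlt : Q'.support.toFinset.card < T.card :=
              Finset.card_lt_card ((Finset.ssubset_iff_of_subset hsubT).mpr
                ⟨v1, hv1T, fun h => hv1nQ' (List.mem_toFinset.mp h)⟩)
            exact absurd (hTmin _ hCS) (by omega)
          · push_neg at hs2
            left
            have hσ : ∀ σ : Equiv.Perm (Fin 3), σ = (Equiv.swap 0 2).trans (Equiv.swap 0 1) →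
                σ 0 = 2 ∧ σ 1 = 0 ∧ σ 2 = 1 := by decide
            obtain ⟨h0, h1, h2⟩ := hσ _ rfl
            refine ⟨(Equiv.swap 0 2).trans (Equiv.swap 0 1), v3, v1, Q, hQind,
              by rw [h0]; exact hv3, by rw [h2]; exact hv2,
              ⟨v1, Q.end_mem_support, by rw [h1]; exact hv1⟩, ?_⟩
            intro x hx hxu hxv
            have hxQ' : x ∈ Q'.support := hQsup' x hx hxv
            rw [h0, h2]
            exact ⟨fun h => hxu (hQ'3 x hxQ' h), hs2 x hxQ'⟩
        · push_neg at hs1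
          left
          have hσ : ∀ σ : Equiv.Perm (Fin 3), σ = Equiv.swap 0 2 →
              σ 0 = 2 ∧ σ 1 = 1 ∧ σ 2 = 0 := by decide
          obtain ⟨h0, h1, h2⟩ := hσ _ rfl
          refine ⟨Equiv.swap 0 2, v3, v1, Q, hQind,
            by rw [h0]; exact hv3, by rw [h2]; exact hv1,
            ⟨v1, Q.end_mem_support, by rw [h1]; exact hv2⟩, ?_⟩
          intro x hx hxu hxv
          have hxQ' : x ∈ Q'.support := hQsup' x hx hxv
          rw [h0, h2]
          exact ⟨fun h => hxu (hQ'3 x hxQ' h), hs1 x hxQ'⟩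
      · -- attachment at end f (= old v2), v1 ≠ f : long induced path outcome
        have hstray0 : ∀ x ∈ Q'.support, x ∉ Vs 0 := by
          intro x hx hxV
          set CW : H.Walk v3 f := Q'.append (Walk.cons hyf Walk.nil) with hCW
          have hCWsub : ∀ z ∈ CW.support, z ∈ (↑T : Set W) := by
            intro z hz
            rw [Walk.mem_support_append_iff] at hz
            rcases hz with hz | hz
            · exact hQ'T z hz
            · simp only [Walk.support_cons, Walk.support_nil, List.mem_cons,
                List.mem_singleton, List.not_mem_nil, or_false] at hz
              rcases hz with rfl | rfl
              · exact hQ'T z Q'.end_mem_support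
              · exact hPT z P.end_mem_support
          have hCS : C CW.support.toFinset := by
            constructor
            · intro a ha b hb
              rw [List.mem_toFinset] at ha hb
              obtain ⟨t, ht⟩ := ThreeExits.conn_of_walk CW a ha b hb
              exact ⟨t, fun z hz => List.mem_toFinset.mpr (ht z hz)⟩
            · intro i
              fin_cases i
              · exact ⟨x, List.mem_toFinset.mpr
                  (by rw [Walk.mem_support_append_iff]; exact Or.inl hx), hxV⟩
              · exact ⟨f, List.mem_toFinset.mpr CW.end_mem_support, hv2⟩
              · exact ⟨v3, List.mem_toFinset.mpr CW.start_mem_support, hv3⟩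
          have hv1nCW : v1 ∉ CW.support := by
            intro h
            rw [Walk.mem_support_append_iff] at h
            rcases h with h | h
            · exact hQ'P v1 h P.start_mem_support
            · simp only [Walk.support_cons, Walk.support_nil, List.mem_cons,
                List.mem_singleton, List.not_mem_nil, or_false] at h
              rcases h with rfl | rfl
              · exact hynP P.start_mem_support
              · exact hm rfl
          have hsubT : CW.support.toFinset ⊆ T := fun z hz =>
            hCWsub z (List.mem_toFinset.mp hz)
          have hlt : CW.support.toFinset.card < T.card :=
            Finset.card_lt_card ((Finset.ssubset_iff_of_subset hsubT).mpr
              ⟨v1, hPT v1 P.start_mem_support,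
                fun h => hv1nCW (List.mem_toFinset.mp h)⟩)
          exact absurd (hTmin _ hCS) (by omega)
        left
        have hyrev : y ∉ P.reverse.support := by
          rw [Walk.support_reverse, List.mem_reverse]; exact hynP
        have hinner : IsInducedPathW H (Walk.cons hyf P.reverse) := by
          refine ThreeExits.ind_cons hyf (ThreeExits.ind_reverse hPind) hyrev ?_
          intro z hz hadj
          rw [Walk.support_reverse, List.mem_reverse] at hz
          exact hyP z hz hadj
        have hWind : IsInducedPathW H (Q'.append (Walk.cons hyf P.reverse)) := by
          refine ThreeExits.ind_append hQ'ind hinner ?_ ?_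
          · intro z hz1 hz2
            rw [Walk.support_cons, List.mem_cons] at hz2
            rcases hz2 with rfl | hz2
            · rfl
            · rw [Walk.support_reverse, List.mem_reverse] at hz2
              exact absurd hz2 (hQ'P z hz1)
          · intro a ha b hb hay hby hadj
            rw [Walk.support_cons, List.mem_cons] at hb
            rcases hb with rfl | hb
            · exact hby rfl
            · rw [Walk.support_reverse, List.mem_reverse] at hb
              exact hQ'nb a ha hay b hb hadj
        have hσ : ∀ σ : Equiv.Perm (Fin 3), σ = Equiv.swap 0 2 →
            σ 0 = 2 ∧ σ 1 = 1 ∧ σ 2 = 0 := by decide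
        obtain ⟨h0, h1, h2⟩ := hσ _ rfl
        refine ⟨Equiv.swap 0 2, v3, v1, Q'.append (Walk.cons hyf P.reverse), hWind,
          by rw [h0]; exact hv3, by rw [h2]; exact hv1,
          ⟨f, ?_, by rw [h1]; exact hv2⟩, ?_⟩
        · rw [Walk.mem_support_append_iff]
          right
          rw [Walk.support_cons, List.mem_cons]
          right
          rw [Walk.support_reverse, List.mem_reverse]
          exact P.end_mem_support
        · intro x hx hxu hxv
          rw [h0, h2]
          rw [Walk.mem_support_append_iff] at hx
          have hxQcase : x ∈ Q'.support ∨ x ∈ P.support := by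
            rcases hx with hx | hx
            · exact Or.inl hx
            · rw [Walk.support_cons, List.mem_cons] at hx
              rcases hx with rfl | hx
              · exact Or.inl Q'.end_mem_support
              · rw [Walk.support_reverse, List.mem_reverse] at hx
                exact Or.inr hx
          rcases hxQcase with hx' | hx'
          · exact ⟨fun h => hxu (hQ'3 x hx' h), hstray0 x hx'⟩
          · exact ⟨hPV3 x hx', fun h => hxv (hP_A x hx' h)⟩
    · -- f ≠ v2
      have hv2nP1 : v2 ∉ P1.support := by
        intro h
        exact hfv2 (hmeet12 v2 h P2.end_mem_support).symm
      have hv2nQ' : v2 ∉ Q'.support := fun h => hQ'P v2 h P.end_mem_support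
      have hstray1 : ∀ x ∈ Q'.support, x ∉ Vs 1 := by
        intro x hx hxV
        set CW : H.Walk v3 v1 := Q'.append (Walk.cons hyf P1.reverse) with hCW
        have hCWsub : ∀ z ∈ CW.support, z ∈ (↑T : Set W) := by
          intro z hz
          rw [Walk.mem_support_append_iff] at hz
          rcases hz with hz | hz
          · exact hQ'T z hz
          · rw [Walk.support_cons, List.mem_cons] at hz
            rcases hz with rfl | hz
            · exact hQ'T z Q'.end_mem_support
            · rw [Walk.support_reverse, List.mem_reverse] at hz
              exact hPT z (hP1sub z hz)
        have hCS : C CW.support.toFinset := by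
          constructor
          · intro a ha b hb
            rw [List.mem_toFinset] at ha hb
            obtain ⟨t, ht⟩ := ThreeExits.conn_of_walk CW a ha b hb
            exact ⟨t, fun z hz => List.mem_toFinset.mpr (ht z hz)⟩
          · intro i
            fin_cases i
            · exact ⟨v1, List.mem_toFinset.mpr CW.end_mem_support, hv1⟩
            · exact ⟨x, List.mem_toFinset.mpr
                (by rw [Walk.mem_support_append_iff]; exact Or.inl hx), hxV⟩
            · exact ⟨v3, List.mem_toFinset.mpr CW.start_mem_support, hv3⟩
        have hv2nCW : v2 ∉ CW.support := by
          intro h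
          rw [Walk.mem_support_append_iff] at h
          rcases h with h | h
          · exact hv2nQ' h
          · rw [Walk.support_cons, List.mem_cons] at h
            rcases h with rfl | h
            · exact hynP P.end_mem_support
            · rw [Walk.support_reverse, List.mem_reverse] at h
              exact hv2nP1 h
        have hsubT : CW.support.toFinset ⊆ T := fun z hz =>
          hCWsub z (List.mem_toFinset.mp hz)
        have hlt : CW.support.toFinset.card < T.card :=
          Finset.card_lt_card ((Finset.ssubset_iff_of_subset hsubT).mpr
            ⟨v2, hPT v2 P.end_mem_support,
              fun h => hv2nCW (List.mem_toFinset.mp h)⟩)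
        exact absurd (hTmin _ hCS) (by omega)
      -- last neighbour of y along P2
      obtain ⟨g, P5, P6, hP2eq, hyg, hlast⟩ :=
        ThreeExits.exists_last P2 (fun z => H.Adj y z) ⟨f, P2.start_mem_support, hyf⟩
      have hP5path : P5.IsPath := by rw [hP2eq] at hP2path; exact hP2path.of_append_left
      have hP6path : P6.IsPath := by rw [hP2eq] at hP2path; exact hP2path.of_append_right
      have hmeet56 : ∀ z, z ∈ P5.support → z ∈ P6.support → z = g := by
        rw [hP2eq] at hP2path; exact ThreeExits.meet_of_append_path hP2path
      have hP5sub : ∀ z ∈ P5.support, z ∈ P2.support := by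
        intro z hz; rw [hP2eq, Walk.mem_support_append_iff]; exact Or.inl hz
      have hP6sub : ∀ z ∈ P6.support, z ∈ P2.support := by
        intro z hz; rw [hP2eq, Walk.mem_support_append_iff]; exact Or.inr hz
      by_cases hgf : g = f
      · -- y attaches only at f
        obtain rfl : f = g := hgf.symm
        have hP5nil : P5 = Walk.nil := ThreeExits.path_loop_nil hP5path
        have hP26 : P2 = P6 := by rw [hP2eq, hP5nil]; exact Walk.nil_append P6
        have hyP : ∀ z ∈ P.support, H.Adj y z → z = f := by
          intro z hz hadj
          rw [hPeq, Walk.mem_support_append_iff] at hz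
          rcases hz with hz | hz
          · exact hfirst z hz hadj
          · exact hlast z (by rw [← hP26]; exact hz) hadj
        by_cases hfv1 : f = v1
        · -- attachment at the start v1 : long induced path outcome
          have hyv1 : H.Adj y v1 := hfv1 ▸ hyf
          have hnbv1 : ∀ z ∈ P.support, H.Adj y z → z = v1 := by
            intro z hz hadj
            rw [← hfv1]
            exact hyP z hz hadj
          have hinner : IsInducedPathW H (Walk.cons hyv1 P) :=
            ThreeExits.ind_cons hyv1 hPind hynP hnbv1
          have hWind : IsInducedPathW H (Q'.append (Walk.cons hyv1 P)) := by
            refine ThreeExits.ind_append hQ'ind hinner ?_ ?_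
            · intro z hz1 hz2
              rw [Walk.support_cons, List.mem_cons] at hz2
              rcases hz2 with rfl | hz2
              · rfl
              · exact absurd hz2 (hQ'P z hz1)
            · intro a ha b hb hay hby hadj
              rw [Walk.support_cons, List.mem_cons] at hb
              rcases hb with rfl | hb
              · exact hby rfl
              · exact hQ'nb a ha hay b hb hadj
          left
          have hσ : ∀ σ : Equiv.Perm (Fin 3), σ = (Equiv.swap 0 2).trans (Equiv.swap 0 1) →
              σ 0 = 2 ∧ σ 1 = 0 ∧ σ 2 = 1 := by decide
          obtain ⟨h0, h1, h2⟩ := hσ _ rfl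
          refine ⟨(Equiv.swap 0 2).trans (Equiv.swap 0 1), v3, v2,
            Q'.append (Walk.cons hyv1 P), hWind,
            by rw [h0]; exact hv3, by rw [h2]; exact hv2,
            ⟨v1, ?_, by rw [h1]; exact hv1⟩, ?_⟩
          · rw [Walk.mem_support_append_iff]
            right
            rw [Walk.support_cons, List.mem_cons]
            exact Or.inr P.start_mem_support
          · intro x hx hxu hxv
            rw [h0, h2]
            rw [Walk.mem_support_append_iff] at hx
            have hxQcase : x ∈ Q'.support ∨ x ∈ P.support := by
              rcases hx with hx | hx
              · exact Or.inl hx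
              · rw [Walk.support_cons, List.mem_cons] at hx
                rcases hx with rfl | hx
                · exact Or.inl Q'.end_mem_support
                · exact Or.inr hx
            rcases hxQcase with hx' | hx'
            · exact ⟨fun h => hxu (hQ'3 x hx' h), hstray1 x hx'⟩
            · exact ⟨hPV3 x hx', fun h => hxv (hP_B x hx' h)⟩
        · -- claw outcome
          have hfP : f ∈ P.support := hP2sub f P2.start_mem_support
          have hfnQ' : f ∉ Q'.support := fun h => hQ'P f h hfP
          have hstray0 : ∀ x ∈ Q'.support, x ∉ Vs 0 := by
            intro x hx hxV
            set CW : H.Walk v3 v2 := Q'.append (Walk.cons hyf P6) with hCW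
            have hCWsub : ∀ z ∈ CW.support, z ∈ (↑T : Set W) := by
              intro z hz
              rw [Walk.mem_support_append_iff] at hz
              rcases hz with hz | hz
              · exact hQ'T z hz
              · rw [Walk.support_cons, List.mem_cons] at hz
                rcases hz with rfl | hz
                · exact hQ'T z Q'.end_mem_support
                · exact hPT z (hP2sub z (by rw [hP26]; exact hz))
            have hCS : C CW.support.toFinset := by
              constructor
              · intro a ha b hb
                rw [List.mem_toFinset] at ha hb
                obtain ⟨t, ht⟩ := ThreeExits.conn_of_walk CW a ha b hb
                exact ⟨t, fun z hz => List.mem_toFinset.mpr (ht z hz)⟩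
              · intro i
                fin_cases i
                · exact ⟨x, List.mem_toFinset.mpr
                    (by rw [Walk.mem_support_append_iff]; exact Or.inl hx), hxV⟩
                · exact ⟨v2, List.mem_toFinset.mpr CW.end_mem_support, hv2⟩
                · exact ⟨v3, List.mem_toFinset.mpr CW.start_mem_support, hv3⟩
            have hv1nCW : v1 ∉ CW.support := by
              intro h
              rw [Walk.mem_support_append_iff] at h
              rcases h with h | h
              · exact hQ'P v1 h P.start_mem_support
              · rw [Walk.support_cons, List.mem_cons] at h
                rcases h with rfl | h
                · exact hynP P.start_mem_support
                · exact hfv1 (hmeet12 v1 P1.start_mem_support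
                    (by rw [hP26]; exact h)).symm
            have hsubT : CW.support.toFinset ⊆ T := fun z hz =>
              hCWsub z (List.mem_toFinset.mp hz)
            have hlt : CW.support.toFinset.card < T.card :=
              Finset.card_lt_card ((Finset.ssubset_iff_of_subset hsubT).mpr
                ⟨v1, hPT v1 P.start_mem_support,
                  fun h => hv1nCW (List.mem_toFinset.mp h)⟩)
            exact absurd (hTmin _ hCS) (by omega)
          right; left
          have hW2ind : IsInducedPathW H (Walk.cons hyf.symm Q'.reverse) := by
            refine ThreeExits.ind_cons hyf.symm (ThreeExits.ind_reverse hQ'ind) ?_ ?_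
            · rw [Walk.support_reverse, List.mem_reverse]
              exact hfnQ'
            · intro z hz hadj
              rw [Walk.support_reverse, List.mem_reverse] at hz
              by_contra hzy
              exact hQ'nb z hz hzy f hfP hadj.symm
          have pair01m : ∀ x, x ∈ P1.reverse.support → x ∈ P2.support → x = f := by
            intro x hx1 hx2
            rw [Walk.support_reverse, List.mem_reverse] at hx1
            exact hmeet12 x hx1 hx2
          have pair01c : ∀ x ∈ P1.reverse.support, ∀ z ∈ P2.support,
              x ≠ f → z ≠ f → ¬H.Adj x z := by
            intro x hx z hz hxf hzf
            rw [Walk.support_reverse, List.mem_reverse] at hx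
            have := hPind
            rw [hPeq] at this
            exact ThreeExits.cross_of_append_ind this x hx z hz hxf hzf
          have pair02m : ∀ x, x ∈ P1.reverse.support →
              x ∈ (Walk.cons hyf.symm Q'.reverse).support → x = f := by
            intro x hx1 hx2
            rw [Walk.support_reverse, List.mem_reverse] at hx1
            rw [Walk.support_cons, List.mem_cons] at hx2
            rcases hx2 with rfl | hx2
            · rfl
            · rw [Walk.support_reverse, List.mem_reverse] at hx2
              exact absurd (hP1sub x hx1) (hQ'P x hx2)
          have pair02c : ∀ x ∈ P1.reverse.support,
              ∀ z ∈ (Walk.cons hyf.symm Q'.reverse).support,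
              x ≠ f → z ≠ f → ¬H.Adj x z := by
            intro x hx z hz hxf hzf hadj
            rw [Walk.support_reverse, List.mem_reverse] at hx
            rw [Walk.support_cons, List.mem_cons] at hz
            rcases hz with rfl | hz
            · exact hzf rfl
            · rw [Walk.support_reverse, List.mem_reverse] at hz
              by_cases hzy : z = y
              · subst hzy
                exact hxf (hfirst x hx hadj.symm)
              · exact hQ'nb z hz hzy x (hP1sub x hx) hadj.symm
          have pair12m : ∀ x, x ∈ P2.support →
              x ∈ (Walk.cons hyf.symm Q'.reverse).support → x = f := by
            intro x hx1 hx2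
            rw [Walk.support_cons, List.mem_cons] at hx2
            rcases hx2 with rfl | hx2
            · rfl
            · rw [Walk.support_reverse, List.mem_reverse] at hx2
              exact absurd (hP2sub x hx1) (hQ'P x hx2)
          have pair12c : ∀ x ∈ P2.support,
              ∀ z ∈ (Walk.cons hyf.symm Q'.reverse).support,
              x ≠ f → z ≠ f → ¬H.Adj x z := by
            intro x hx z hz hxf hzf hadj
            rw [Walk.support_cons, List.mem_cons] at hz
            rcases hz with rfl | hz
            · exact hzf rfl
            · rw [Walk.support_reverse, List.mem_reverse] at hz
              by_cases hzy : z = y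
              · subst hzy
                exact hxf (hlast x (by rw [← hP26]; exact hx) hadj.symm)
              · exact hQ'nb z hz hzy x (hP2sub x hx) hadj.symm
          have hP1len : P1.length ≠ 0 := by
            intro h
            exact hfv1 (Walk.eq_of_length_eq_zero h).symm
          have hP2len : P2.length ≠ 0 := by
            intro h
            exact hfv2 (Walk.eq_of_length_eq_zero h)
          refine ⟨f, ThreeExits.fin3 v1 v2 v3,
            ThreeExits.fin3W P1.reverse P2 (Walk.cons hyf.symm Q'.reverse), ?_, ?_, ?_⟩
          · intro i
            fin_cases i
            · exact ⟨ThreeExits.ind_reverse hP1ind,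
                by show 1 ≤ P1.reverse.length; rw [Walk.length_reverse]; omega, hv1⟩
            · exact ⟨hP2ind, by show 1 ≤ P2.length; omega, hv2⟩
            · exact ⟨hW2ind,
                by show 1 ≤ (Walk.cons hyf.symm Q'.reverse).length
                   rw [Walk.length_cons]; omega, hv3⟩
          · intro i j hij
            fin_cases i <;> fin_cases j <;> simp only [Fin.mk_zero, Fin.mk_one] at hij ⊢
            · exact absurd rfl hij
            · exact ⟨pair01m, pair01c⟩
            · exact ⟨pair02m, pair02c⟩
            · exact ⟨fun x h1 h2 => pair01m x h2 h1,
                fun x hx z hz hxf hzf hadj => pair01c z hz x hx hzf hxf hadj.symm⟩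
            · exact absurd rfl hij
            · exact ⟨pair12m, pair12c⟩
            · exact ⟨fun x h1 h2 => pair02m x h2 h1,
                fun x hx z hz hxf hzf hadj => pair02c z hz x hx hzf hxf hadj.symm⟩
            · exact ⟨fun x h1 h2 => pair12m x h2 h1,
                fun x hx z hz hxf hzf hadj => pair12c z hz x hx hzf hxf hadj.symm⟩
            · exact absurd rfl hij
          · intro x hx hx1 hx2 hx3 i
            have hx' : x ∈ P1.reverse.support ∨ x ∈ P2.support ∨
                x ∈ (Walk.cons hyf.symm Q'.reverse).support := hx
            have hxcase : x ∈ P.support ∨ x ∈ Q'.support := by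
              rcases hx' with hx | hx | hx
              · rw [Walk.support_reverse, List.mem_reverse] at hx
                exact Or.inl (hP1sub x hx)
              · exact Or.inl (hP2sub x hx)
              · rw [Walk.support_cons, List.mem_cons] at hx
                rcases hx with rfl | hx
                · exact Or.inl hfP
                · rw [Walk.support_reverse, List.mem_reverse] at hx
                  exact Or.inr hx
            fin_cases i
            · rcases hxcase with hx' | hx'
              · exact fun h => hx1 (hP_A x hx' h)
              · exact hstray0 x hx'
            · rcases hxcase with hx' | hx'
              · exact fun h => hx2 (hP_B x hx' h)
              · exact hstray1 x hx'
            · rcases hxcase with hx' | hx'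
              · exact hPV3 x hx'
              · exact fun h => hx3 (hQ'3 x hx' h)
      · -- g ≠ f : triangle or contradiction
        have hstray0 : ∀ x ∈ Q'.support, x ∉ Vs 0 := by
          intro x hx hxV
          have hv1nP6 : v1 ∉ P6.support := by
            intro h
            have hveq : v1 = f := hmeet12 v1 P1.start_mem_support (hP6sub v1 h)
            rw [hveq] at h
            exact hgf (hmeet56 f P5.start_mem_support h).symm
          set CW : H.Walk v3 v2 := Q'.append (Walk.cons hyg P6) with hCW
          have hCWsub : ∀ z ∈ CW.support, z ∈ (↑T : Set W) := by
            intro z hz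
            rw [Walk.mem_support_append_iff] at hz
            rcases hz with hz | hz
            · exact hQ'T z hz
            · rw [Walk.support_cons, List.mem_cons] at hz
              rcases hz with rfl | hz
              · exact hQ'T z Q'.end_mem_support
              · exact hPT z (hP2sub z (hP6sub z hz))
          have hCS : C CW.support.toFinset := by
            constructor
            · intro a ha b hb
              rw [List.mem_toFinset] at ha hb
              obtain ⟨t, ht⟩ := ThreeExits.conn_of_walk CW a ha b hb
              exact ⟨t, fun z hz => List.mem_toFinset.mpr (ht z hz)⟩
            · intro i
              fin_cases i
              · exact ⟨x, List.mem_toFinset.mpr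
                  (by rw [Walk.mem_support_append_iff]; exact Or.inl hx), hxV⟩
              · exact ⟨v2, List.mem_toFinset.mpr CW.end_mem_support, hv2⟩
              · exact ⟨v3, List.mem_toFinset.mpr CW.start_mem_support, hv3⟩
          have hv1nCW : v1 ∉ CW.support := by
            intro h
            rw [Walk.mem_support_append_iff] at h
            rcases h with h | h
            · exact hQ'P v1 h P.start_mem_support
            · rw [Walk.support_cons, List.mem_cons] at h
              rcases h with rfl | h
              · exact hynP P.start_mem_support
              · exact hv1nP6 h
          have hsubT : CW.support.toFinset ⊆ T := fun z hz =>
            hCWsub z (List.mem_toFinset.mp hz)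
          have hlt : CW.support.toFinset.card < T.card :=
            Finset.card_lt_card ((Finset.ssubset_iff_of_subset hsubT).mpr
              ⟨v1, hPT v1 P.start_mem_support,
                fun h => hv1nCW (List.mem_toFinset.mp h)⟩)
          exact absurd (hTmin _ hCS) (by omega)
        cases P5 with
        | nil => exact absurd rfl hgf
        | cons hfs rest =>
          rename_i s
          have hrestpath : rest.IsPath := hP5path.of_cons
          have hfnrest : f ∉ rest.support := by
            rw [Walk.cons_isPath_iff] at hP5path
            exact hP5path.2
          have hsP5 : s ∈ (Walk.cons hfs rest).support := by
            rw [Walk.support_cons, List.mem_cons]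
            exact Or.inr rest.start_mem_support
          have hsP2 : s ∈ P2.support := hP5sub s hsP5
          have hsP : s ∈ P.support := hP2sub s hsP2
          have hsf : s ≠ f := fun h => hfs.ne h.symm
          by_cases hsg : s = g
          · -- triangle outcome
            obtain rfl : g = s := hsg.symm
            have hfg : H.Adj f g := hfs
            have hrestnil : rest = Walk.nil := ThreeExits.path_loop_nil hrestpath
            rw [hrestnil] at hP2eq
            have hP6ind : IsInducedPathW H P6 := by
              have h := hPind
              rw [hPeq] at h
              have h2 := ThreeExits.ind_of_append_right h
              rw [hP2eq] at h2
              exact ThreeExits.ind_of_append_right h2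
            have hfP5 : f ∈ (Walk.cons hfg Walk.nil).support := by simp
            have hgP5 : g ∈ (Walk.cons hfg Walk.nil).support := by simp
            have hmeet56' : ∀ z, z ∈ (Walk.cons hfg Walk.nil).support →
                z ∈ P6.support → z = g := by
              rw [hP2eq] at hP2path
              exact ThreeExits.meet_of_append_path hP2path
            have hfnP6 : f ∉ P6.support := by
              intro h
              exact hgf (hmeet56' f hfP5 h).symm
            have d01 : ∀ x, x ∈ P1.support → x ∉ P6.support := by
              intro x hx h
              have : x = f := hmeet12 x hx (hP6sub x h)
              rw [this] at h
              exact hfnP6 h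
            have hgnP1 : g ∉ P1.support := by
              intro h
              have : g = f := hmeet12 g h hsP2
              exact hgf this
            have cross01 : ∀ x ∈ P1.support, ∀ z ∈ P6.support,
                H.Adj x z → x = f ∧ z = g := by
              intro x hx z hz hadj
              have hxP : x ∈ P.support := hP1sub x hx
              have hzP : z ∈ P.support := hP2sub z (hP6sub z hz)
              have h := hPind.2 x z hxP hzP hadj
              rw [hPeq, hP2eq] at h
              rw [Walk.toSubgraph_append, Subgraph.sup_adj,
                Walk.toSubgraph_append, Subgraph.sup_adj] at h
              rcases h with h | h | h
              · exfalso
                have : z ∈ P1.support := by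
                  have := h.snd_mem
                  rwa [Walk.mem_verts_toSubgraph] at this
                exact d01 z this hz
              · simp only [Walk.toSubgraph, Subgraph.sup_adj, subgraphOfAdj_adj,
                  singletonSubgraph_adj, Pi.bot_apply, Prop.bot_eq_false, or_false] at h
                rw [Sym2.eq_iff] at h
                rcases h with ⟨rfl, rfl⟩ | ⟨rfl, rfl⟩
                · exact ⟨rfl, rfl⟩
                · exact absurd hx hgnP1
              · exfalso
                have : x ∈ P6.support := by
                  have := h.fst_mem
                  rwa [Walk.mem_verts_toSubgraph] at this
                exact d01 x hx this
            have cross02 : ∀ x ∈ P1.support, ∀ z ∈ Q'.support,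
                H.Adj x z → x = f ∧ z = y := by
              intro x hx z hz hadj
              by_cases hzy : z = y
              · subst hzy
                exact ⟨hfirst x hx hadj.symm, rfl⟩
              · exact absurd hadj.symm (hQ'nb z hz hzy x (hP1sub x hx))
            have cross12 : ∀ x ∈ P6.support, ∀ z ∈ Q'.support,
                H.Adj x z → x = g ∧ z = y := by
              intro x hx z hz hadj
              by_cases hzy : z = y
              · subst hzy
                exact ⟨hlast x hx hadj.symm, rfl⟩
              · exact absurd hadj.symm
                  (hQ'nb z hz hzy x (hP2sub x (hP6sub x hx)))
            right; right
            refine ⟨ThreeExits.fin3 f g y, ThreeExits.fin3 v1 v2 v3,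
              ThreeExits.fin3W' P1.reverse P6 Q'.reverse, ?_, ?_, ?_, ?_⟩
            · intro i
              fin_cases i
              · exact ⟨ThreeExits.ind_reverse hP1ind, hv1⟩
              · exact ⟨hP6ind, hv2⟩
              · exact ⟨ThreeExits.ind_reverse hQ'ind, hv3⟩
            · intro i j hij
              fin_cases i <;> fin_cases j <;>
                first
                | exact absurd rfl hij
                | exact hfg
                | exact hfg.symm
                | exact hyf.symm
                | exact hyf
                | exact hyg.symm
                | exact hyg
            · intro i j hij
              have m01 : ∀ x : W, x ∈ P1.reverse.support → x ∉ P6.support := by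
                intro x hx
                rw [Walk.support_reverse, List.mem_reverse] at hx
                exact d01 x hx
              have m02 : ∀ x : W, x ∈ P1.reverse.support → x ∉ Q'.reverse.support := by
                intro x hx h
                rw [Walk.support_reverse, List.mem_reverse] at hx h
                exact hQ'P x h (hP1sub x hx)
              have m12 : ∀ x : W, x ∈ P6.support → x ∉ Q'.reverse.support := by
                intro x hx h
                rw [Walk.support_reverse, List.mem_reverse] at h
                exact hQ'P x h (hP2sub x (hP6sub x hx))
              have c01 : ∀ x ∈ P1.reverse.support, ∀ z ∈ P6.support,
                  H.Adj x z → x = f ∧ z = g := by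
                intro x hx
                rw [Walk.support_reverse, List.mem_reverse] at hx
                exact cross01 x hx
              have c02 : ∀ x ∈ P1.reverse.support, ∀ z ∈ Q'.reverse.support,
                  H.Adj x z → x = f ∧ z = y := by
                intro x hx z hz
                rw [Walk.support_reverse, List.mem_reverse] at hx hz
                exact cross02 x hx z hz
              have c12 : ∀ x ∈ P6.support, ∀ z ∈ Q'.reverse.support,
                  H.Adj x z → x = g ∧ z = y := by
                intro x hx z hz
                rw [Walk.support_reverse, List.mem_reverse] at hz
                exact cross12 x hx z hz
              fin_cases i <;> fin_cases j <;> simp only [Fin.mk_zero, Fin.mk_one] at hij ⊢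
              · exact absurd rfl hij
              · exact ⟨m01, c01⟩
              · exact ⟨m02, c02⟩
              · exact ⟨fun x hx h => m01 x h hx,
                  fun x hx z hz hadj => (c01 z hz x hx hadj.symm).symm⟩
              · exact absurd rfl hij
              · exact ⟨m12, c12⟩
              · exact ⟨fun x hx h => m02 x h hx,
                  fun x hx z hz hadj => (c02 z hz x hx hadj.symm).symm⟩
              · exact ⟨fun x hx h => m12 x h hx,
                  fun x hx z hz hadj => (c12 z hz x hx hadj.symm).symm⟩
              · exact absurd rfl hij
            · intro x hx hx1 hx2 hx3 i
              have hx' : x ∈ P1.reverse.support ∨ x ∈ P6.support ∨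
                  x ∈ Q'.reverse.support := hx
              have hxcase : x ∈ P.support ∨ x ∈ Q'.support := by
                rcases hx' with hx | hx | hx
                · rw [Walk.support_reverse, List.mem_reverse] at hx
                  exact Or.inl (hP1sub x hx)
                · exact Or.inl (hP2sub x (hP6sub x hx))
                · rw [Walk.support_reverse, List.mem_reverse] at hx
                  exact Or.inr hx
              fin_cases i
              · rcases hxcase with hc | hc
                · exact fun h => hx1 (hP_A x hc h)
                · exact hstray0 x hc
              · rcases hxcase with hc | hc
                · exact fun h => hx2 (hP_B x hc h)
                · exact hstray1 x hc
              · rcases hxcase with hc | hc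
                · exact hPV3 x hc
                · exact fun h => hx3 (hQ'3 x hc h)
          · -- contradiction: shortcut through y
            exfalso
            set CW : H.Walk v1 v2 :=
              P1.append (Walk.cons hyf.symm
                ((Q'.reverse.append Q').append (Walk.cons hyg P6))) with hCW
            have hmemCW : ∀ z ∈ CW.support, z ∈ P1.support ∨ z = f ∨
                z ∈ Q'.support ∨ z = y ∨ z ∈ P6.support := by
              intro z hz
              simp only [hCW, Walk.mem_support_append_iff, Walk.support_cons,
                List.mem_cons, Walk.support_reverse, List.mem_reverse] at hz
              tauto
            have hCWsub : ∀ z ∈ CW.support, z ∈ (↑T : Set W) := by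
              intro z hz
              rcases hmemCW z hz with h | rfl | h | rfl | h
              · exact hPT z (hP1sub z h)
              · exact hPT z (hP1sub z P1.end_mem_support)
              · exact hQ'T z h
              · exact hQ'T z Q'.end_mem_support
              · exact hPT z (hP2sub z (hP6sub z h))
            have hCS : C CW.support.toFinset := by
              constructor
              · intro a ha b hb
                rw [List.mem_toFinset] at ha hb
                obtain ⟨t, ht⟩ := ThreeExits.conn_of_walk CW a ha b hb
                exact ⟨t, fun z hz => List.mem_toFinset.mpr (ht z hz)⟩
              · intro i
                fin_cases i
                · exact ⟨v1, List.mem_toFinset.mpr CW.start_mem_support, hv1⟩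
                · exact ⟨v2, List.mem_toFinset.mpr CW.end_mem_support, hv2⟩
                · refine ⟨v3, List.mem_toFinset.mpr ?_, hv3⟩
                  rw [hCW]
                  rw [Walk.mem_support_append_iff]
                  right
                  rw [Walk.support_cons, List.mem_cons]
                  right
                  rw [Walk.mem_support_append_iff]
                  left
                  rw [Walk.mem_support_append_iff]
                  right
                  exact hv3Q'
            have hsnCW : s ∉ CW.support := by
              intro h
              rcases hmemCW s h with h | h | h | h | h
              · exact hsf (hmeet12 s h hsP2)
              · exact hsf h
              · exact hQ'P s h hsP
              · exact hynP (h ▸ hsP)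
              · exact hsg (hmeet56 s hsP5 h)
            have hsubT : CW.support.toFinset ⊆ T := fun z hz =>
              hCWsub z (List.mem_toFinset.mp hz)
            have hlt : CW.support.toFinset.card < T.card :=
              Finset.card_lt_card ((Finset.ssubset_iff_of_subset hsubT).mpr
                ⟨s, hPT s hsP, fun h => hsnCW (List.mem_toFinset.mp h)⟩)
            exact absurd (hTmin _ hCS) (by omega)
end

section
/- Let F be the line-graph of a bipartite subdivision of K4. Then F contains an odd prism as an induced subgraph. -/
open SimpleGraph

/-- Two walks meet exactly in the vertex `e`. -/
def MeetOnly {W : Type*} (R : SimpleGraph W) (e : W) {a b c d : W}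
    (P : R.Walk a b) (Q : R.Walk c d) : Prop :=
  ∀ x : W, x ∈ P.support → x ∈ Q.support → x = e

/-- Two walks are vertex-disjoint. -/
def DisjW {W : Type*} (R : SimpleGraph W) {a b c d : W}
    (P : R.Walk a b) (Q : R.Walk c d) : Prop :=
  ∀ x : W, x ∈ P.support → x ∉ Q.support

/-- `R` is a subdivision of `K₄`: there are four branch vertices `a, b, c, d` and six
internally disjoint paths joining them (one for each pair), which together cover all
vertices and all edges of `R`. -/
def IsSubdivK4 {W : Type*} (R : SimpleGraph W) : Prop :=
  ∃ (a b c d : W) (Pab : R.Walk a b) (Pac : R.Walk a c) (Pad : R.Walk a d)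
    (Pbc : R.Walk b c) (Pbd : R.Walk b d) (Pcd : R.Walk c d),
    a ≠ b ∧ a ≠ c ∧ a ≠ d ∧ b ≠ c ∧ b ≠ d ∧ c ≠ d ∧
    Pab.IsPath ∧ Pac.IsPath ∧ Pad.IsPath ∧ Pbc.IsPath ∧ Pbd.IsPath ∧ Pcd.IsPath ∧
    MeetOnly R a Pab Pac ∧ MeetOnly R a Pab Pad ∧ MeetOnly R a Pac Pad ∧
    MeetOnly R b Pab Pbc ∧ MeetOnly R b Pab Pbd ∧ MeetOnly R b Pbc Pbd ∧
    MeetOnly R c Pac Pbc ∧ MeetOnly R c Pac Pcd ∧ MeetOnly R c Pbc Pcd ∧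
    MeetOnly R d Pad Pbd ∧ MeetOnly R d Pad Pcd ∧ MeetOnly R d Pbd Pcd ∧
    DisjW R Pab Pcd ∧ DisjW R Pac Pbd ∧ DisjW R Pad Pbc ∧
    (∀ x : W, x ∈ Pab.support ∨ x ∈ Pac.support ∨ x ∈ Pad.support ∨
      x ∈ Pbc.support ∨ x ∈ Pbd.support ∨ x ∈ Pcd.support) ∧
    (∀ x y : W, R.Adj x y →
      Pab.toSubgraph.Adj x y ∨ Pac.toSubgraph.Adj x y ∨ Pad.toSubgraph.Adj x y ∨
      Pbc.toSubgraph.Adj x y ∨ Pbd.toSubgraph.Adj x y ∨ Pcd.toSubgraph.Adj x y)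

namespace OddPrismAux

open SimpleGraph Walk

variable {W : Type*} {R : SimpleGraph W}

/-- The edge of `R` given by an adjacency, as a vertex of the line graph. -/
def eAdj {u w : W} (had : R.Adj u w) : R.edgeSet := ⟨s(u, w), had⟩

/-- The last edge of the nonempty walk `cons had q`. -/
def lastE : {u w v : W} → (had : R.Adj u w) → (q : R.Walk w v) → R.edgeSet
  | u, _, _, had, .nil => ⟨s(u, _), had⟩
  | _, _, _, _, .cons had' q => lastE had' q

@[simp] lemma lastE_nil {u w : W} (had : R.Adj u w) : lastE had .nil = eAdj had := rfl

@[simp] lemma lastE_cons {u w x v : W} (had : R.Adj u w) (had' : R.Adj w x) (q : R.Walk x v) :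
    lastE had (.cons had' q) = lastE had' q := rfl

lemma lineGraph_adj_of_ne {e f : R.edgeSet} (hne : e ≠ f) (x : W) (hx : x ∈ (e : Sym2 W))
    (hx' : x ∈ (f : Sym2 W)) : R.lineGraph.Adj e f :=
  lineGraph_adj_iff_exists.mpr ⟨hne, x, hx, hx'⟩

lemma lineWalk_adj {u w x : W} (had : R.Adj u w) (had' : R.Adj w x) (hux : u ≠ x) :
    R.lineGraph.Adj (eAdj had) (eAdj had') := by
  refine lineGraph_adj_of_ne ?_ w (by simp [eAdj]) (by simp [eAdj])
  intro h
  rw [Subtype.ext_iff] at h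
  simp only [eAdj, Sym2.eq_iff] at h
  rcases h with ⟨h1, h2⟩ | ⟨h1, -⟩
  · exact had.ne h1
  · exact hux h1

/-- The walk in the line graph corresponding to a nonempty path in `R`. -/
def lineWalk : {u w v : W} → (had : R.Adj u w) → (q : R.Walk w v) →
    (Walk.cons had q).IsPath → R.lineGraph.Walk (eAdj had) (lastE had q)
  | _, _, _, _, .nil, _ => Walk.nil
  | u, w, v, had, .cons had' q, hp =>
    Walk.cons (lineWalk_adj had had' (by
      rintro rfl
      have h2 := ((Walk.cons_isPath_iff _ _).mp hp).2
      rw [Walk.support_cons] at h2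
      exact h2 (List.mem_cons_of_mem _ q.start_mem_support))) (lineWalk had' q hp.of_cons)

@[simp] lemma lineWalk_length {u w v : W} (had : R.Adj u w) (q : R.Walk w v)
    (hp : (Walk.cons had q).IsPath) : (lineWalk had q hp).length = q.length := by
  induction q generalizing u with
  | nil => rfl
  | cons had' q ih => simp [lineWalk, ih]

@[simp] lemma lineWalk_support_map {u w v : W} (had : R.Adj u w) (q : R.Walk w v)
    (hp : (Walk.cons had q).IsPath) :
    (lineWalk had q hp).support.map Subtype.val = (Walk.cons had q).edges := by
  induction q generalizing u with
  | nil => rfl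
  | cons had' q ih =>
    show List.map Subtype.val (eAdj had :: (lineWalk had' q hp.of_cons).support) = _
    rw [List.map_cons, ih]; rfl

lemma mem_lineWalk_support {u w v : W} {had : R.Adj u w} {q : R.Walk w v}
    {hp : (Walk.cons had q).IsPath} {x : R.edgeSet} :
    x ∈ (lineWalk had q hp).support ↔ (x : Sym2 W) ∈ (Walk.cons had q).edges := by
  rw [← lineWalk_support_map had q hp]
  exact (List.mem_map_of_injective Subtype.val_injective).symm

lemma lineWalk_isPath {u w v : W} (had : R.Adj u w) (q : R.Walk w v)
    (hp : (Walk.cons had q).IsPath) : (lineWalk had q hp).IsPath := by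
  refine Walk.IsPath.mk' (List.Nodup.of_map Subtype.val ?_)
  rw [lineWalk_support_map]
  exact hp.isTrail.edges_nodup

lemma mem_support_of_edge {u v : W} (p : R.Walk u v) {e : Sym2 W} (he : e ∈ p.edges)
    {x : W} (hx : x ∈ e) : x ∈ p.support := by
  induction e using Sym2.ind with
  | _ c d =>
    rcases Sym2.mem_iff.mp hx with rfl | rfl
    · exact p.fst_mem_support_of_mem_edges he
    · exact p.snd_mem_support_of_mem_edges he

@[simp] lemma lastE_val_mem {u w v : W} (had : R.Adj u w) (q : R.Walk w v) :
    (lastE had q : Sym2 W) ∈ (Walk.cons had q).edges := by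
  induction q generalizing u with
  | nil => simp [lastE, eAdj]
  | cons had' q ih =>
    rw [lastE_cons, Walk.edges_cons]
    exact List.mem_cons_of_mem _ (ih had')

@[simp] lemma end_mem_lastE {u w v : W} (had : R.Adj u w) (q : R.Walk w v) :
    v ∈ (lastE had q : Sym2 W) := by
  induction q generalizing u with
  | nil => simp [lastE]
  | cons had' q ih => rw [lastE_cons]; exact ih had'

lemma first_unique {u w v : W} (had : R.Adj u w) (q : R.Walk w v)
    (hp : (Walk.cons had q).IsPath) {e : Sym2 W} (he : e ∈ (Walk.cons had q).edges)
    (hu : u ∈ e) : e = s(u, w) := by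
  rw [Walk.edges_cons, List.mem_cons] at he
  rcases he with rfl | he
  · rfl
  · exact absurd (mem_support_of_edge q he hu) ((Walk.cons_isPath_iff _ _).mp hp).2

lemma end_not_mem_first {u w v : W} (had : R.Adj u w) (q : R.Walk w v)
    (hp : (Walk.cons had q).IsPath) (hq : ¬ q.Nil) : v ∉ s(u, w) := by
  cases q with
  | nil => exact absurd Walk.Nil.nil hq
  | cons had' q =>
    intro hv
    have h2 := ((Walk.cons_isPath_iff _ _).mp hp).2
    have h3 := ((Walk.cons_isPath_iff _ _).mp hp.of_cons).2
    rcases Sym2.mem_iff.mp hv with rfl | rfl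
    · exact h2 (Walk.end_mem_support _)
    · exact h3 (Walk.end_mem_support _)

lemma last_unique {u w v : W} (had : R.Adj u w) (q : R.Walk w v)
    (hp : (Walk.cons had q).IsPath) {e : Sym2 W} (he : e ∈ (Walk.cons had q).edges)
    (hv : v ∈ e) : e = (lastE had q : Sym2 W) := by
  induction q generalizing u with
  | nil =>
    simp only [Walk.edges_cons, Walk.edges_nil, List.mem_cons, List.not_mem_nil, or_false] at he
    simp [he, lastE]
  | cons had' q ih =>
    rw [Walk.edges_cons, List.mem_cons] at he
    rcases he with rfl | he
    · exact absurd hv (end_not_mem_first had _ hp (by simp))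
    · rw [lastE_cons]
      exact ih had' hp.of_cons he hv

lemma start_not_mem_lastE {u w v : W} (had : R.Adj u w) (q : R.Walk w v)
    (hp : (Walk.cons had q).IsPath) (hq : ¬ q.Nil) : u ∉ (lastE had q : Sym2 W) := by
  intro hu
  have h1 := first_unique had q hp (lastE_val_mem had q) hu
  have h2 := end_mem_lastE had q
  rw [h1] at h2
  exact end_not_mem_first had q hp hq h2

lemma first_ne_lastE {u w v : W} (had : R.Adj u w) (q : R.Walk w v)
    (hp : (Walk.cons had q).IsPath) (hq : ¬ q.Nil) : eAdj had ≠ lastE had q := by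
  intro h
  have h2 := end_mem_lastE had q
  rw [← h] at h2
  exact end_not_mem_first had q hp hq h2

lemma sym2_eq_of_mem_pair {a b : W} (hab : a ≠ b) {e : Sym2 W} (hd : ¬ e.IsDiag)
    (h : ∀ x ∈ e, x = a ∨ x = b) : e = s(a, b) := by
  induction e using Sym2.ind with
  | _ c d =>
    have hc := h c (by simp)
    have hd' := h d (by simp)
    rw [Sym2.isDiag_iff_proj_eq] at hd
    rcases hc with rfl | rfl <;> rcases hd' with rfl | rfl
    · exact absurd rfl hd
    · rfl
    · exact Sym2.eq_swap
    · exact absurd rfl hd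

lemma lineWalk_toSubgraph_adj {u w v : W} (had : R.Adj u w) (q : R.Walk w v)
    (hp : (Walk.cons had q).IsPath) {e f : R.edgeSet}
    (he : (e : Sym2 W) ∈ (Walk.cons had q).edges) (hf : (f : Sym2 W) ∈ (Walk.cons had q).edges)
    (hef : e ≠ f) {x : W} (hxe : x ∈ (e : Sym2 W)) (hxf : x ∈ (f : Sym2 W)) :
    (lineWalk had q hp).toSubgraph.Adj e f := by
  induction q generalizing u with
  | nil =>
    simp only [Walk.edges_cons, Walk.edges_nil, List.mem_cons, List.not_mem_nil, or_false] at he hf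
    exact absurd (Subtype.ext (he.trans hf.symm)) hef
  | cons had' q ih =>
    rename_i w' x' v'
    have hkey : ∀ e' f' : R.edgeSet, (e' : Sym2 W) = s(u, w') →
        (f' : Sym2 W) ∈ (Walk.cons had' q).edges → ∀ y : W, y ∈ (e' : Sym2 W) →
        y ∈ (f' : Sym2 W) → (lineWalk had (.cons had' q) hp).toSubgraph.Adj e' f' := by
      intro e' f' he' hf' y hye hyf
      have hyw : y = w' := by
        rcases Sym2.mem_iff.mp (he' ▸ hye) with rfl | rfl
        · exact absurd (mem_support_of_edge _ hf' hyf) ((Walk.cons_isPath_iff _ _).mp hp).2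
        · rfl
      rw [hyw] at hyf
      have hf'' : (f' : Sym2 W) = s(w', x') := first_unique had' q hp.of_cons hf' hyf
      have he2 : e' = eAdj had := Subtype.ext he'
      have hf2 : f' = eAdj had' := Subtype.ext hf''
      subst he2; subst hf2
      show ((R.lineGraph.subgraphOfAdj _) ⊔ _).Adj _ _
      exact SimpleGraph.Subgraph.sup_adj.mpr (Or.inl (by simp))
    rw [Walk.edges_cons, List.mem_cons] at he hf
    rcases he with he | he <;> rcases hf with hf | hf
    · exact absurd (Subtype.ext (he.trans hf.symm)) hef
    · exact hkey e f he hf x hxe hxf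
    · exact (hkey f e hf he x hxf hxe).symm
    · exact SimpleGraph.Subgraph.sup_adj.mpr (Or.inr (ih had' hp.of_cons he hf))

lemma lineWalk_induced {u w v : W} (had : R.Adj u w) (q : R.Walk w v)
    (hp : (Walk.cons had q).IsPath) : IsInducedPathW R.lineGraph (lineWalk had q hp) := by
  refine ⟨lineWalk_isPath had q hp, ?_⟩
  intro x y hx hy hadj
  obtain ⟨hne, z, hz1, hz2⟩ := lineGraph_adj_iff_exists.mp hadj
  exact lineWalk_toSubgraph_adj had q hp (mem_lineWalk_support.mp hx)
    (mem_lineWalk_support.mp hy) hne hz1 hz2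

lemma pair_lemma {a b : W} (hab : a ≠ b)
    {w₁ w₂ : W} (had₁ : R.Adj a w₁) (q₁ : R.Walk w₁ b) (h1 : (Walk.cons had₁ q₁).IsPath)
    (had₂ : R.Adj a w₂) (q₂ : R.Walk w₂ b) (h2 : (Walk.cons had₂ q₂).IsPath)
    (hn1 : ¬ q₁.Nil) (hn2 : ¬ q₂.Nil)
    (m : ∀ x, x ∈ (Walk.cons had₁ q₁).support → x ∈ (Walk.cons had₂ q₂).support →
      x = a ∨ x = b) :
    PriPair R.lineGraph (eAdj had₁) (lastE had₁ q₁) (eAdj had₂) (lastE had₂ q₂)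
      (lineWalk had₁ q₁ h1) (lineWalk had₂ q₂ h2) ∧
    R.lineGraph.Adj (eAdj had₁) (eAdj had₂) ∧
    R.lineGraph.Adj (lastE had₁ q₁) (lastE had₂ q₂) := by
  have hab_edge : ∀ e : R.edgeSet, (e : Sym2 W) ∈ (Walk.cons had₁ q₁).edges →
      (e : Sym2 W) ∈ (Walk.cons had₂ q₂).edges → False := by
    intro e he1 he2
    have heq : (e : Sym2 W) = s(a, b) := by
      refine sym2_eq_of_mem_pair hab (R.not_isDiag_of_mem_edgeSet e.2) ?_
      intro x hx
      exact m x (mem_support_of_edge _ he1 hx) (mem_support_of_edge _ he2 hx)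
    have hae : a ∈ (e : Sym2 W) := by rw [heq]; simp
    have hbe : b ∈ (e : Sym2 W) := by rw [heq]; simp
    have hfu := first_unique had₁ q₁ h1 he1 hae
    rw [hfu] at hbe
    exact end_not_mem_first had₁ q₁ h1 hn1 hbe
  have hdisj : ∀ x : R.edgeSet, x ∈ (lineWalk had₁ q₁ h1).support →
      x ∉ (lineWalk had₂ q₂ h2).support := by
    intro x hx1 hx2
    exact hab_edge x (mem_lineWalk_support.mp hx1) (mem_lineWalk_support.mp hx2)
  have hedges : ∀ x ∈ (lineWalk had₁ q₁ h1).support, ∀ y ∈ (lineWalk had₂ q₂ h2).support,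
      R.lineGraph.Adj x y → (x = eAdj had₁ ∧ y = eAdj had₂) ∨
        (x = lastE had₁ q₁ ∧ y = lastE had₂ q₂) := by
    intro x hx y hy hadj
    rw [mem_lineWalk_support] at hx hy
    obtain ⟨hne, z, hz1, hz2⟩ := lineGraph_adj_iff_exists.mp hadj
    rcases m z (mem_support_of_edge _ hx hz1) (mem_support_of_edge _ hy hz2) with rfl | rfl
    · exact Or.inl ⟨Subtype.ext (first_unique had₁ q₁ h1 hx hz1),
        Subtype.ext (first_unique had₂ q₂ h2 hy hz2)⟩
    · exact Or.inr ⟨Subtype.ext (last_unique had₁ q₁ h1 hx hz1),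
        Subtype.ext (last_unique had₂ q₂ h2 hy hz2)⟩
  have hfadj : R.lineGraph.Adj (eAdj had₁) (eAdj had₂) := by
    refine lineGraph_adj_of_ne ?_ a (by simp [eAdj]) (by simp [eAdj])
    intro h
    rw [Subtype.ext_iff] at h
    simp only [eAdj, Sym2.eq_iff] at h
    have hw : w₁ = w₂ := by
      rcases h with ⟨-, h⟩ | ⟨-, h⟩
      · exact h
      · exact absurd h.symm had₁.ne
    subst hw
    have hmem1 : w₁ ∈ (Walk.cons had₁ q₁).support := by
      rw [Walk.support_cons]; exact List.mem_cons_of_mem _ q₁.start_mem_support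
    have hmem2 : w₁ ∈ (Walk.cons had₂ q₂).support := by
      rw [Walk.support_cons]; exact List.mem_cons_of_mem _ q₂.start_mem_support
    rcases m w₁ hmem1 hmem2 with h' | h'
    · exact had₁.ne h'.symm
    · subst h'
      exact end_not_mem_first had₁ q₁ h1 hn1 (by simp)
  have hladj : R.lineGraph.Adj (lastE had₁ q₁) (lastE had₂ q₂) := by
    refine lineGraph_adj_of_ne ?_ b (end_mem_lastE _ _) (end_mem_lastE _ _)
    intro h
    have hmem2 : ((lastE had₁ q₁ : R.edgeSet) : Sym2 W) ∈ (Walk.cons had₂ q₂).edges := by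
      rw [h]; exact lastE_val_mem _ _
    exact hab_edge _ (lastE_val_mem _ _) hmem2
  exact ⟨⟨hdisj, hedges⟩, hfadj, hladj⟩

lemma main_prism (R : SimpleGraph W) {a b : W} (hab : a ≠ b)
    (Q₁ Q₂ Q₃ : R.Walk a b) (h1 : Q₁.IsPath) (h2 : Q₂.IsPath) (h3 : Q₃.IsPath)
    (l1 : 2 ≤ Q₁.length) (l2 : 2 ≤ Q₂.length) (l3 : 2 ≤ Q₃.length)
    (e1 : Even Q₁.length) (e2 : Even Q₂.length) (e3 : Even Q₃.length)
    (m12 : ∀ x, x ∈ Q₁.support → x ∈ Q₂.support → x = a ∨ x = b)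
    (m13 : ∀ x, x ∈ Q₁.support → x ∈ Q₃.support → x = a ∨ x = b)
    (m23 : ∀ x, x ∈ Q₂.support → x ∈ Q₃.support → x = a ∨ x = b) :
    ∃ (a₁ a₂ a₃ b₁ b₂ b₃ : R.edgeSet) (P₁ : R.lineGraph.Walk a₁ b₁)
      (P₂ : R.lineGraph.Walk a₂ b₂) (P₃ : R.lineGraph.Walk a₃ b₃),
      IsPrism R.lineGraph a₁ a₂ a₃ b₁ b₂ b₃ P₁ P₂ P₃ ∧
      Odd P₁.length ∧ Odd P₂.length ∧ Odd P₃.length := by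
  cases Q₁ with
  | nil => simp at l1
  | cons had₁ q₁ =>
  cases Q₂ with
  | nil => simp at l2
  | cons had₂ q₂ =>
  cases Q₃ with
  | nil => simp at l3
  | cons had₃ q₃ =>
  rw [Walk.length_cons] at l1 l2 l3 e1 e2 e3
  have hn1 : ¬ q₁.Nil := by rw [Walk.nil_iff_length_eq]; omega
  have hn2 : ¬ q₂.Nil := by rw [Walk.nil_iff_length_eq]; omega
  have hn3 : ¬ q₃.Nil := by rw [Walk.nil_iff_length_eq]; omega
  obtain ⟨pp12, fa12, la12⟩ := pair_lemma hab had₁ q₁ h1 had₂ q₂ h2 hn1 hn2 m12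
  obtain ⟨pp13, fa13, la13⟩ := pair_lemma hab had₁ q₁ h1 had₃ q₃ h3 hn1 hn3 m13
  obtain ⟨pp23, fa23, la23⟩ := pair_lemma hab had₂ q₂ h2 had₃ q₃ h3 hn2 hn3 m23
  refine ⟨eAdj had₁, eAdj had₂, eAdj had₃, lastE had₁ q₁, lastE had₂ q₂, lastE had₃ q₃,
    lineWalk had₁ q₁ h1, lineWalk had₂ q₂ h2, lineWalk had₃ q₃ h3,
    ⟨lineWalk_induced had₁ q₁ h1, lineWalk_induced had₂ q₂ h2, lineWalk_induced had₃ q₃ h3,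
      fa12, fa23, fa13, la12, la23, la13,
      first_ne_lastE had₁ q₁ h1 hn1, first_ne_lastE had₂ q₂ h2 hn2,
      first_ne_lastE had₃ q₃ h3 hn3, pp12, pp13, pp23⟩, ?_, ?_, ?_⟩
  · rw [lineWalk_length]
    exact Nat.not_even_iff_odd.mp (Nat.even_add_one.mp e1)
  · rw [lineWalk_length]
    exact Nat.not_even_iff_odd.mp (Nat.even_add_one.mp e2)
  · rw [lineWalk_length]
    exact Nat.not_even_iff_odd.mp (Nat.even_add_one.mp e3)

lemma even_length_iff (C : R.Coloring (Fin 2)) {u v : W} (p : R.Walk u v) :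
    Even p.length ↔ C u = C v := by
  induction p with
  | nil => simp
  | cons had q ih =>
    have hne : C _ ≠ C _ := C.valid had
    rw [Walk.length_cons, Nat.even_add_one, ih]
    revert hne
    generalize C _ = x; generalize C _ = y; generalize C _ = z
    revert x y z; decide

lemma isPath_append_of_meet {u v x : W} {p : R.Walk u v} {q : R.Walk v x} (hp : p.IsPath)
    (hq : q.IsPath) (h : ∀ z, z ∈ p.support → z ∈ q.support → z = v) :
    (p.append q).IsPath := by
  rw [Walk.isPath_def, Walk.support_append]
  refine List.Nodup.append hp.support_nodup (hq.support_nodup.sublist (List.tail_sublist _)) ?_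
  intro z hz1 hz2
  have hzv := h z hz1 (List.mem_of_mem_tail hz2)
  subst hzv
  have hnd := hq.support_nodup
  rw [Walk.support_eq_cons] at hnd
  exact (List.nodup_cons.mp hnd).1 hz2

lemma meet_symm {e : W} {a b c d : W} {P : R.Walk a b} {Q : R.Walk c d}
    (h : MeetOnly R e P Q) : MeetOnly R e Q P := fun x hx hy => h x hy hx

lemma meet_revl {e : W} {a b c d : W} {P : R.Walk a b} {Q : R.Walk c d}
    (h : MeetOnly R e P Q) : MeetOnly R e P.reverse Q := by
  intro x hx hy
  rw [Walk.support_reverse, List.mem_reverse] at hx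
  exact h x hx hy

lemma meet_revr {e : W} {a b c d : W} {P : R.Walk a b} {Q : R.Walk c d}
    (h : MeetOnly R e P Q) : MeetOnly R e P Q.reverse := meet_symm (meet_revl (meet_symm h))

lemma disj_symm {a b c d : W} {P : R.Walk a b} {Q : R.Walk c d}
    (h : DisjW R P Q) : DisjW R Q P := fun x hx hy => h x hy hx

lemma disj_revl {a b c d : W} {P : R.Walk a b} {Q : R.Walk c d}
    (h : DisjW R P Q) : DisjW R P.reverse Q := by
  intro x hx
  rw [Walk.support_reverse, List.mem_reverse] at hx
  exact h x hx

lemma disj_revr {a b c d : W} {P : R.Walk a b} {Q : R.Walk c d}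
    (h : DisjW R P Q) : DisjW R P Q.reverse := disj_symm (disj_revl (disj_symm h))

lemma length_pos_of_ne {u v : W} (h : u ≠ v) (p : R.Walk u v) : 1 ≤ p.length :=
  Nat.pos_of_ne_zero fun h0 => h (Walk.eq_of_length_eq_zero h0)

lemma setup (R : SimpleGraph W) (C : R.Coloring (Fin 2)) (p q r s : W)
    (hpq : p ≠ q) (hpr : p ≠ r) (hps : p ≠ s) (hqr : q ≠ r) (hqs : q ≠ s)
    (Ppq : R.Walk p q) (Ppr : R.Walk p r) (Pps : R.Walk p s)
    (Pqr : R.Walk q r) (Pqs : R.Walk q s)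
    (h1 : Ppq.IsPath) (h2 : Ppr.IsPath) (h3 : Pps.IsPath) (h4 : Pqr.IsPath) (h5 : Pqs.IsPath)
    (m1 : MeetOnly R p Ppq Ppr) (m2 : MeetOnly R p Ppq Pps) (m3 : MeetOnly R p Ppr Pps)
    (m4 : MeetOnly R q Ppq Pqr) (m5 : MeetOnly R q Ppq Pqs) (m6 : MeetOnly R q Pqr Pqs)
    (m7 : MeetOnly R r Ppr Pqr) (m8 : MeetOnly R s Pps Pqs)
    (d1 : DisjW R Ppr Pqs) (d2 : DisjW R Pqr Pps)
    (hcol : C p = C q) :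
    ∃ (a₁ a₂ a₃ b₁ b₂ b₃ : R.edgeSet) (P₁ : R.lineGraph.Walk a₁ b₁)
      (P₂ : R.lineGraph.Walk a₂ b₂) (P₃ : R.lineGraph.Walk a₃ b₃),
      IsPrism R.lineGraph a₁ a₂ a₃ b₁ b₂ b₃ P₁ P₂ P₃ ∧
      Odd P₁.length ∧ Odd P₂.length ∧ Odd P₃.length := by
  have hQ2 : (Ppr.append Pqr.reverse).IsPath :=
    isPath_append_of_meet h2 h4.reverse (meet_revr m7)
  have hQ3 : (Pps.append Pqs.reverse).IsPath :=
    isPath_append_of_meet h3 h5.reverse (meet_revr m8)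
  have hlpq := length_pos_of_ne hpq Ppq
  have hlpr := length_pos_of_ne hpr Ppr
  have hlqr := length_pos_of_ne hqr Pqr
  have hlps := length_pos_of_ne hps Pps
  have hlqs := length_pos_of_ne hqs Pqs
  have e1 : Even Ppq.length := (even_length_iff C Ppq).mpr hcol
  have e2 : Even (Ppr.append Pqr.reverse).length := by
    rw [Walk.length_append, Walk.length_reverse, Nat.even_add,
      even_length_iff C Ppr, even_length_iff C Pqr, hcol]
  have e3 : Even (Pps.append Pqs.reverse).length := by
    rw [Walk.length_append, Walk.length_reverse, Nat.even_add,
      even_length_iff C Pps, even_length_iff C Pqs, hcol]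
  have l1 : 2 ≤ Ppq.length := by obtain ⟨k, hk⟩ := e1; omega
  have l2 : 2 ≤ (Ppr.append Pqr.reverse).length := by
    rw [Walk.length_append, Walk.length_reverse]; omega
  have l3 : 2 ≤ (Pps.append Pqs.reverse).length := by
    rw [Walk.length_append, Walk.length_reverse]; omega
  have hm12 : ∀ x, x ∈ Ppq.support → x ∈ (Ppr.append Pqr.reverse).support →
      x = p ∨ x = q := by
    intro x hx hy
    rw [Walk.mem_support_append_iff] at hy
    rcases hy with hy | hy
    · exact Or.inl (m1 x hx hy)
    · rw [Walk.support_reverse, List.mem_reverse] at hy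
      exact Or.inr (m4 x hx hy)
  have hm13 : ∀ x, x ∈ Ppq.support → x ∈ (Pps.append Pqs.reverse).support →
      x = p ∨ x = q := by
    intro x hx hy
    rw [Walk.mem_support_append_iff] at hy
    rcases hy with hy | hy
    · exact Or.inl (m2 x hx hy)
    · rw [Walk.support_reverse, List.mem_reverse] at hy
      exact Or.inr (m5 x hx hy)
  have hm23 : ∀ x, x ∈ (Ppr.append Pqr.reverse).support →
      x ∈ (Pps.append Pqs.reverse).support → x = p ∨ x = q := by
    intro x hx hy
    rw [Walk.mem_support_append_iff] at hx hy
    rw [or_iff_not_imp_left] at hx hy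
    by_cases hx1 : x ∈ Ppr.support
    · by_cases hy1 : x ∈ Pps.support
      · exact Or.inl (m3 x hx1 hy1)
      · have hy2 := hy hy1
        rw [Walk.support_reverse, List.mem_reverse] at hy2
        exact absurd hy2 (d1 x hx1)
    · have hx2 := hx hx1
      rw [Walk.support_reverse, List.mem_reverse] at hx2
      by_cases hy1 : x ∈ Pps.support
      · exact absurd hy1 (d2 x hx2)
      · have hy2 := hy hy1
        rw [Walk.support_reverse, List.mem_reverse] at hy2
        exact Or.inr (m6 x hx2 hy2)
  exact main_prism R hpq Ppq (Ppr.append Pqr.reverse) (Pps.append Pqs.reverse)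
    h1 hQ2 hQ3 l1 l2 l3 e1 e2 e3 hm12 hm13 hm23

end OddPrismAux

/-- If `F` is the line-graph of a bipartite subdivision of `K₄`, then
`F` contains an odd prism as an induced subgraph. -/
theorem lineGraph_bipartite_subdivK4_hasOddPrism
    {W : Type*} [Fintype W] [DecidableEq W] (R : SimpleGraph W)
    (h : IsSubdivK4 R) (hbip : R.Colorable 2) :
    ∃ (a₁ a₂ a₃ b₁ b₂ b₃ : R.edgeSet) (P₁ : R.lineGraph.Walk a₁ b₁)
      (P₂ : R.lineGraph.Walk a₂ b₂) (P₃ : R.lineGraph.Walk a₃ b₃),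
      IsPrism R.lineGraph a₁ a₂ a₃ b₁ b₂ b₃ P₁ P₂ P₃ ∧
      Odd P₁.length ∧ Odd P₂.length ∧ Odd P₃.length := by
  obtain ⟨a, b, c, d, Pab, Pac, Pad, Pbc, Pbd, Pcd,
    hab, hac, had, hbc, hbd, hcd,
    pab, pac, pad, pbc, pbd, pcd,
    mA1, mA2, mA3, mB1, mB2, mB3, mC1, mC2, mC3, mD1, mD2, mD3,
    dis1, dis2, dis3, hcover, hedges⟩ := h
  obtain ⟨C⟩ := hbip
  by_cases hab' : C a = C b
  · exact OddPrismAux.setup R C a b c d hab hac had hbc hbd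
      Pab Pac Pad Pbc Pbd pab pac pad pbc pbd
      mA1 mA2 mA3 mB1 mB2 mB3 mC1 mD1 dis2 (OddPrismAux.disj_symm dis3) hab'
  by_cases hac' : C a = C c
  · exact OddPrismAux.setup R C a c b d hac hab had hbc.symm hcd
      Pac Pab Pad Pbc.reverse Pcd pac pab pad pbc.reverse pcd
      (OddPrismAux.meet_symm mA1) mA3 mA2 (OddPrismAux.meet_revr mC1) mC2
      (OddPrismAux.meet_revl mC3) (OddPrismAux.meet_revr mB1) mD2
      dis1 (OddPrismAux.disj_revl (OddPrismAux.disj_symm dis3)) hac'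
  have hbc' : C b = C c := by
    revert hab' hac'
    generalize C a = x; generalize C b = y; generalize C c = z
    revert x y z; decide
  exact OddPrismAux.setup R C b c a d hbc hab.symm hbd hac.symm hcd
    Pbc Pab.reverse Pbd Pac.reverse Pcd pbc pab.reverse pbd pac.reverse pcd
    (OddPrismAux.meet_revr (OddPrismAux.meet_symm mB1)) mB3 (OddPrismAux.meet_revl mB2)
    (OddPrismAux.meet_revr (OddPrismAux.meet_symm mC1)) mC3 (OddPrismAux.meet_revl mC2)
    (OddPrismAux.meet_revr (OddPrismAux.meet_revl mA1)) mD3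
    (OddPrismAux.disj_revl dis1) (OddPrismAux.disj_revl dis2) hbc'
end

section
/- Every pyramid contains an odd hole as an induced subgraph. More precisely, if a graph K is a pyramid formed by chordless paths P1, P2, P3 with triangle {b1,b2,b3} and apex a, then two of the paths P1, P2, P3 have the same length parity, and the union of the vertex sets of two such paths induces an odd hole in K. -/
open SimpleGraph

private lemma loop_path_length {V : Type*} {G : SimpleGraph V} {v : V}
    (p : G.Walk v v) (hp : p.IsPath) : p.length = 0 := by
  cases p with
  | nil => rfl
  | cons h q =>
    exfalso
    rw [Walk.cons_isPath_iff] at hp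
    exact hp.2 q.end_mem_support

private lemma path_toSubgraph_adj_ends {V : Type*} {G : SimpleGraph V} {u v : V}
    (p : G.Walk u v) (hp : p.IsPath) (h : p.toSubgraph.Adj u v) : p.length = 1 := by
  induction p with
  | nil => simp [Walk.toSubgraph] at h
  | @cons u w v h' q ih =>
    rw [Walk.cons_isPath_iff] at hp
    simp only [Walk.toSubgraph, Subgraph.sup_adj, subgraphOfAdj_adj] at h
    rcases h with h | h
    · rw [Sym2.eq_iff] at h
      rcases h with ⟨-, hv⟩ | ⟨hu, -⟩
      · subst hv
        have := loop_path_length q hp.1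
        simp [Walk.length_cons, this]
      · exact absurd (by rw [hu]; exact q.end_mem_support) hp.2
    · exfalso
      exact hp.2 ((Walk.mem_verts_toSubgraph q).mp h.fst_mem)

private lemma pair_hole {V : Type*} [DecidableEq V] {G : SimpleGraph V} {a bi bj : V}
    (Pi : G.Walk a bi) (Pj : G.Walk a bj)
    (hi : IsInducedPathW G Pi) (hj : IsInducedPathW G Pj)
    (hadj : G.Adj bi bj)
    (hnot : ¬(G.Adj a bi ∧ G.Adj a bj))
    (hpair : PyrPair G a bi bj Pi Pj)
    (hpar : Pi.length % 2 = Pj.length % 2) :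
    ∃ (v : V) (c : G.Walk v v), IsHoleW G c ∧ Odd c.length ∧
      c.support.toFinset = Pi.support.toFinset ∪ Pj.support.toFinset := by
  have hiP := hi.1
  have hjP := hj.1
  have hleni1 : G.Adj a bi → Pi.length = 1 := fun h =>
    path_toSubgraph_adj_ends Pi hiP (hi.2 a bi Pi.start_mem_support Pi.end_mem_support h)
  have hlenj1 : G.Adj a bj → Pj.length = 1 := fun h =>
    path_toSubgraph_adj_ends Pj hjP (hj.2 a bj Pj.start_mem_support Pj.end_mem_support h)
  have hane_i : a ≠ bi := by
    intro h
    subst h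
    have h0 : Pi.length = 0 := loop_path_length Pi hiP
    have h1 : Pj.length = 1 := hlenj1 hadj
    omega
  have hane_j : a ≠ bj := by
    intro h
    subst h
    have h0 : Pj.length = 0 := loop_path_length Pj hjP
    have h1 : Pi.length = 1 := hleni1 hadj.symm
    omega
  have hlen_i : 1 ≤ Pi.length := by
    rcases Nat.eq_zero_or_pos Pi.length with h | h
    · exact absurd (Walk.eq_of_length_eq_zero h) hane_i
    · exact h
  have hlen_j : 1 ≤ Pj.length := by
    rcases Nat.eq_zero_or_pos Pj.length with h | h
    · exact absurd (Walk.eq_of_length_eq_zero h) hane_j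
    · exact h
  have hnotboth : ¬(Pi.length = 1 ∧ Pj.length = 1) := by
    rintro ⟨h1, h2⟩
    exact hnot ⟨Walk.adj_of_length_eq_one h1, Walk.adj_of_length_eq_one h2⟩
  have hsum : 3 ≤ Pi.length + Pj.length := by
    rcases Nat.lt_or_ge (Pi.length + Pj.length) 3 with h | h
    · exfalso; apply hnotboth; omega
    · exact h
  set c : G.Walk a a := Pi.append (Walk.cons hadj Pj.reverse) with hc
  have hlenc : c.length = Pi.length + Pj.length + 1 := by
    simp [hc, Walk.length_append, Walk.length_cons, Walk.length_reverse]
    omega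
  have hsup : c.support = Pi.support ++ Pj.support.reverse := by
    simp [hc, Walk.support_append, Walk.support_cons, Walk.support_reverse]
  have hmem : ∀ x, x ∈ c.support ↔ x ∈ Pi.support ∨ x ∈ Pj.support := by
    intro x; simp [hsup]
  have hbj_not_i : bj ∉ Pi.support := fun h =>
    hane_j (hpair.1 bj h Pj.end_mem_support).symm
  have hbi_not_j : bi ∉ Pj.support := fun h =>
    hane_i (hpair.1 bi Pi.end_mem_support h).symm
  have hedge_disj : ∀ e ∈ Pi.edges, e ∉ Pj.edges := by
    intro e hei hej
    induction e with
    | h x y =>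
      have hxi : x ∈ Pi.support := Pi.fst_mem_support_of_mem_edges hei
      have hyi : y ∈ Pi.support := Pi.snd_mem_support_of_mem_edges hei
      have hxj : x ∈ Pj.support := Pj.fst_mem_support_of_mem_edges hej
      have hyj : y ∈ Pj.support := Pj.snd_mem_support_of_mem_edges hej
      have hxa : x = a := hpair.1 x hxi hxj
      have hya : y = a := hpair.1 y hyi hyj
      have hGxy : G.Adj x y := Pi.edges_subset_edgeSet hei
      rw [hxa, hya] at hGxy
      exact G.irrefl hGxy
  have hedges : c.edges = Pi.edges ++ (s(bi, bj) :: Pj.edges.reverse) := by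
    simp [hc, Walk.edges_append, Walk.edges_cons, Walk.edges_reverse]
  have htrail : c.IsTrail := by
    rw [Walk.isTrail_def, hedges]
    rw [List.nodup_append]
    refine ⟨hiP.isTrail.edges_nodup, ?_, ?_⟩
    · rw [List.nodup_cons]
      constructor
      · intro h
        rw [List.mem_reverse] at h
        exact hbi_not_j (Pj.fst_mem_support_of_mem_edges h)
      · exact List.nodup_reverse.mpr hjP.isTrail.edges_nodup
    · intro e hei e2 he2 hee
      subst hee
      rcases List.mem_cons.mp he2 with h | h
      · subst h
        exact hbj_not_i (Pi.snd_mem_support_of_mem_edges hei)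
      · exact hedge_disj e hei (List.mem_reverse.mp h)
  have hcyc : c.IsCycle := by
    constructor
    · constructor
      · exact htrail
      · intro h
        have := congrArg Walk.length h
        rw [hlenc] at this
        simp at this
    · have htail : c.support.tail = Pi.support.tail ++ Pj.support.reverse := by
        rw [hsup, Walk.support_eq_cons Pi]
        rfl
      rw [htail, List.nodup_append]
      have hnodi := hiP.support_nodup
      rw [Walk.support_eq_cons Pi, List.nodup_cons] at hnodi
      refine ⟨hnodi.2, List.nodup_reverse.mpr hjP.support_nodup, ?_⟩
      intro x hxt y hxr hxy
      subst hxy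
      have hxi : x ∈ Pi.support := by
        rw [Walk.support_eq_cons Pi]; exact List.mem_cons_of_mem a hxt
      have hxj : x ∈ Pj.support := List.mem_reverse.mp hxr
      have hxa : x = a := hpair.1 x hxi hxj
      subst hxa
      exact hnodi.1 hxt
  have hts : c.toSubgraph = Pi.toSubgraph ⊔ (G.subgraphOfAdj hadj ⊔ Pj.toSubgraph) := by
    simp [hc, Walk.toSubgraph_append, Walk.toSubgraph, Walk.toSubgraph_reverse]
  have key : ∀ x y, x ∈ Pi.support → y ∈ Pj.support → G.Adj x y → c.toSubgraph.Adj x y := by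
    intro x y hx hy hxy
    rw [hts, Subgraph.sup_adj, Subgraph.sup_adj]
    by_cases hxa : x = a
    · subst hxa
      right; right
      exact hj.2 x y Pj.start_mem_support hy hxy
    · by_cases hya : y = a
      · subst hya
        left
        exact hi.2 x y hx Pi.start_mem_support hxy
      · obtain ⟨hx1, hy1⟩ := hpair.2 x hx y hy hxa hya hxy
        subst hx1; subst hy1
        right; left
        simp
  have hchord : ∀ x y : V, x ∈ c.support → y ∈ c.support → G.Adj x y →
      c.toSubgraph.Adj x y := by
    intro x y hx hy hxy
    rw [hmem] at hx hy
    rcases hx with hx | hx <;> rcases hy with hy | hy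
    · rw [hts, Subgraph.sup_adj]
      exact Or.inl (hi.2 x y hx hy hxy)
    · exact key x y hx hy hxy
    · exact (key y x hy hx hxy.symm).symm
    · rw [hts, Subgraph.sup_adj, Subgraph.sup_adj]
      exact Or.inr (Or.inr (hj.2 x y hx hy hxy))
  refine ⟨a, c, ⟨hcyc, ?_, hchord⟩, ?_, ?_⟩
  · omega
  · rw [Nat.odd_iff]; omega
  · rw [hsup]
    simp [List.toFinset_append]

/-- Every pyramid contains an odd hole: two of its three paths have
the same length parity, and the union of the vertex sets of any two such paths induces
an odd hole. -/
theorem pyramid_contains_odd_hole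
    {V : Type*} [Fintype V] [DecidableEq V] (G : SimpleGraph V)
    (a b₁ b₂ b₃ : V) (P₁ : G.Walk a b₁) (P₂ : G.Walk a b₂) (P₃ : G.Walk a b₃)
    (hK : IsPyramid G a b₁ b₂ b₃ P₁ P₂ P₃) :
    (P₁.length % 2 = P₂.length % 2 ∨ P₁.length % 2 = P₃.length % 2 ∨
      P₂.length % 2 = P₃.length % 2) ∧
    (P₁.length % 2 = P₂.length % 2 →
      ∃ (v : V) (c : G.Walk v v), IsHoleW G c ∧ Odd c.length ∧
        c.support.toFinset = P₁.support.toFinset ∪ P₂.support.toFinset) ∧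
    (P₁.length % 2 = P₃.length % 2 →
      ∃ (v : V) (c : G.Walk v v), IsHoleW G c ∧ Odd c.length ∧
        c.support.toFinset = P₁.support.toFinset ∪ P₃.support.toFinset) ∧
    (P₂.length % 2 = P₃.length % 2 →
      ∃ (v : V) (c : G.Walk v v), IsHoleW G c ∧ Odd c.length ∧
        c.support.toFinset = P₂.support.toFinset ∪ P₃.support.toFinset) := by
  obtain ⟨h1, h2, h3, h12, h23, h13, hn12, hn13, hn23, hp12, hp13, hp23⟩ := hK
  refine ⟨by omega, ?_, ?_, ?_⟩
  · exact fun hpar => pair_hole P₁ P₂ h1 h2 h12 hn12 hp12 hpar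
  · exact fun hpar => pair_hole P₁ P₃ h1 h3 h13 hn13 hp13 hpar
  · exact fun hpar => pair_hole P₂ P₃ h2 h3 h23 hn23 hp23 hpar
end
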